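/- arXiv:math/9808106 — 3 statements merged into one kernel-verified Lean document; each statement's English description precedes it below -/
import Mathlib

section
/- Every mixed Hodge structure (F,W) on V admits a unique bigrading {I^{p,q}} with the additional property that for all p,q the images of I^{p,q} and of conj(I^{q,p}) in the quotient V/(⊕_{r<p,s<q} I^{r,s}) coincide, i.e. I^{p,q} ≡ conj(I^{q,p}) mod ⊕_{r<p,s<q} I^{r,s}. That is, there exists exactly one direct sum decomposition V = ⊕_{p,q} I^{p,q} indexed by pairs of integers such that F^p = ⊕_{r≥p,s} I^{r,s}, W_k = ⊕_{r+s≤k} I^{r,s}, and I^{p,q} ≡ conj(I^{q,p}) mod ⊕_{r<p,s<q} I^{r,s}. -/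
open Submodule

noncomputable section

instance : RingHomSurjective (starRingEnd ℂ) :=
  ⟨fun x => ⟨starRingEnd ℂ x, Complex.conj_conj x⟩⟩

variable {V : Type*} [AddCommGroup V] [Module ℂ V]

/-- A finite decreasing filtration of `V` by complex subspaces. -/
def IsDecFilt (F : ℤ → Submodule ℂ V) : Prop :=
  (∀ p : ℤ, F (p + 1) ≤ F p) ∧ (∃ a : ℤ, F a = ⊤) ∧ ∃ b : ℤ, F b = ⊥

/-- A finite increasing filtration of `V` by complex subspaces. -/
def IsIncFilt (W : ℤ → Submodule ℂ V) : Prop :=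
  (∀ k : ℤ, W k ≤ W (k + 1)) ∧ (∃ a : ℤ, W a = ⊥) ∧ ∃ b : ℤ, W b = ⊤

/-- The subspace `F^p ∩ W_k + W_{k-1}` of `V`, representing the `p`-th piece
`F^p Gr^W_k` of the induced filtration on `Gr^W_k = W_k/W_{k-1}`. -/
def grF (F W : ℤ → Submodule ℂ V) (k p : ℤ) : Submodule ℂ V :=
  F p ⊓ W k ⊔ W (k - 1)

/-- The subspace of `V` representing the Hodge piece
`H^{p,k-p} = F^p Gr^W_k ∩ conj (F^{k-p} Gr^W_k)` of `Gr^W_k`. -/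
def grH (σ : V →ₛₗ[starRingEnd ℂ] V) (F W : ℤ → Submodule ℂ V) (k p : ℤ) : Submodule ℂ V :=
  grF F W k p ⊓ grF (fun q => (F q).map σ) W k (k - p)

/-- The filtration induced by `F` on `Gr^W_k` is a pure Hodge structure of weight `k`:
the pieces `H^{p,k-p}` span `Gr^W_k` and are independent there (all subspaces are
represented by their preimages in `V`, which contain `W_{k-1}`). -/
def IsPureOnGr (σ : V →ₛₗ[starRingEnd ℂ] V) (F W : ℤ → Submodule ℂ V) (k : ℤ) : Prop :=
  (⨆ p : ℤ, grH σ F W k p) = W k ∧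
  ∀ p : ℤ, grH σ F W k p ⊓ (⨆ (q : ℤ) (_ : q ≠ p), grH σ F W k q) = W (k - 1)

/-- `(F, W)` is a mixed Hodge structure on `V` (relative to the conjugation `σ`). -/
def IsMHS (σ : V →ₛₗ[starRingEnd ℂ] V) (F W : ℤ → Submodule ℂ V) : Prop :=
  IsDecFilt F ∧ IsIncFilt W ∧ (∀ k : ℤ, (W k).map σ = W k) ∧ ∀ k : ℤ, IsPureOnGr σ F W k

/-- `I` is a bigrading of the mixed Hodge structure `(F, W)`. -/
def IsBigrading (F W : ℤ → Submodule ℂ V) (I : ℤ → ℤ → Submodule ℂ V) : Prop :=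
  DirectSum.IsInternal (fun pq : ℤ × ℤ => I pq.1 pq.2) ∧
  (∀ p : ℤ, F p = ⨆ (rs : ℤ × ℤ) (_ : p ≤ rs.1), I rs.1 rs.2) ∧
  ∀ k : ℤ, W k = ⨆ (rs : ℤ × ℤ) (_ : rs.1 + rs.2 ≤ k), I rs.1 rs.2

/-- `⊕_{r < p, s < q} I^{r,s}`. -/
def lowPart (I : ℤ → ℤ → Submodule ℂ V) (p q : ℤ) : Submodule ℂ V :=
  ⨆ (rs : ℤ × ℤ) (_ : rs.1 < p ∧ rs.2 < q), I rs.1 rs.2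

/-- `I` is a bigrading of `(F, W)` satisfying the Deligne conjugation-symmetry
condition `I^{p,q} ≡ conj (I^{q,p}) mod ⊕_{r<p,s<q} I^{r,s}` (equality of images in the
quotient by `⊕_{r<p,s<q} I^{r,s}`). -/
def IsDeligne (σ : V →ₛₗ[starRingEnd ℂ] V) (F W : ℤ → Submodule ℂ V)
    (I : ℤ → ℤ → Submodule ℂ V) : Prop :=
  IsBigrading F W I ∧
  ∀ p q : ℤ, I p q ⊔ lowPart I p q = (I q p).map σ ⊔ lowPart I p q



namespace MHS
variable {M : Type*} [AddCommGroup M] [Module ℂ M]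

lemma stepW_mono {W : ℤ → Submodule ℂ M} (hW : ∀ k : ℤ, W k ≤ W (k + 1)) : Monotone W := by
  intro j k hjk
  obtain ⟨n, rfl⟩ := Int.le.dest hjk
  clear hjk
  induction n with
  | zero => simp
  | succ n ih =>
      have h2 : (j + ((n:ℤ) + 1)) = (j + n) + 1 := by ring
      rw [show ((n+1:ℕ):ℤ) = (n:ℤ)+1 by push_cast; ring, h2]
      exact ih.trans (hW _)

lemma stepF_anti {F : ℤ → Submodule ℂ M} (hF : ∀ p : ℤ, F (p + 1) ≤ F p) : Antitone F := by
  intro j k hjk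
  obtain ⟨n, rfl⟩ := Int.le.dest hjk
  clear hjk
  induction n with
  | zero => simp
  | succ n ih =>
      have h2 : (j + ((n:ℤ) + 1)) = (j + n) + 1 := by ring
      rw [show ((n+1:ℕ):ℤ) = (n:ℤ)+1 by push_cast; ring, h2]
      exact (hF _).trans ih

lemma sum_eq_zero_of_iSupIndep {ι : Type*} [DecidableEq ι] {H : ι → Submodule ℂ M}
    (hind : iSupIndep H)
    (s : Finset ι) (g : ι → M) (hg : ∀ a ∈ s, g a ∈ H a) (hz : ∑ a ∈ s, g a = 0) :
    ∀ a ∈ s, g a = 0 := by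
  intro a ha
  have h1 : g a = -∑ b ∈ s.erase a, g b := by
    have h := Finset.add_sum_erase s g ha
    rw [hz] at h
    exact eq_neg_of_add_eq_zero_left h
  have h2 : g a ∈ ⨆ (j : ι) (_ : j ≠ a), H j := by
    rw [h1]
    refine neg_mem (Submodule.sum_mem _ fun b hb => ?_)
    exact Submodule.mem_iSup_of_mem b
      (Submodule.mem_iSup_of_mem (Finset.ne_of_mem_erase hb) (hg b (Finset.mem_of_mem_erase hb)))
  have h3 : Disjoint (H a) (⨆ (j : ι) (_ : j ≠ a), H j) := iSupIndep_def.mp hind a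
  exact (Submodule.mem_bot ℂ).mp (h3.eq_bot ▸ Submodule.mem_inf.mpr ⟨hg a ha, h2⟩)

lemma mem_biSup_iff {ι : Type*} {H : ι → Submodule ℂ M} {P : ι → Prop} {x : M} :
    (x ∈ ⨆ (a : ι) (_ : P a), H a) ↔
      ∃ f : ι →₀ M, (∀ a, f a ∈ H a) ∧ (∀ a, ¬ P a → f a = 0) ∧ (f.sum fun _ v => v) = x := by
  rw [Submodule.mem_iSup_iff_exists_finsupp]
  constructor
  · rintro ⟨f, hf, rfl⟩
    refine ⟨f, fun a => ?_, fun a hPa => ?_, rfl⟩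
    · exact (iSup_le fun _ => le_rfl : (⨆ _ : P a, H a) ≤ H a) (hf a)
    · have : (⨆ _ : P a, H a) = ⊥ := by simp [hPa]
      simpa [this] using hf a
  · rintro ⟨f, hf, hfP, rfl⟩
    refine ⟨f, fun a => ?_, rfl⟩
    by_cases hPa : P a
    · simpa [iSup_pos hPa] using hf a
    · simp [hfP a hPa, iSup_neg hPa]

lemma biSup_inf_biSup' {ι : Type*} [DecidableEq ι] {H : ι → Submodule ℂ M}
    (hind : iSupIndep H) (P Q : ι → Prop) :
    (⨆ (a : ι) (_ : P a), H a) ⊓ (⨆ (a : ι) (_ : Q a), H a) ≤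
      ⨆ (a : ι) (_ : P a ∧ Q a), H a := by
  intro x hx
  obtain ⟨hxP, hxQ⟩ := Submodule.mem_inf.mp hx
  obtain ⟨f, hf, hfP, hfs⟩ := mem_biSup_iff.mp hxP
  obtain ⟨g, hg, hgQ, hgs⟩ := mem_biSup_iff.mp hxQ
  have hfg : ∀ a, f a = g a := by
    have hsum : ∑ a ∈ f.support ∪ g.support, (f a - g a) = 0 := by
      rw [Finset.sum_sub_distrib]
      rw [← Finsupp.sum_of_support_subset f Finset.subset_union_left (fun _ v => v) (by simp),
        ← Finsupp.sum_of_support_subset g Finset.subset_union_right (fun _ v => v) (by simp),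
        hfs, hgs, sub_self]
    have hall := sum_eq_zero_of_iSupIndep hind (f.support ∪ g.support) (fun a => f a - g a)
      (fun a _ => sub_mem (hf a) (hg a)) hsum
    intro a
    by_cases ha : a ∈ f.support ∪ g.support
    · exact sub_eq_zero.mp (hall a ha)
    · simp only [Finset.mem_union, Finsupp.mem_support_iff, not_or, not_not] at ha
      rw [ha.1, ha.2]
  have hmem : ∀ a ∈ f.support, f a ∈ ⨆ (a : ι) (_ : P a ∧ Q a), H a := by
    intro a ha
    have hne : f a ≠ 0 := Finsupp.mem_support_iff.mp ha
    have hPa : P a := by by_contra h; exact hne (hfP a h)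
    have hQa : Q a := by by_contra h; exact hne (by rw [hfg a]; exact hgQ a h)
    exact Submodule.mem_iSup_of_mem a (Submodule.mem_iSup_of_mem ⟨hPa, hQa⟩ (hf a))
  rw [← hfs]
  exact Submodule.sum_mem _ hmem

section FD
variable [FiniteDimensional ℂ M]

lemma fr_sup_disjoint (A B : Submodule ℂ M) (h : Disjoint A B) :
    Module.finrank ℂ (A ⊔ B : Submodule ℂ M) = Module.finrank ℂ A + Module.finrank ℂ B := by
  have hh := Submodule.finrank_sup_add_finrank_inf_eq A B
  rw [h.eq_bot, finrank_bot] at hh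
  omega

lemma pure_decomp (A B : ℤ → Submodule ℂ M) (T : Submodule ℂ M) (k : ℤ)
    (hA : Antitone A) (hB : Antitone B)
    (hAle : ∀ a, A a ≤ T) (hBle : ∀ b, B b ≤ T)
    (hspan : (⨆ a : ℤ, (A a ⊓ B (k - a))) = T)
    (hind : iSupIndep (fun a : ℤ => A a ⊓ B (k - a))) :
    ∀ c : ℤ, A c = ⨆ (a : ℤ) (_ : c ≤ a), (A a ⊓ B (k - a)) := by
  intro c
  set H : ℤ → Submodule ℂ M := fun a => A a ⊓ B (k - a) with hH
  set X : Submodule ℂ M := ⨆ (a : ℤ) (_ : c + 1 ≤ a), H a with hX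
  set Y : Submodule ℂ M := ⨆ (a : ℤ) (_ : a ≤ c - 1), H a with hY
  set Y' : Submodule ℂ M := ⨆ (a : ℤ) (_ : a ≤ c), H a with hY'
  set S : Submodule ℂ M := ⨆ (a : ℤ) (_ : c ≤ a), H a with hS
  have hSle : S ≤ A c := by
    refine iSup_le fun a => iSup_le fun hca => ?_
    exact inf_le_left.trans (hA hca)
  have f1 : S = H c ⊔ X := by
    apply le_antisymm
    · refine iSup_le fun a => iSup_le fun hca => ?_
      rcases eq_or_lt_of_le hca with h | h
      · exact (by rw [← h]; exact le_sup_left)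
      · exact le_sup_of_le_right (le_iSup_of_le a (le_iSup_of_le h le_rfl))
    · refine sup_le (le_iSup_of_le c (le_iSup_of_le le_rfl le_rfl)) ?_
      refine iSup_le fun a => iSup_le fun hca => ?_
      exact le_iSup_of_le a (le_iSup_of_le (by omega) le_rfl)
  have f2 : Y' = Y ⊔ H c := by
    apply le_antisymm
    · refine iSup_le fun a => iSup_le fun hca => ?_
      rcases eq_or_lt_of_le hca with h | h
      · exact (by rw [h]; exact le_sup_right)
      · exact le_sup_of_le_left (le_iSup_of_le a (le_iSup_of_le (by omega) le_rfl))
    · refine sup_le ?_ (le_iSup_of_le c (le_iSup_of_le le_rfl le_rfl))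
      refine iSup_le fun a => iSup_le fun hca => ?_
      exact le_iSup_of_le a (le_iSup_of_le (by omega) le_rfl)
  have f3 : T = Y' ⊔ X := by
    rw [← hspan]
    apply le_antisymm
    · refine iSup_le fun a => ?_
      rcases le_or_gt a c with h | h
      · exact le_sup_of_le_left (le_iSup_of_le a (le_iSup_of_le h le_rfl))
      · exact le_sup_of_le_right (le_iSup_of_le a (le_iSup_of_le (by omega) le_rfl))
    · exact sup_le (iSup_le fun a => iSup_le fun _ => le_iSup _ a)
        (iSup_le fun a => iSup_le fun _ => le_iSup _ a)
  have f4 : Disjoint (H c) X := by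
    refine Disjoint.mono_right ?_ (iSupIndep_def.mp hind c)
    refine iSup_le fun a => iSup_le fun hca => ?_
    exact le_iSup_of_le a (le_iSup_of_le (by omega) le_rfl)
  have f5 : Disjoint Y (H c) := by
    refine (Disjoint.mono_right ?_ (iSupIndep_def.mp hind c)).symm
    refine iSup_le fun a => iSup_le fun hca => ?_
    exact le_iSup_of_le a (le_iSup_of_le (by omega) le_rfl)
  have f6 : Disjoint Y' X := by
    rw [disjoint_iff]
    refine le_bot_iff.mp ((biSup_inf_biSup' hind _ _).trans ?_)
    refine iSup_le fun a => iSup_le fun hca => ?_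
    exact absurd hca (by omega)
  have r1 : Module.finrank ℂ Y' = Module.finrank ℂ Y + Module.finrank ℂ (H c) := by
    rw [f2]; exact fr_sup_disjoint _ _ f5
  have r2 : Module.finrank ℂ T = Module.finrank ℂ Y' + Module.finrank ℂ X := by
    rw [f3]; exact fr_sup_disjoint _ _ f6
  have r3 : Module.finrank ℂ S = Module.finrank ℂ (H c) + Module.finrank ℂ X := by
    rw [f1]; exact fr_sup_disjoint _ _ f4
  have key : Module.finrank ℂ (A c) + Module.finrank ℂ (B (k - c)) ≤
      Module.finrank ℂ T + Module.finrank ℂ (H c) := by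
    have h0 := Submodule.finrank_sup_add_finrank_inf_eq (A c) (B (k - c))
    have h1 : Module.finrank ℂ (A c ⊔ B (k - c) : Submodule ℂ M) ≤ Module.finrank ℂ T :=
      Submodule.finrank_mono (sup_le (hAle c) (hBle _))
    have h2 : (A c ⊓ B (k - c)) = H c := rfl
    rw [h2] at h0
    omega
  have hY'B : Y' ≤ B (k - c) :=
    iSup_le fun a => iSup_le fun hac => inf_le_right.trans (hB (by omega))
  have hBY' : Module.finrank ℂ Y' ≤ Module.finrank ℂ (B (k - c)) := Submodule.finrank_mono hY'B
  have hfr : Module.finrank ℂ (A c) ≤ Module.finrank ℂ S := by omega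
  exact (Submodule.eq_of_le_of_finrank_le hSle hfr).symm

lemma pure_decomp_B (A B : ℤ → Submodule ℂ M) (T : Submodule ℂ M) (k : ℤ)
    (hA : Antitone A) (hB : Antitone B)
    (hAle : ∀ a, A a ≤ T) (hBle : ∀ b, B b ≤ T)
    (hspan : (⨆ a : ℤ, (A a ⊓ B (k - a))) = T)
    (hind : iSupIndep (fun a : ℤ => A a ⊓ B (k - a))) :
    ∀ d : ℤ, B d = ⨆ (a : ℤ) (_ : a ≤ k - d), (A a ⊓ B (k - a)) := by
  intro d
  have hfun : (fun a : ℤ => B a ⊓ A (k - a)) = fun a : ℤ => A (k - a) ⊓ B (k - (k - a)) := by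
    funext a
    rw [inf_comm, show k - (k - a) = a by ring]
  have hinj : Function.Injective (fun a : ℤ => k - a) := sub_right_injective
  have hind' : iSupIndep (fun a : ℤ => B a ⊓ A (k - a)) := by
    rw [hfun]
    exact hind.comp hinj
  have hspan' : (⨆ a : ℤ, (B a ⊓ A (k - a))) = T := by
    rw [hfun, ← hspan]
    apply le_antisymm
    · exact iSup_le fun a => le_iSup (fun a => A a ⊓ B (k - a)) (k - a)
    · refine iSup_le fun a => le_iSup_of_le (k - a) ?_
      rw [show k - (k - a) = a by ring]
  have h := pure_decomp B A T k hB hA hBle hAle hspan' hind' d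
  rw [h]
  apply le_antisymm
  · refine iSup_le fun a => iSup_le fun hda => ?_
    refine le_iSup_of_le (k - a) (le_iSup_of_le (by omega) ?_)
    rw [inf_comm, show k - (k - a) = a by ring]
  · refine iSup_le fun a => iSup_le fun hak => ?_
    refine le_iSup_of_le (k - a) (le_iSup_of_le (by omega) ?_)
    rw [inf_comm, show k - (k - a) = a by ring]

lemma pure_decomp_window (A B : ℤ → Submodule ℂ M) (T : Submodule ℂ M) (k : ℤ)
    (hA : Antitone A) (hB : Antitone B)
    (hAle : ∀ a, A a ≤ T) (hBle : ∀ b, B b ≤ T)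
    (hspan : (⨆ a : ℤ, (A a ⊓ B (k - a))) = T)
    (hind : iSupIndep (fun a : ℤ => A a ⊓ B (k - a))) (c d : ℤ) :
    A c ⊓ B d ≤ ⨆ (a : ℤ) (_ : c ≤ a ∧ a ≤ k - d), (A a ⊓ B (k - a)) := by
  rw [pure_decomp A B T k hA hB hAle hBle hspan hind c,
    pure_decomp_B A B T k hA hB hAle hBle hspan hind d]
  exact biSup_inf_biSup' hind _ _

end FD


section Sigma
variable {V : Type*} [AddCommGroup V] [Module ℂ V]

variable (σ : V →ₛₗ[starRingEnd ℂ] V)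

lemma injσ (hσ : ∀ v, σ (σ v) = v) : Function.Injective σ := by
  intro a b h
  rw [← hσ a, ← hσ b, h]

lemma map_map_σ (hσ : ∀ v, σ (σ v) = v) (A : Submodule ℂ V) : (A.map σ).map σ = A := by
  apply le_antisymm
  · rintro x hx
    obtain ⟨y, hy, rfl⟩ := hx
    obtain ⟨z, hz, rfl⟩ := hy
    rw [hσ z]; exact hz
  · intro x hx
    exact ⟨σ x, ⟨x, hx, rfl⟩, hσ x⟩

lemma mapσ_inf (hσ : ∀ v, σ (σ v) = v) (A B : Submodule ℂ V) :
    (A ⊓ B).map σ = A.map σ ⊓ B.map σ :=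
  Submodule.map_inf σ (injσ σ hσ)

lemma map_mkQ_inf {K A B : Submodule ℂ V} (hKA : K ≤ A) (hKB : K ≤ B) :
    map K.mkQ (A ⊓ B) = map K.mkQ A ⊓ map K.mkQ B := by
  apply le_antisymm
  · exact le_inf (Submodule.map_mono inf_le_left) (Submodule.map_mono inf_le_right)
  · rintro x hx
    obtain ⟨hxA, hxB⟩ := Submodule.mem_inf.mp hx
    obtain ⟨a, ha, hax⟩ := hxA
    obtain ⟨b, hb, hbx⟩ := hxB
    have hab : a - b ∈ K := by
      rw [← Submodule.ker_mkQ K, LinearMap.mem_ker, map_sub, hax, hbx, sub_self]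
    have haB : a ∈ B := by
      have : a = b + (a - b) := by abel
      rw [this]; exact add_mem hb (hKB hab)
    exact ⟨a, ⟨ha, haB⟩, hax⟩

end Sigma


section GR
variable {V : Type*} [AddCommGroup V] [Module ℂ V] [FiniteDimensional ℂ V]
variable (σ : V →ₛₗ[starRingEnd ℂ] V) (F W : ℤ → Submodule ℂ V)

lemma grF_K (m c : ℤ) : W (m - 1) ≤ grF F W m c := le_sup_right

lemma grH_K (m a : ℤ) : W (m - 1) ≤ grH σ F W m a :=
  le_inf le_sup_right le_sup_right

lemma gr_package (hσ : ∀ v, σ (σ v) = v) (hMHS : IsMHS σ F W) (m : ℤ) :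
    (∀ c, grF F W m c = ⨆ (a : ℤ) (_ : c ≤ a), grH σ F W m a) ∧
    (∀ d, grF (fun q => (F q).map σ) W m d = ⨆ (a : ℤ) (_ : a ≤ m - d), grH σ F W m a) ∧
    (∀ c d, grF F W m c ⊓ grF (fun q => (F q).map σ) W m d ≤
      W (m - 1) ⊔ ⨆ (a : ℤ) (_ : c ≤ a ∧ a ≤ m - d), grH σ F W m a) := by
  obtain ⟨⟨hFdec, _, _⟩, ⟨hWinc, _, _⟩, hσW, hpure⟩ := hMHS
  have hFanti := stepF_anti hFdec
  let K : Submodule ℂ V := W (m - 1)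
  let π := K.mkQ
  let Ab : ℤ → Submodule ℂ (V ⧸ K) := fun a => map π (F a ⊓ W m)
  let Bb : ℤ → Submodule ℂ (V ⧸ K) := fun b => map π ((F b).map σ ⊓ W m)
  let T : Submodule ℂ (V ⧸ K) := map π (W m)
  have hmapK : map π K = ⊥ := Submodule.mkQ_map_self K
  have q1 : ∀ c, map π (grF F W m c) = Ab c := by
    intro c
    show map π (F c ⊓ W m ⊔ W (m - 1)) = _
    rw [Submodule.map_sup]
    rw [show map π (W (m-1)) = ⊥ from hmapK, sup_bot_eq]
  have q2 : ∀ d, map π (grF (fun q => (F q).map σ) W m d) = Bb d := by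
    intro d
    show map π ((F d).map σ ⊓ W m ⊔ W (m - 1)) = _
    rw [Submodule.map_sup]
    rw [show map π (W (m-1)) = ⊥ from hmapK, sup_bot_eq]
  have q3 : ∀ a, map π (grH σ F W m a) = Ab a ⊓ Bb (m - a) := by
    intro a
    rw [show grH σ F W m a = grF F W m a ⊓ grF (fun q => (F q).map σ) W m (m - a) from rfl,
      map_mkQ_inf (grF_K F W m a) (grF_K (fun q => (F q).map σ) W m (m - a)), q1, q2]
  have hAanti : Antitone Ab := fun a b hab =>
    Submodule.map_mono (inf_le_inf_right _ (hFanti hab))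
  have hBanti : Antitone Bb := fun a b hab =>
    Submodule.map_mono (inf_le_inf_right _ (Submodule.map_mono (hFanti hab)))
  have hAle : ∀ a, Ab a ≤ T := fun a => Submodule.map_mono inf_le_right
  have hBle : ∀ b, Bb b ≤ T := fun b => Submodule.map_mono inf_le_right
  have hspan : (⨆ a : ℤ, (Ab a ⊓ Bb (m - a))) = T := by
    have : T = map π (⨆ p : ℤ, grH σ F W m p) := by rw [(hpure m).1]
    rw [this, Submodule.map_iSup]
    exact (iSup_congr q3).symm
  have hind : iSupIndep (fun a : ℤ => Ab a ⊓ Bb (m - a)) := by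
    rw [iSupIndep_def]
    intro a
    rw [disjoint_iff]
    have hKsup : K ≤ ⨆ (b : ℤ) (_ : b ≠ a), grH σ F W m b :=
      le_iSup_of_le (a + 1) (le_iSup_of_le (by omega) (grH_K σ F W m (a + 1)))
    have h1 : (⨆ (b : ℤ) (_ : b ≠ a), (Ab b ⊓ Bb (m - b))) =
        map π (⨆ (b : ℤ) (_ : b ≠ a), grH σ F W m b) := by
      rw [Submodule.map_iSup]
      refine iSup_congr fun b => ?_
      rw [Submodule.map_iSup]
      exact iSup_congr fun _ => (q3 b).symm
    rw [h1, ← q3 a, ← map_mkQ_inf (grH_K σ F W m a) hKsup, (hpure m).2 a]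
    exact hmapK
  have trans1 : ∀ (S : Submodule ℂ V), K ≤ S → comap π (map π S) = S := fun S hS => by
    rw [Submodule.comap_map_mkQ, sup_eq_right.mpr hS]
  have hup : ∀ (P : ℤ → Prop), (⨆ (a : ℤ) (_ : P a), (Ab a ⊓ Bb (m - a))) =
      map π (⨆ (a : ℤ) (_ : P a), grH σ F W m a) := by
    intro P
    rw [Submodule.map_iSup]
    refine iSup_congr fun b => ?_
    rw [Submodule.map_iSup]
    exact iSup_congr fun _ => (q3 b).symm
  refine ⟨fun c => ?_, fun d => ?_, fun c d => ?_⟩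
  · have e1 := pure_decomp Ab Bb T m hAanti hBanti hAle hBle hspan hind c
    calc grF F W m c = comap π (map π (grF F W m c)) := (trans1 _ (grF_K F W m c)).symm
      _ = comap π (map π (⨆ (a : ℤ) (_ : c ≤ a), grH σ F W m a)) := by
          rw [q1, e1, hup (fun a => c ≤ a)]
      _ = ⨆ (a : ℤ) (_ : c ≤ a), grH σ F W m a :=
          trans1 _ (le_iSup_of_le c (le_iSup_of_le le_rfl (grH_K σ F W m c)))
  · have e1 := pure_decomp_B Ab Bb T m hAanti hBanti hAle hBle hspan hind d
    calc grF (fun q => (F q).map σ) W m d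
        = comap π (map π (grF (fun q => (F q).map σ) W m d)) :=
          (trans1 _ (grF_K (fun q => (F q).map σ) W m d)).symm
      _ = comap π (map π (⨆ (a : ℤ) (_ : a ≤ m - d), grH σ F W m a)) := by
          rw [q2, e1, hup (fun a => a ≤ m - d)]
      _ = ⨆ (a : ℤ) (_ : a ≤ m - d), grH σ F W m a :=
          trans1 _ (le_iSup_of_le (m - d) (le_iSup_of_le le_rfl (grH_K σ F W m (m - d))))
  · have e1 := pure_decomp_window Ab Bb T m hAanti hBanti hAle hBle hspan hind c d
    calc grF F W m c ⊓ grF (fun q => (F q).map σ) W m d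
        = comap π (map π (grF F W m c)) ⊓ comap π (map π (grF (fun q => (F q).map σ) W m d)) := by
          rw [trans1 _ (grF_K F W m c), trans1 _ (grF_K (fun q => (F q).map σ) W m d)]
      _ = comap π (Ab c ⊓ Bb d) := by rw [q1, q2, Submodule.comap_inf]
      _ ≤ comap π (⨆ (a : ℤ) (_ : c ≤ a ∧ a ≤ m - d), (Ab a ⊓ Bb (m - a))) :=
          Submodule.comap_mono e1
      _ = comap π (map π (⨆ (a : ℤ) (_ : c ≤ a ∧ a ≤ m - d), grH σ F W m a)) := by
          rw [hup (fun a => c ≤ a ∧ a ≤ m - d)]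
      _ = W (m - 1) ⊔ ⨆ (a : ℤ) (_ : c ≤ a ∧ a ≤ m - d), grH σ F W m a :=
          Submodule.comap_map_mkQ K _

end GR



section Main
variable {V : Type*} [AddCommGroup V] [Module ℂ V] [FiniteDimensional ℂ V]
variable (σ : V →ₛₗ[starRingEnd ℂ] V) (F W : ℤ → Submodule ℂ V)

/-- The auxiliary subspace `σ(F^q ∩ W_n) + Σ_{j≥0} σ(F^{q-1-j} ∩ W_{n-2-j})`. -/
def Lf (q n : ℤ) : Submodule ℂ V :=
  (F q ⊓ W n).map σ ⊔ ⨆ j : ℕ, (F (q - 1 - (j : ℤ)) ⊓ W (n - 2 - (j : ℤ))).map σ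

/-- Deligne's subspace `I^{p,q}`. -/
def Ipq (p q : ℤ) : Submodule ℂ V := F p ⊓ W (p + q) ⊓ MHS.Lf σ F W q (p + q)

lemma Lf_main (q n : ℤ) : (F q ⊓ W n).map σ ≤ Lf σ F W q n := le_sup_left

lemma Lf_tail (q n : ℤ) (j : ℕ) :
    (F (q - 1 - (j : ℤ)) ⊓ W (n - 2 - (j : ℤ))).map σ ≤ Lf σ F W q n :=
  le_sup_of_le_right (le_iSup (fun j : ℕ => (F (q - 1 - (j : ℤ)) ⊓ W (n - 2 - (j : ℤ))).map σ) j)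

lemma Ipq_le_F (p q : ℤ) : Ipq σ F W p q ≤ F p := inf_le_left.trans inf_le_left

lemma Ipq_le_W (p q : ℤ) : Ipq σ F W p q ≤ W (p + q) := inf_le_left.trans inf_le_right

lemma Ipq_le_Lf (p q : ℤ) : Ipq σ F W p q ≤ MHS.Lf σ F W q (p + q) := inf_le_right

lemma mapσ_FW (hσ : ∀ v, σ (σ v) = v) (hσW : ∀ k : ℤ, (W k).map σ = W k) (q k : ℤ) :
    (F q ⊓ W k).map σ = (F q).map σ ⊓ W k := by
  rw [mapσ_inf σ hσ, hσW]

/-- Purity decomposition bound. -/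
lemma purity_bound (hσ : ∀ v, σ (σ v) = v) (hMHS : IsMHS σ F W) (m p : ℤ) :
    W m ≤ (F p ⊓ W m) ⊔ (F (m + 1 - p) ⊓ W m).map σ ⊔ W (m - 1) := by
  obtain ⟨⟨hFdec, _, _⟩, ⟨hWinc, _, _⟩, hσW, hpure⟩ := hMHS
  have hFanti := stepF_anti hFdec
  refine le_trans (le_of_eq (hpure m).1.symm) ?_
  refine iSup_le fun a => ?_
  rcases le_or_gt p a with h | h
  · refine inf_le_left.trans ?_
    show F a ⊓ W m ⊔ W (m - 1) ≤ _
    refine sup_le ?_ le_sup_right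
    exact le_sup_of_le_left (le_sup_of_le_left (inf_le_inf_right _ (hFanti h)))
  · refine inf_le_right.trans ?_
    show (F (m - a)).map σ ⊓ W m ⊔ W (m - 1) ≤ _
    refine sup_le ?_ le_sup_right
    rw [← mapσ_FW σ F W hσ hσW]
    refine le_sup_of_le_left (le_sup_of_le_right ?_)
    exact Submodule.map_mono (inf_le_inf_right _ (hFanti (by omega)))

/-- Key surjectivity lemma: `H^{p,n-p}` is represented by `I^{p,n-p}` modulo `W_{n-1}`. -/
lemma grH_le_Ipq (hσ : ∀ v, σ (σ v) = v) (hMHS : IsMHS σ F W) (n p : ℤ) :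
    grH σ F W n p ≤ Ipq σ F W p (n - p) ⊔ W (n - 1) := by
  have hσW : ∀ k : ℤ, (W k).map σ = W k := hMHS.2.2.1
  have hWmono := stepW_mono hMHS.2.1.1
  obtain ⟨aW, haW⟩ := hMHS.2.1.2.1
  have key : ∀ l : ℕ, ∀ v ∈ grH σ F W n p, ∃ f, (f ∈ F p ⊓ W n) ∧
      f ∈ Lf σ F W (n - p) n ⊔ W (n - 1 - (l : ℤ)) ∧ v - f ∈ W (n - 1) := by
    intro l
    induction l with
    | zero =>
        intro v hv
        have hv' : v ∈ (F p ⊓ W n ⊔ W (n - 1)) ⊓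
            ((F (n - p)).map σ ⊓ W n ⊔ W (n - 1)) := hv
        obtain ⟨hv1, hv2⟩ := Submodule.mem_inf.mp hv'
        obtain ⟨f, hf, w1, hw1, hfw⟩ := Submodule.mem_sup.mp hv1
        obtain ⟨s, hs, w2, hw2, hsw⟩ := Submodule.mem_sup.mp hv2
        refine ⟨f, hf, ?_, ?_⟩
        · have hfeq : f = s + (w2 - w1) := by
            have h : f + w1 = s + w2 := by rw [hfw, hsw]
            calc f = (f + w1) - w1 := by abel
            _ = (s + w2) - w1 := by rw [h]
            _ = s + (w2 - w1) := by abel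
          have hsL : s ∈ Lf σ F W (n - p) n := by
            refine Lf_main σ F W (n - p) n ?_
            rw [mapσ_FW σ F W hσ hσW]
            exact hs
          have hidx : n - 1 - ((0 : ℕ) : ℤ) = n - 1 := by push_cast; ring
          rw [hidx, hfeq]
          exact Submodule.add_mem_sup hsL (sub_mem hw2 hw1)
        · have hveq : v - f = w1 := by rw [← hfw]; abel
          rw [hveq]; exact hw1
    | succ l ih =>
        intro v hv
        obtain ⟨f, hf, hfL, hvf⟩ := ih v hv
        obtain ⟨hfF, hfW⟩ := Submodule.mem_inf.mp hf
        obtain ⟨u, hu, x, hx, hux⟩ := Submodule.mem_sup.mp hfL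
        have hD := purity_bound σ F W hσ hMHS (n - 1 - (l : ℤ)) p
        obtain ⟨y, hy, w', hw', hyw⟩ := Submodule.mem_sup.mp (hD hx)
        obtain ⟨f1, hf1, s, hs, hf1s⟩ := Submodule.mem_sup.mp hy
        obtain ⟨hf1F, hf1W⟩ := Submodule.mem_inf.mp hf1
        refine ⟨f - f1, ?_, ?_, ?_⟩
        · exact Submodule.mem_inf.mpr ⟨sub_mem hfF hf1F,
            sub_mem hfW (hWmono (by omega : n - 1 - (l : ℤ) ≤ n) hf1W)⟩
        · have heq : f - f1 = (u + s) + w' := by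
            calc f - f1 = u + x - f1 := by rw [← hux]
            _ = u + (y + w') - f1 := by rw [← hyw]
            _ = u + ((f1 + s) + w') - f1 := by rw [← hf1s]
            _ = (u + s) + w' := by abel
          have hsL : s ∈ Lf σ F W (n - p) n := by
            rcases Nat.eq_zero_or_pos l with hl | hl
            · subst hl
              refine Lf_main σ F W (n - p) n ?_
              refine Submodule.map_mono (inf_le_inf ?_ ?_) hs
              · exact le_of_eq (by norm_num)
              · exact hWmono (by omega)
            · refine Lf_tail σ F W (n - p) n (l - 1) ?_
              have h1 : (n - p) - 1 - ((l - 1 : ℕ) : ℤ) = (n - 1 - (l : ℤ)) + 1 - p := by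
                have : ((l - 1 : ℕ) : ℤ) = (l : ℤ) - 1 := by omega
                rw [this]; ring
              have h2 : n - 2 - ((l - 1 : ℕ) : ℤ) = n - 1 - (l : ℤ) := by
                have : ((l - 1 : ℕ) : ℤ) = (l : ℤ) - 1 := by omega
                rw [this]; ring
              rw [h1, h2]
              exact hs
          have hidx : n - 1 - ((l + 1 : ℕ) : ℤ) = (n - 1 - (l : ℤ)) - 1 := by push_cast; ring
          rw [hidx, heq]
          exact Submodule.add_mem_sup (add_mem hu hsL) hw'
        · have hveq : v - (f - f1) = (v - f) + f1 := by abel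
          rw [hveq]
          exact add_mem hvf (hWmono (by omega : n - 1 - (l : ℤ) ≤ n - 1) hf1W)
  intro v hv
  obtain ⟨f, hf, hfL, hvf⟩ := key ((n - 1 - aW).toNat) v hv
  have hbot : W (n - 1 - ((n - 1 - aW).toNat : ℤ)) = ⊥ :=
    le_bot_iff.mp (haW ▸ hWmono (by omega))
  rw [hbot, sup_bot_eq] at hfL
  have hfI : f ∈ Ipq σ F W p (n - p) := by
    show f ∈ F p ⊓ W (p + (n - p)) ⊓ Lf σ F W (n - p) (p + (n - p))
    rw [show p + (n - p) = n by ring]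
    exact Submodule.mem_inf.mpr ⟨hf, hfL⟩
  exact Submodule.mem_sup.mpr ⟨f, hfI, v - f, hvf, by abel⟩

end Main


section Main2
variable {V : Type*} [AddCommGroup V] [Module ℂ V] [FiniteDimensional ℂ V]
variable (σ : V →ₛₗ[starRingEnd ℂ] V) (F W : ℤ → Submodule ℂ V)

lemma Ipq_le_Wn (p q n : ℤ) (h : p + q ≤ n) (hMHS : IsMHS σ F W) :
    Ipq σ F W p q ≤ W n :=
  (Ipq_le_W σ F W p q).trans (stepW_mono hMHS.2.1.1 h)

/-- `W_n = Σ_{p+q≤n} I^{p,q}`. -/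
lemma W_span (hσ : ∀ v, σ (σ v) = v) (hMHS : IsMHS σ F W) (n : ℤ) :
    W n = ⨆ (rs : ℤ × ℤ) (_ : rs.1 + rs.2 ≤ n), Ipq σ F W rs.1 rs.2 := by
  have hWmono := stepW_mono hMHS.2.1.1
  obtain ⟨aW, haW⟩ := hMHS.2.1.2.1
  have hpure := hMHS.2.2.2
  apply le_antisymm
  · have key : ∀ l : ℕ, ∀ n : ℤ, n ≤ aW + l →
        W n ≤ ⨆ (rs : ℤ × ℤ) (_ : rs.1 + rs.2 ≤ n), Ipq σ F W rs.1 rs.2 := by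
      intro l
      induction l with
      | zero =>
          intro n hn
          have : W n ≤ W aW := hWmono (by omega)
          rw [haW] at this
          exact this.trans bot_le
      | succ l ih =>
          intro n hn
          rcases le_or_gt n (aW + l) with h | h
          · exact ih n h
          · refine le_trans (le_of_eq (hpure n).1.symm) (iSup_le fun p => ?_)
            refine le_trans (grH_le_Ipq σ F W hσ hMHS n p) (sup_le ?_ ?_)
            · exact le_iSup_of_le (p, n - p) (le_iSup_of_le (by simp) le_rfl)
            · refine le_trans (ih (n - 1) (by omega)) ?_
              refine iSup_le fun rs => iSup_le fun hrs => ?_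
              exact le_iSup_of_le rs (le_iSup_of_le (by omega) le_rfl)
    intro x hx
    exact key ((n - aW).toNat) n (by omega) hx
  · refine iSup_le fun rs => iSup_le fun hrs => ?_
    exact Ipq_le_Wn σ F W rs.1 rs.2 n hrs hMHS

lemma iSup_Ipq_top (hσ : ∀ v, σ (σ v) = v) (hMHS : IsMHS σ F W) :
    (⨆ rs : ℤ × ℤ, Ipq σ F W rs.1 rs.2) = ⊤ := by
  obtain ⟨bW, hbW⟩ := hMHS.2.1.2.2
  apply le_antisymm le_top
  rw [← hbW, W_span σ F W hσ hMHS bW]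
  refine iSup_le fun rs => iSup_le fun _ => le_iSup_of_le rs le_rfl

/-- `F^p = Σ_{r ≥ p} I^{r,s}`. -/
lemma F_span (hσ : ∀ v, σ (σ v) = v) (hMHS : IsMHS σ F W) (p : ℤ) :
    F p = ⨆ (rs : ℤ × ℤ) (_ : p ≤ rs.1), Ipq σ F W rs.1 rs.2 := by
  have hWmono := stepW_mono hMHS.2.1.1
  have hFanti := stepF_anti hMHS.1.1
  obtain ⟨aW, haW⟩ := hMHS.2.1.2.1
  obtain ⟨bW, hbW⟩ := hMHS.2.1.2.2
  apply le_antisymm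
  · have key : ∀ l : ℕ, ∀ n : ℤ, n ≤ aW + l →
        F p ⊓ W n ≤ ⨆ (rs : ℤ × ℤ) (_ : p ≤ rs.1), Ipq σ F W rs.1 rs.2 := by
      intro l
      induction l with
      | zero =>
          intro n hn
          refine le_trans (inf_le_right.trans (hWmono (show n ≤ aW by omega))) ?_
          rw [haW]; exact bot_le
      | succ l ih =>
          intro n hn
          rcases le_or_gt n (aW + l) with h | h
          · exact ih n h
          · intro v hv
            have hv' : v ∈ grF F W n p := Submodule.mem_sup_left hv
            rw [(gr_package σ F W hσ hMHS n).1 p] at hv'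
            have hsup : (⨆ (a : ℤ) (_ : p ≤ a), grH σ F W n a) ≤
                (⨆ (a : ℤ) (_ : p ≤ a), Ipq σ F W a (n - a)) ⊔ W (n - 1) := by
              refine iSup_le fun a => iSup_le fun ha => ?_
              refine le_trans (grH_le_Ipq σ F W hσ hMHS n a) (sup_le ?_ le_sup_right)
              exact le_sup_of_le_left (le_iSup_of_le a (le_iSup_of_le ha le_rfl))
            obtain ⟨y, hy, w, hw, hyw⟩ := Submodule.mem_sup.mp (hsup hv')
            have hyF : y ∈ F p := by
              refine (iSup_le fun a => iSup_le fun ha => ?_ :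
                (⨆ (a : ℤ) (_ : p ≤ a), Ipq σ F W a (n - a)) ≤ F p) hy
              exact (Ipq_le_F σ F W a (n - a)).trans (hFanti ha)
            have hwF : w ∈ F p ⊓ W (n - 1) := by
              have hwv : w = v - y := by rw [← hyw]; abel
              exact Submodule.mem_inf.mpr ⟨hwv ▸ sub_mem (Submodule.mem_inf.mp hv).1 hyF, hw⟩
            have hyT : y ∈ ⨆ (rs : ℤ × ℤ) (_ : p ≤ rs.1), Ipq σ F W rs.1 rs.2 := by
              refine (iSup_le fun a => iSup_le fun ha => ?_ :
                (⨆ (a : ℤ) (_ : p ≤ a), Ipq σ F W a (n - a)) ≤ _) hy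
              exact le_iSup_of_le (a, n - a) (le_iSup_of_le ha le_rfl)
            have hwT := ih (n - 1) (by omega) hwF
            have : v = y + w := by rw [← hyw]
            rw [this]
            exact add_mem hyT hwT
    have hFp : F p = F p ⊓ W bW := by rw [hbW, inf_top_eq]
    rw [hFp]
    exact key ((bW - aW).toNat) bW (by omega)
  · refine iSup_le fun rs => iSup_le fun hrs => ?_
    exact (Ipq_le_F σ F W rs.1 rs.2).trans (hFanti hrs)

lemma Ipq_le_grH (hσ : ∀ v, σ (σ v) = v) (hMHS : IsMHS σ F W) (p q : ℤ) :
    Ipq σ F W p q ≤ grH σ F W (p + q) p := by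
  have hσW := hMHS.2.2.1
  refine le_inf ?_ ?_
  · exact le_sup_of_le_left inf_le_left
  · show Ipq σ F W p q ≤ (F (p + q - p)).map σ ⊓ W (p + q) ⊔ W (p + q - 1)
    rw [show p + q - p = q by ring]
    refine (Ipq_le_Lf σ F W p q).trans (sup_le ?_ ?_)
    · rw [mapσ_FW σ F W hσ hσW]
      exact le_sup_left
    · refine le_sup_of_le_right (iSup_le fun j => ?_)
      refine le_trans (Submodule.map_le_iff_le_comap.mpr ?_) (le_refl _)
      intro x hx
      have : σ x ∈ W (p + q - 2 - (j : ℤ)) := by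
        have := hx.2
        rw [← hσW (p + q - 2 - (j : ℤ))]
        exact ⟨x, this, rfl⟩
      exact stepW_mono hMHS.2.1.1 (by omega) this

/-- `I^{p,q} ∩ W_{n-1} = ⊥`. -/
lemma Ipq_inf_W (hσ : ∀ v, σ (σ v) = v) (hMHS : IsMHS σ F W) (p q : ℤ) :
    Ipq σ F W p q ⊓ W (p + q - 1) = ⊥ := by
  have hσW := hMHS.2.2.1
  have hWmono := stepW_mono hMHS.2.1.1
  have hFanti := stepF_anti hMHS.1.1
  obtain ⟨aW, haW⟩ := hMHS.2.1.2.1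
  set n : ℤ := p + q with hn
  -- single-step descent
  have step : ∀ m : ℤ, m ≤ n - 1 → Ipq σ F W p q ⊓ W m ≤ W (m - 1) := by
    intro m hm
    have h2 : Ipq σ F W p q ⊓ W m ≤ (F (m + 1 - p)).map σ ⊓ W m ⊔ W (m - 1) := by
      have hσX : (Ipq σ F W p q ⊓ W m).map σ ≤ (F (m + 1 - p) ⊓ W m) ⊔ W (m - 1) := by
        rw [mapσ_inf σ hσ, hσW]
        have hLf : (Lf σ F W q n).map σ =
            (F q ⊓ W n) ⊔ ⨆ j : ℕ, (F (q - 1 - (j : ℤ)) ⊓ W (n - 2 - (j : ℤ))) := by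
          show ((F q ⊓ W n).map σ ⊔ ⨆ j : ℕ,
            (F (q - 1 - (j : ℤ)) ⊓ W (n - 2 - (j : ℤ))).map σ).map σ = _
          rw [Submodule.map_sup, map_map_σ σ hσ, Submodule.map_iSup]
          congr 1
          exact iSup_congr fun j => map_map_σ σ hσ _
        have hTq : (Lf σ F W q n).map σ ≤ F (m + 1 - p) ⊔ W (m - 1) := by
          rw [hLf]
          refine sup_le ?_ (iSup_le fun j => ?_)
          · exact le_sup_of_le_left (inf_le_left.trans (hFanti (by omega)))
          · rcases le_or_gt ((j : ℤ)) (n - 2 - m) with hj | hj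
            · exact le_sup_of_le_left (inf_le_left.trans (hFanti (by omega)))
            · exact le_sup_of_le_right (inf_le_right.trans (hWmono (by omega)))
        calc (Ipq σ F W p q).map σ ⊓ W m
            ≤ (F (m + 1 - p) ⊔ W (m - 1)) ⊓ W m :=
              inf_le_inf_right _ ((Submodule.map_mono (Ipq_le_Lf σ F W p q)).trans hTq)
          _ = (W (m - 1) ⊔ F (m + 1 - p)) ⊓ W m := by rw [sup_comm]
          _ = W (m - 1) ⊔ (F (m + 1 - p) ⊓ W m) := sup_inf_assoc_of_le _ (hWmono (by omega))
          _ = (F (m + 1 - p) ⊓ W m) ⊔ W (m - 1) := by rw [sup_comm]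
      calc Ipq σ F W p q ⊓ W m
          = ((Ipq σ F W p q ⊓ W m).map σ).map σ := (map_map_σ σ hσ _).symm
        _ ≤ ((F (m + 1 - p) ⊓ W m) ⊔ W (m - 1)).map σ := Submodule.map_mono hσX
        _ = (F (m + 1 - p) ⊓ W m).map σ ⊔ W (m - 1) := by
            rw [Submodule.map_sup, hσW]
        _ = (F (m + 1 - p)).map σ ⊓ W m ⊔ W (m - 1) := by rw [mapσ_FW σ F W hσ hσW]
    have h1 : Ipq σ F W p q ⊓ W m ≤ F p ⊓ W m ⊔ W (m - 1) :=
      le_sup_of_le_left (inf_le_inf_right (W m) (Ipq_le_F σ F W p q))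
    have hwin := (gr_package σ F W hσ hMHS m).2.2 p (m + 1 - p)
    have hempty : (⨆ (a : ℤ) (_ : p ≤ a ∧ a ≤ m - (m + 1 - p)), grH σ F W m a) = ⊥ := by
      refine le_bot_iff.mp (iSup_le fun a => iSup_le fun ha => absurd ha (by omega))
    have : Ipq σ F W p q ⊓ W m ≤ grF F W m p ⊓ grF (fun r => (F r).map σ) W m (m + 1 - p) :=
      le_inf h1 h2
    refine this.trans (hwin.trans ?_)
    rw [hempty, sup_bot_eq]
  have chain : ∀ l : ℕ, Ipq σ F W p q ⊓ W (n - 1) ≤ W (n - 1 - (l : ℤ)) := by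
    intro l
    induction l with
    | zero => simpa using inf_le_right
    | succ l ih =>
        have h1 : Ipq σ F W p q ⊓ W (n - 1) ≤ Ipq σ F W p q ⊓ W (n - 1 - (l : ℤ)) :=
          le_inf inf_le_left ih
        refine (h1.trans (step (n - 1 - (l : ℤ)) (by omega))).trans (le_of_eq ?_)
        congr 1
        push_cast
        ring
  refine le_bot_iff.mp ?_
  refine le_trans (chain ((n - 1 - aW).toNat)) ?_
  refine le_trans (hWmono (show n - 1 - ((n - 1 - aW).toNat : ℤ) ≤ aW by omega)) ?_
  rw [haW]

end Main2


section Main3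
variable {V : Type*} [AddCommGroup V] [Module ℂ V] [FiniteDimensional ℂ V]
variable (σ : V →ₛₗ[starRingEnd ℂ] V) (F W : ℤ → Submodule ℂ V)

/-- The weight-`n` part `J_n = Σ_{p+q=n} I^{p,q}`. -/
def Jw (n : ℤ) : Submodule ℂ V := ⨆ p : ℤ, Ipq σ F W p (n - p)

lemma J_le_W (hMHS : IsMHS σ F W) (n : ℤ) : Jw σ F W n ≤ W n := by
  refine iSup_le fun p => ?_
  have h := Ipq_le_W σ F W p (n - p)
  rwa [show p + (n - p) = n by ring] at h

lemma Ipq_inf_X (hσ : ∀ v, σ (σ v) = v) (hMHS : IsMHS σ F W) (p n : ℤ) :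
    Ipq σ F W p (n - p) ⊓
      ((⨆ (r : ℤ) (_ : r ≠ p), Ipq σ F W r (n - r)) ⊔ W (n - 1)) = ⊥ := by
  have hpure := hMHS.2.2.2
  have hXle : (⨆ (r : ℤ) (_ : r ≠ p), Ipq σ F W r (n - r)) ⊔ W (n - 1) ≤
      ⨆ (r : ℤ) (_ : r ≠ p), grH σ F W n r := by
    refine sup_le (iSup_le fun r => iSup_le fun hr => le_iSup_of_le r (le_iSup_of_le hr ?_)) ?_
    · have h := Ipq_le_grH σ F W hσ hMHS r (n - r)
      rwa [show r + (n - r) = n by ring] at h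
    · exact le_iSup_of_le (p + 1) (le_iSup_of_le (by omega) (grH_K σ F W n (p + 1)))
  have hIg : Ipq σ F W p (n - p) ≤ grH σ F W n p := by
    have h := Ipq_le_grH σ F W hσ hMHS p (n - p)
    rwa [show p + (n - p) = n by ring] at h
  apply le_bot_iff.mp
  have h1 : Ipq σ F W p (n - p) ⊓
      ((⨆ (r : ℤ) (_ : r ≠ p), Ipq σ F W r (n - r)) ⊔ W (n - 1)) ≤ W (n - 1) := by
    refine le_trans (inf_le_inf hIg hXle) (le_of_eq ?_)
    exact (hpure n).2 p
  have h2 := Ipq_inf_W σ F W hσ hMHS p (n - p)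
  rw [show p + (n - p) - 1 = n - 1 by ring] at h2
  exact le_trans (le_inf inf_le_left h1) (le_of_eq h2)

lemma J_inf_W (hσ : ∀ v, σ (σ v) = v) (hMHS : IsMHS σ F W) (n : ℤ) :
    Jw σ F W n ⊓ W (n - 1) = ⊥ := by
  apply le_bot_iff.mp
  intro v hv
  obtain ⟨hvJ, hvW⟩ := Submodule.mem_inf.mp hv
  obtain ⟨f, hf, hsum⟩ :=
    (Submodule.mem_iSup_iff_exists_finsupp (fun p => Ipq σ F W p (n - p)) v).mp hvJ
  have hsum' : ∑ b ∈ f.support, f b = v := hsum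
  have hz : ∀ a, f a = 0 := by
    intro a
    by_cases ha : a ∈ f.support
    · have h1 : f a = v - ∑ b ∈ f.support.erase a, f b := by
        rw [← hsum', ← Finset.add_sum_erase f.support f ha]
        abel
      have h2 : f a ∈ (⨆ (r : ℤ) (_ : r ≠ a), Ipq σ F W r (n - r)) ⊔ W (n - 1) := by
        rw [h1]
        refine sub_mem (Submodule.mem_sup_right hvW) (Submodule.sum_mem _ fun b hb => ?_)
        exact Submodule.mem_sup_left (Submodule.mem_iSup_of_mem b
          (Submodule.mem_iSup_of_mem (Finset.ne_of_mem_erase hb) (hf b)))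
      have h3 := Ipq_inf_X σ F W hσ hMHS a n
      exact (Submodule.mem_bot ℂ).mp (h3 ▸ Submodule.mem_inf.mpr ⟨hf a, h2⟩)
    · exact Finsupp.notMem_support_iff.mp ha
  rw [show v = ∑ b ∈ f.support, f b from hsum'.symm]
  rw [Finset.sum_congr rfl (fun b _ => hz b), Finset.sum_const_zero]
  exact Submodule.zero_mem ⊥

lemma J_bot_high (hσ : ∀ v, σ (σ v) = v) (hMHS : IsMHS σ F W) {bW m : ℤ}
    (hbW : W bW = ⊤) (hm : bW < m) : Jw σ F W m = ⊥ := by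
  have hWmono := stepW_mono hMHS.2.1.1
  have htop : W (m - 1) = ⊤ :=
    top_le_iff.mp (by rw [← hbW]; exact hWmono (by omega))
  rw [← J_inf_W σ F W hσ hMHS m, htop, inf_top_eq]

lemma J_disjoint (hσ : ∀ v, σ (σ v) = v) (hMHS : IsMHS σ F W) (n : ℤ) :
    Jw σ F W n ⊓ (⨆ (m : ℤ) (_ : m ≠ n), Jw σ F W m) = ⊥ := by
  have hWmono := stepW_mono hMHS.2.1.1
  obtain ⟨bW, hbW⟩ := hMHS.2.1.2.2
  set Y : Submodule ℂ V := ⨆ (m : ℤ) (_ : m < n), Jw σ F W m with hY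
  have hYle : ∀ N : ℤ, n - 1 ≤ N → Y ≤ W N := fun N hN =>
    iSup_le fun m => iSup_le fun hm => (J_le_W σ F W hMHS m).trans (hWmono (by omega))
  set Z : ℕ → Submodule ℂ V :=
    fun l => ⨆ (m : ℤ) (_ : n < m ∧ m ≤ n + (l : ℤ)), Jw σ F W m with hZ
  have hZle : ∀ l : ℕ, Z l ≤ W (n + (l : ℤ)) := fun l =>
    iSup_le fun m => iSup_le fun hm => (J_le_W σ F W hMHS m).trans (hWmono (by omega))
  have claim : ∀ l : ℕ, Jw σ F W n ⊓ (Y ⊔ Z l) = ⊥ := by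
    intro l
    induction l with
    | zero =>
        have hZ0 : Z 0 = ⊥ :=
          le_bot_iff.mp (iSup_le fun m => iSup_le fun hm => absurd hm (by omega))
        rw [hZ0, sup_bot_eq]
        apply le_bot_iff.mp
        refine le_trans (inf_le_inf_left _ (hYle (n - 1) le_rfl)) ?_
        exact le_of_eq (J_inf_W σ F W hσ hMHS n)
    | succ l ih =>
        have hsplit : Z (l + 1) = Z l ⊔ Jw σ F W (n + (l : ℤ) + 1) := by
          apply le_antisymm
          · refine iSup_le fun m => iSup_le fun hm => ?_
            rcases eq_or_lt_of_le hm.2 with h | h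
            · rw [show m = n + (l : ℤ) + 1 by push_cast at h ⊢; omega]
              exact le_sup_right
            · refine le_sup_of_le_left (le_iSup_of_le m (le_iSup_of_le ?_ le_rfl))
              constructor
              · exact hm.1
              · push_cast at h ⊢; omega
          · refine sup_le ?_ ?_
            · refine iSup_le fun m => iSup_le fun hm => ?_
              refine le_iSup_of_le m (le_iSup_of_le ⟨hm.1, by push_cast; omega⟩ le_rfl)
            · refine le_iSup_of_le (n + (l : ℤ) + 1)
                (le_iSup_of_le ⟨by omega, by push_cast; omega⟩ le_rfl)
        set N : ℤ := n + (l : ℤ) + 1 with hN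
        have hYZ : Y ⊔ Z l ≤ W (N - 1) := by
          refine sup_le (hYle (N - 1) (by omega)) ((hZle l).trans (hWmono (by omega)))
        have hmod : ((Y ⊔ Z l) ⊔ Jw σ F W N) ⊓ W (N - 1) =
            (Y ⊔ Z l) ⊔ (Jw σ F W N ⊓ W (N - 1)) := sup_inf_assoc_of_le _ hYZ
        rw [J_inf_W σ F W hσ hMHS N, sup_bot_eq] at hmod
        have hJn : Jw σ F W n ≤ W (N - 1) :=
          (J_le_W σ F W hMHS n).trans (hWmono (by omega))
        apply le_bot_iff.mp
        calc Jw σ F W n ⊓ (Y ⊔ Z (l + 1))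
            = Jw σ F W n ⊓ ((Y ⊔ Z l) ⊔ Jw σ F W N) := by rw [hsplit, ← sup_assoc]
          _ ≤ Jw σ F W n ⊓ (((Y ⊔ Z l) ⊔ Jw σ F W N) ⊓ W (N - 1)) :=
              le_inf inf_le_left (le_inf inf_le_right (inf_le_left.trans hJn))
          _ = Jw σ F W n ⊓ (Y ⊔ Z l) := by rw [hmod]
          _ = ⊥ := ih
  apply le_bot_iff.mp
  set l0 : ℕ := (bW + 1 - n).toNat with hl0
  have hbig : (⨆ (m : ℤ) (_ : m ≠ n), Jw σ F W m) ≤ Y ⊔ Z l0 := by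
    refine iSup_le fun m => iSup_le fun hm => ?_
    rcases lt_or_gt_of_ne hm with h | h
    · exact le_sup_of_le_left (le_iSup_of_le m (le_iSup_of_le h le_rfl))
    · rcases le_or_gt m (n + (l0 : ℤ)) with h2 | h2
      · exact le_sup_of_le_right (le_iSup_of_le m (le_iSup_of_le ⟨h, h2⟩ le_rfl))
      · rw [J_bot_high σ F W hσ hMHS hbW (show bW < m by omega)]
        exact bot_le
  exact le_trans (inf_le_inf_left _ hbig) (le_of_eq (claim l0))

lemma Ipq_iSupIndep (hσ : ∀ v, σ (σ v) = v) (hMHS : IsMHS σ F W) :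
    iSupIndep (fun pq : ℤ × ℤ => Ipq σ F W pq.1 pq.2) := by
  rw [iSupIndep_def]
  rintro ⟨p, q⟩
  rw [disjoint_iff]
  set n : ℤ := p + q with hn
  set X : Submodule ℂ V := ⨆ (r : ℤ) (_ : r ≠ p), Ipq σ F W r (n - r) with hX
  set Z' : Submodule ℂ V := ⨆ (m : ℤ) (_ : m ≠ n), Jw σ F W m with hZ'
  have hbound : (⨆ (rs : ℤ × ℤ) (_ : rs ≠ (p, q)), Ipq σ F W rs.1 rs.2) ≤ X ⊔ Z' := by
    refine iSup_le fun rs => iSup_le fun hrs => ?_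
    rcases eq_or_ne (rs.1 + rs.2) n with h | h
    · have hr : rs.1 ≠ p := by
        rintro h1
        exact hrs (Prod.ext h1 (by omega))
      refine le_sup_of_le_left (le_iSup_of_le rs.1 (le_iSup_of_le hr ?_))
      rw [show n - rs.1 = rs.2 by omega]
    · refine le_sup_of_le_right (le_iSup_of_le (rs.1 + rs.2) (le_iSup_of_le h ?_))
      refine le_trans (le_of_eq ?_) (le_iSup (fun r => Ipq σ F W r (rs.1 + rs.2 - r)) rs.1)
      rw [show rs.1 + rs.2 - rs.1 = rs.2 by ring]
  have hXJ : X ≤ Jw σ F W n :=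
    iSup_le fun r => iSup_le fun _ => le_iSup (fun r => Ipq σ F W r (n - r)) r
  have hmod : (X ⊔ Z') ⊓ Jw σ F W n = X ⊔ (Z' ⊓ Jw σ F W n) := sup_inf_assoc_of_le _ hXJ
  have hZJ : Z' ⊓ Jw σ F W n = ⊥ := by
    rw [inf_comm]; exact J_disjoint σ F W hσ hMHS n
  rw [hZJ, sup_bot_eq] at hmod
  have hIJ : Ipq σ F W p q ≤ Jw σ F W n := by
    refine le_trans (le_of_eq ?_) (le_iSup (fun r => Ipq σ F W r (n - r)) p)
    rw [show n - p = q by omega]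
  have hfin := Ipq_inf_X σ F W hσ hMHS p n
  rw [show n - p = q by omega] at hfin
  apply le_bot_iff.mp
  calc Ipq σ F W p q ⊓ (⨆ (rs : ℤ × ℤ) (_ : rs ≠ (p, q)), Ipq σ F W rs.1 rs.2)
      ≤ Ipq σ F W p q ⊓ ((X ⊔ Z') ⊓ Jw σ F W n) :=
        le_inf inf_le_left (le_inf (inf_le_right.trans hbound) (inf_le_left.trans hIJ))
    _ = Ipq σ F W p q ⊓ X := by rw [hmod]
    _ ≤ Ipq σ F W p q ⊓ (X ⊔ W (n - 1)) := le_inf inf_le_left (inf_le_right.trans le_sup_left)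
    _ = ⊥ := hfin

lemma Ipq_isInternal (hσ : ∀ v, σ (σ v) = v) (hMHS : IsMHS σ F W) :
    DirectSum.IsInternal (fun pq : ℤ × ℤ => Ipq σ F W pq.1 pq.2) :=
  DirectSum.isInternal_submodule_of_iSupIndep_of_iSup_eq_top
    (Ipq_iSupIndep σ F W hσ hMHS) (iSup_Ipq_top σ F W hσ hMHS)

end Main3


section Conj
variable {V : Type*} [AddCommGroup V] [Module ℂ V] [FiniteDimensional ℂ V]
variable (σ : V →ₛₗ[starRingEnd ℂ] V) (F W : ℤ → Submodule ℂ V)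

/-- Tail filtration `P_m = Σ_j F^{m-j+1-p} ∩ W_{m-j}`. -/
def Pfil (p m : ℤ) : Submodule ℂ V :=
  ⨆ j : ℕ, F (m - (j : ℤ) + 1 - p) ⊓ W (m - (j : ℤ))

/-- Conjugate tail filtration `Q_m = Σ_j σ(F^{m-j+1-q} ∩ W_{m-j})`. -/
def Qfil (q m : ℤ) : Submodule ℂ V :=
  ⨆ j : ℕ, (F (m - (j : ℤ) + 1 - q) ⊓ W (m - (j : ℤ))).map σ

lemma Pfil_slot (p m : ℤ) (j : ℕ) : F (m - (j : ℤ) + 1 - p) ⊓ W (m - (j : ℤ)) ≤ Pfil F W p m :=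
  le_iSup (fun j : ℕ => F (m - (j : ℤ) + 1 - p) ⊓ W (m - (j : ℤ))) j

lemma Qfil_slot (q m : ℤ) (j : ℕ) :
    (F (m - (j : ℤ) + 1 - q) ⊓ W (m - (j : ℤ))).map σ ≤ Qfil σ F W q m :=
  le_iSup (fun j : ℕ => (F (m - (j : ℤ) + 1 - q) ⊓ W (m - (j : ℤ))).map σ) j

lemma Pfil_split (p m : ℤ) : Pfil F W p m = (F (m + 1 - p) ⊓ W m) ⊔ Pfil F W p (m - 1) := by
  apply le_antisymm
  · refine iSup_le fun j => ?_
    cases j with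
    | zero => exact le_sup_of_le_left (le_of_eq (by norm_num))
    | succ j =>
        refine le_sup_of_le_right (le_trans (le_of_eq ?_) (Pfil_slot F W p (m - 1) j))
        push_cast
        congr 2 <;> ring
  · refine sup_le ?_ ?_
    · refine le_trans (le_of_eq ?_) (Pfil_slot F W p m 0)
      norm_num
    · refine iSup_le fun j => ?_
      refine le_trans (le_of_eq ?_) (Pfil_slot F W p m (j + 1))
      push_cast
      congr 2 <;> ring

lemma Qfil_split (q m : ℤ) :
    Qfil σ F W q m = (F (m + 1 - q) ⊓ W m).map σ ⊔ Qfil σ F W q (m - 1) := by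
  apply le_antisymm
  · refine iSup_le fun j => ?_
    cases j with
    | zero => exact le_sup_of_le_left (le_of_eq (by norm_num))
    | succ j =>
        refine le_sup_of_le_right (le_trans (le_of_eq ?_) (Qfil_slot σ F W q (m - 1) j))
        push_cast
        congr 3 <;> ring
  · refine sup_le ?_ ?_
    · refine le_trans (le_of_eq ?_) (Qfil_slot σ F W q m 0)
      norm_num
    · refine iSup_le fun j => ?_
      refine le_trans (le_of_eq ?_) (Qfil_slot σ F W q m (j + 1))
      push_cast
      congr 3 <;> ring

lemma Pfil_le_W (hMHS : IsMHS σ F W) (p m : ℤ) : Pfil F W p m ≤ W m :=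
  iSup_le fun j => inf_le_right.trans (stepW_mono hMHS.2.1.1 (by omega))

lemma Qfil_le_W (hMHS : IsMHS σ F W) (q m : ℤ) : Qfil σ F W q m ≤ W m := by
  refine iSup_le fun j => ?_
  have h : (W (m - (j : ℤ))).map σ ≤ W m := by
    rw [hMHS.2.2.1]
    exact stepW_mono hMHS.2.1.1 (by omega)
  exact (Submodule.map_mono inf_le_right).trans h

lemma Pfil_grF (hMHS : IsMHS σ F W) (p m : ℤ) : Pfil F W p m ≤ grF F W m (m + 1 - p) := by
  rw [Pfil_split]
  exact sup_le le_sup_left (le_sup_of_le_right (Pfil_le_W σ F W hMHS p (m - 1)))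

lemma Qfil_grF (hσ : ∀ v, σ (σ v) = v) (hMHS : IsMHS σ F W) (q m : ℤ) :
    Qfil σ F W q m ≤ grF (fun r => (F r).map σ) W m (m + 1 - q) := by
  rw [Qfil_split]
  refine sup_le ?_ (le_sup_of_le_right (Qfil_le_W σ F W hMHS q (m - 1)))
  rw [mapσ_FW σ F W hσ hMHS.2.2.1]
  exact le_sup_left

lemma Pfil_inf_W (hMHS : IsMHS σ F W) (p m : ℤ) :
    Pfil F W p m ⊓ W (m - 1) ≤ Pfil F W p (m - 1) := by
  have hWmono := stepW_mono hMHS.2.1.1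
  have hFanti := stepF_anti hMHS.1.1
  rw [Pfil_split, sup_comm]
  rw [sup_inf_assoc_of_le _ (Pfil_le_W σ F W hMHS p (m - 1))]
  refine sup_le le_rfl ?_
  have e1 : (m - 1) - ((0:ℕ):ℤ) + 1 - p = m - p := by push_cast; ring
  have e2 : (m - 1) - ((0:ℕ):ℤ) = m - 1 := by push_cast; ring
  have hslot : F (m - p) ⊓ W (m - 1) ≤ Pfil F W p (m - 1) := by
    refine le_trans (le_of_eq ?_) (Pfil_slot F W p (m - 1) 0)
    rw [e1, e2]
  refine le_trans (le_inf ((inf_le_left.trans inf_le_left).trans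
    (hFanti (by omega : (m : ℤ) - p ≤ m + 1 - p))) inf_le_right) hslot

lemma Qfil_inf_W (hσ : ∀ v, σ (σ v) = v) (hMHS : IsMHS σ F W) (q m : ℤ) :
    Qfil σ F W q m ⊓ W (m - 1) ≤ Qfil σ F W q (m - 1) := by
  have hWmono := stepW_mono hMHS.2.1.1
  have hFanti := stepF_anti hMHS.1.1
  have hσW := hMHS.2.2.1
  rw [Qfil_split, sup_comm]
  rw [sup_inf_assoc_of_le _ (Qfil_le_W σ F W hMHS q (m - 1))]
  refine sup_le le_rfl ?_
  have h1 : (F (m + 1 - q) ⊓ W m).map σ ⊓ W (m - 1) =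
      ((F (m + 1 - q) ⊓ W m) ⊓ W (m - 1)).map σ := by
    rw [mapσ_inf σ hσ (F (m + 1 - q) ⊓ W m) (W (m - 1)), hσW]
  rw [h1]
  have e1 : (m - 1) - ((0:ℕ):ℤ) + 1 - q = m - q := by push_cast; ring
  have e2 : (m - 1) - ((0:ℕ):ℤ) = m - 1 := by push_cast; ring
  have hslot : (F (m - q) ⊓ W (m - 1)).map σ ≤ Qfil σ F W q (m - 1) := by
    refine le_trans (le_of_eq ?_) (Qfil_slot σ F W q (m - 1) 0)
    rw [e1, e2]
  refine le_trans (Submodule.map_mono (le_inf ((inf_le_left.trans inf_le_left).trans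
    (hFanti (by omega : (m : ℤ) - q ≤ m + 1 - q))) inf_le_right)) hslot

/-- Main conjugation lemma: `σ(I^{p,q}) ⊆ I^{q,p} + Σ_{r<q,s<p} I^{r,s}`. -/
lemma mapσ_Ipq_le (hσ : ∀ v, σ (σ v) = v) (hMHS : IsMHS σ F W) (p q : ℤ) :
    (Ipq σ F W p q).map σ ≤ Ipq σ F W q p ⊔ lowPart (Ipq σ F W) q p := by
  have hσW := hMHS.2.2.1
  have hWmono := stepW_mono hMHS.2.1.1
  have hFanti := stepF_anti hMHS.1.1
  obtain ⟨aW, haW⟩ := hMHS.2.1.2.1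
  set n : ℤ := p + q with hn
  set M : Submodule ℂ V := lowPart (Ipq σ F W) q p with hM
  -- main induction
  have key : ∀ l : ℕ, ∀ v ∈ Ipq σ F W p q, ∃ i ∈ Ipq σ F W q p, ∃ μ ∈ M,
      σ v - i - μ ∈ Pfil F W p (n - 1 - (l : ℤ)) ⊓ Qfil σ F W q (n - 1 - (l : ℤ)) ⊓
        W (n - 1 - (l : ℤ)) := by
    intro l
    induction l with
    | zero =>
        intro v hv
        have hvF : v ∈ F p := (Ipq_le_F σ F W p q) hv
        have hvW : v ∈ W n := (Ipq_le_W σ F W p q) hv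
        have hvL : v ∈ Lf σ F W q n := (Ipq_le_Lf σ F W p q) hv
        obtain ⟨a, ha, b, hb, hab⟩ := Submodule.mem_sup.mp hvL
        -- σ a lands in F q ⊓ W n
        obtain ⟨y, hy, rfl⟩ := ha
        have hσa : σ (σ y) ∈ F q ⊓ W n := by rw [hσ y]; exact hy
        -- σ b lands in the plain tail
        have hσb : σ b ∈ ⨆ j : ℕ, F (q - 1 - (j : ℤ)) ⊓ W (n - 2 - (j : ℤ)) := by
          have h1 : σ b ∈ (⨆ j : ℕ, (F (q - 1 - (j : ℤ)) ⊓ W (n - 2 - (j : ℤ))).map σ).map σ :=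
            ⟨b, hb, rfl⟩
          have h2 : (⨆ j : ℕ, (F (q - 1 - (j : ℤ)) ⊓ W (n - 2 - (j : ℤ))).map σ).map σ =
              ⨆ j : ℕ, F (q - 1 - (j : ℤ)) ⊓ W (n - 2 - (j : ℤ)) := by
            rw [Submodule.map_iSup]
            exact iSup_congr fun j => map_map_σ σ hσ _
          rwa [h2] at h1
        have hTail : (⨆ j : ℕ, F (q - 1 - (j : ℤ)) ⊓ W (n - 2 - (j : ℤ))) ≤ W (n - 2) :=
          iSup_le fun j => inf_le_right.trans (hWmono (by omega))
        have hσvW : σ v ∈ W n := by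
          rw [← hσW n]; exact ⟨v, hvW, rfl⟩
        have hσv_split : σ v = σ (σ y) + σ b := by rw [← map_add, hab]
        -- σ v ∈ grH n q
        have hσvH : σ v ∈ grH σ F W n q := by
          refine Submodule.mem_inf.mpr ⟨?_, ?_⟩
          · rw [hσv_split]
            exact Submodule.add_mem_sup hσa (hWmono (by omega : n - 2 ≤ n - 1) (hTail hσb))
          · show σ v ∈ (F (n - q)).map σ ⊓ W n ⊔ W (n - 1)
            refine Submodule.mem_sup_left (Submodule.mem_inf.mpr ⟨?_, hσvW⟩)
            rw [show n - q = p by omega]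
            exact ⟨v, hvF, rfl⟩
        have hIq := grH_le_Ipq σ F W hσ hMHS n q hσvH
        rw [show n - q = p by omega] at hIq
        obtain ⟨i, hi, w0, hw0, hiw⟩ := Submodule.mem_sup.mp hIq
        refine ⟨i, hi, 0, Submodule.zero_mem M, ?_⟩
        have hwdef : σ v - i - 0 = w0 := by rw [← hiw]; abel
        rw [hwdef]
        have hidx : n - 1 - ((0 : ℕ) : ℤ) = n - 1 := by norm_num
        rw [hidx]
        refine Submodule.mem_inf.mpr ⟨Submodule.mem_inf.mpr ⟨?_, ?_⟩, hw0⟩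
        · -- w0 ∈ Pfil p (n-1)
          have hw0eq : w0 = (σ (σ y) - i) + σ b := by
            have h := hσv_split
            rw [← hiw] at h
            calc w0 = (i + w0) - i := by abel
            _ = (σ (σ y) + σ b) - i := by rw [h]
            _ = (σ (σ y) - i) + σ b := by abel
          have hiF : i ∈ F q := (Ipq_le_F σ F W q p) hi
          have h1 : σ (σ y) - i ∈ F q := sub_mem hσa.1 hiF
          have h2 : σ (σ y) - i ∈ W (n - 1) := by
            have : σ (σ y) - i = w0 - σ b := by
              rw [hw0eq]; abel
            rw [this]
            exact sub_mem hw0 (hWmono (by omega : n - 2 ≤ n - 1) (hTail hσb))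
          have hP0 : σ (σ y) - i ∈ Pfil F W p (n - 1) := by
            refine Pfil_slot F W p (n - 1) 0 ?_
            refine Submodule.mem_inf.mpr ⟨?_, ?_⟩
            · rw [show n - 1 - ((0:ℕ):ℤ) + 1 - p = q by omega]; exact h1
            · rw [show n - 1 - ((0:ℕ):ℤ) = n - 1 by norm_num]; exact h2
          have hPb : σ b ∈ Pfil F W p (n - 1) := by
            refine (iSup_le fun j => ?_ :
              (⨆ j : ℕ, F (q - 1 - (j : ℤ)) ⊓ W (n - 2 - (j : ℤ))) ≤ Pfil F W p (n - 1)) hσb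
            refine le_trans (le_of_eq ?_) (Pfil_slot F W p (n - 1) (j + 1))
            push_cast
            congr 2 <;> omega
          rw [hw0eq]
          exact add_mem hP0 hPb
        · -- w0 ∈ Qfil q (n-1)
          have hiL : i ∈ Lf σ F W p (q + p) := Ipq_le_Lf σ F W q p hi
          rw [show q + p = n by omega] at hiL
          obtain ⟨a', ha', b', hb', hab'⟩ := Submodule.mem_sup.mp hiL
          obtain ⟨α, hα, rfl⟩ := ha'
          have hb'W : b' ∈ W (n - 2) := by
            refine (iSup_le fun j => ?_ : (⨆ j : ℕ,
              (F (p - 1 - (j : ℤ)) ⊓ W (n - 2 - (j : ℤ))).map σ) ≤ W (n - 2)) hb'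
            have : (W (n - 2 - (j : ℤ))).map σ ≤ W (n - 2) := by
              rw [hσW]; exact hWmono (by omega)
            exact (Submodule.map_mono inf_le_right).trans this
          have hwq : w0 = σ (v - α) - b' := by
            rw [← hiw] at hσv_split
            have h3 : σ (v - α) = σ v - σ α := by rw [map_sub]
            rw [h3]
            calc w0 = (i + w0) - i := by abel
            _ = σ v - i := by rw [← hiw]
            _ = σ v - (σ α + b') := by rw [← hab']
            _ = σ v - σ α - b' := by abel
          have hvα : σ (v - α) ∈ W (n - 1) := by
            have : σ (v - α) = w0 + b' := by rw [hwq]; abel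
            rw [this]
            exact add_mem hw0 (hWmono (by omega : n - 2 ≤ n - 1) hb'W)
          have hvαW : v - α ∈ W (n - 1) := by
            have h4 : v - α = σ (σ (v - α)) := (hσ _).symm
            rw [h4, ← hσW (n - 1)]
            exact ⟨σ (v - α), hvα, rfl⟩
          have hQ0 : σ (v - α) ∈ Qfil σ F W q (n - 1) := by
            refine Qfil_slot σ F W q (n - 1) 0 ?_
            refine ⟨v - α, ?_, rfl⟩
            refine Submodule.mem_inf.mpr ⟨?_, ?_⟩
            · rw [show n - 1 - ((0:ℕ):ℤ) + 1 - q = p by omega]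
              exact sub_mem hvF hα.1
            · rw [show n - 1 - ((0:ℕ):ℤ) = n - 1 by norm_num]; exact hvαW
          have hQb : b' ∈ Qfil σ F W q (n - 1) := by
            refine (iSup_le fun j => ?_ : (⨆ j : ℕ,
              (F (p - 1 - (j : ℤ)) ⊓ W (n - 2 - (j : ℤ))).map σ) ≤ Qfil σ F W q (n - 1)) hb'
            refine le_trans (le_of_eq ?_) (Qfil_slot σ F W q (n - 1) (j + 1))
            push_cast
            congr 3 <;> omega
          rw [hwq]
          exact sub_mem hQ0 hQb
    | succ l ih =>
        intro v hv
        obtain ⟨i, hi, μ, hμ, hw⟩ := ih v hv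
        set m : ℤ := n - 1 - (l : ℤ) with hm
        obtain ⟨⟨hwP, hwQ⟩, hwW⟩ := Submodule.mem_inf.mp hw
        -- window bound
        have hwin := (gr_package σ F W hσ hMHS m).2.2 (m + 1 - p) (m + 1 - q)
        have hgr1 : σ v - i - μ ∈ grF F W m (m + 1 - p) := Pfil_grF σ F W hMHS p m hwP
        have hgr2 : σ v - i - μ ∈ grF (fun r => (F r).map σ) W m (m + 1 - q) :=
          Qfil_grF σ F W hσ hMHS q m hwQ
        have hwin2 : σ v - i - μ ∈ W (m - 1) ⊔
            ⨆ (a : ℤ) (_ : m + 1 - p ≤ a ∧ a ≤ m - (m + 1 - q)), grH σ F W m a :=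
          hwin (Submodule.mem_inf.mpr ⟨hgr1, hgr2⟩)
        set Mwin : Submodule ℂ V :=
          ⨆ (a : ℤ) (_ : m + 1 - p ≤ a ∧ a ≤ q - 1), Ipq σ F W a (m - a) with hMwin
        have hgrMwin : (⨆ (a : ℤ) (_ : m + 1 - p ≤ a ∧ a ≤ m - (m + 1 - q)), grH σ F W m a) ≤
            Mwin ⊔ W (m - 1) := by
          refine iSup_le fun a => iSup_le fun ha => ?_
          refine le_trans (grH_le_Ipq σ F W hσ hMHS m a) (sup_le ?_ le_sup_right)
          refine le_sup_of_le_left (le_iSup_of_le a (le_iSup_of_le ⟨ha.1, by omega⟩ le_rfl))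
        have hwin3 : σ v - i - μ ∈ Mwin ⊔ W (m - 1) := by
          have : (W (m - 1) ⊔
              ⨆ (a : ℤ) (_ : m + 1 - p ≤ a ∧ a ≤ m - (m + 1 - q)), grH σ F W m a) ≤
              Mwin ⊔ W (m - 1) := sup_le le_sup_right hgrMwin
          exact this hwin2
        obtain ⟨μ', hμ', w₁, hw₁, hμw⟩ := Submodule.mem_sup.mp hwin3
        have hMwinM : Mwin ≤ M := by
          refine iSup_le fun a => iSup_le fun ha => ?_
          exact le_iSup_of_le (a, m - a) (le_iSup_of_le ⟨by omega, by omega⟩ le_rfl)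
        have hMwinP : Mwin ≤ Pfil F W p m := by
          refine iSup_le fun a => iSup_le fun ha => ?_
          have h1 : Ipq σ F W a (m - a) ≤ F (m + 1 - p) ⊓ W m := by
            refine le_inf ((Ipq_le_F σ F W a (m - a)).trans (hFanti (by omega))) ?_
            have h2 := Ipq_le_W σ F W a (m - a)
            rwa [show a + (m - a) = m by ring] at h2
          refine h1.trans (le_trans (le_of_eq ?_) (Pfil_slot F W p m 0))
          norm_num
        have hMwinQ : Mwin ≤ Qfil σ F W q m := by
          refine iSup_le fun a => iSup_le fun ha => ?_
          have h1 : Ipq σ F W a (m - a) ≤ Lf σ F W (m - a) m := by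
            have h2 := Ipq_le_Lf σ F W a (m - a)
            rwa [show a + (m - a) = m by ring] at h2
          refine h1.trans ?_
          refine sup_le ?_ ?_
          · have hslot : (F (m + 1 - q) ⊓ W m).map σ ≤ Qfil σ F W q m := by
              refine le_trans (le_of_eq ?_) (Qfil_slot σ F W q m 0)
              norm_num
            exact le_trans (Submodule.map_mono (inf_le_inf
              (hFanti (by omega : m + 1 - q ≤ m - a)) le_rfl)) hslot
          · refine iSup_le fun j => ?_
            refine le_trans (Submodule.map_mono
              (inf_le_inf (hFanti ?_) (le_of_eq (congrArg W ?_)))) (Qfil_slot σ F W q m (j + 2))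
            · push_cast; omega
            · push_cast; ring
        have hw₁mem : w₁ ∈ Pfil F W p (m - 1) ⊓ Qfil σ F W q (m - 1) ⊓ W (m - 1) := by
          have hw₁w : w₁ = (σ v - i - μ) - μ' := by rw [← hμw]; abel
          have hw₁P : w₁ ∈ Pfil F W p m := by
            rw [hw₁w]; exact sub_mem hwP (hMwinP hμ')
          have hw₁Q : w₁ ∈ Qfil σ F W q m := by
            rw [hw₁w]; exact sub_mem hwQ (hMwinQ hμ')
          refine Submodule.mem_inf.mpr ⟨Submodule.mem_inf.mpr ⟨?_, ?_⟩, hw₁⟩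
          · exact Pfil_inf_W σ F W hMHS p m (Submodule.mem_inf.mpr ⟨hw₁P, hw₁⟩)
          · exact Qfil_inf_W σ F W hσ hMHS q m (Submodule.mem_inf.mpr ⟨hw₁Q, hw₁⟩)
        refine ⟨i, hi, μ + μ', add_mem hμ (hMwinM hμ'), ?_⟩
        have hidx : n - 1 - ((l + 1 : ℕ) : ℤ) = m - 1 := by push_cast; omega
        rw [hidx]
        have hfin : σ v - i - (μ + μ') = w₁ := by
          have h := hμw
          calc σ v - i - (μ + μ') = (σ v - i - μ) - μ' := by abel
          _ = (μ' + w₁) - μ' := by rw [h]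
          _ = w₁ := by abel
        rw [hfin]
        exact hw₁mem
  -- conclude
  intro x hx
  obtain ⟨v, hv, rfl⟩ := hx
  obtain ⟨i, hi, μ, hμ, hw⟩ := key ((n - 1 - aW).toNat) v hv
  have hbot : W (n - 1 - (((n - 1 - aW).toNat : ℕ) : ℤ)) = ⊥ :=
    le_bot_iff.mp (haW ▸ hWmono (by omega))
  have hw0 : σ v - i - μ = 0 := by
    have := (Submodule.mem_inf.mp hw).2
    rw [hbot] at this
    exact (Submodule.mem_bot ℂ).mp this
  have : σ v = i + μ := by
    have h := hw0
    calc σ v = (σ v - i - μ) + i + μ := by abel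
    _ = i + μ := by rw [h]; abel
  rw [this]
  exact Submodule.add_mem_sup hi hμ

end Conj

end MHS

/-- Every mixed Hodge structure `(F,W)` admits a unique bigrading
`{I^{p,q}}` with `I^{p,q} ≡ conj(I^{q,p}) mod ⊕_{r<p,s<q} I^{r,s}`. -/
theorem stmt_1 [FiniteDimensional ℂ V] [Module ℚ V] [IsScalarTower ℚ ℂ V]
    (σ : V →ₛₗ[starRingEnd ℂ] V) (hσ : ∀ v, σ (σ v) = v)
    (VQ : Submodule ℚ V)
    (hQform : ∃ s : Set V, span ℚ s = VQ ∧ LinearIndependent ℂ ((↑) : s → V) ∧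
      span ℂ s = ⊤)
    (hfix : ∀ v ∈ VQ, σ v = v)
    (F W : ℤ → Submodule ℂ V)
    (hWQ : ∀ k : ℤ, W k = span ℂ ((W k : Set V) ∩ (VQ : Set V)))
    (hMHS : IsMHS σ F W) :
    ∃! I : ℤ → ℤ → Submodule ℂ V, IsDeligne σ F W I := by
  classical
  have hWmono := MHS.stepW_mono hMHS.2.1.1
  have hFanti := MHS.stepF_anti hMHS.1.1
  obtain ⟨aW, haW⟩ := hMHS.2.1.2.1
  set I : ℤ → ℤ → Submodule ℂ V := MHS.Ipq σ F W with hIdef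
  have hC1 : ∀ a b : ℤ, (I a b).map σ ≤ I b a ⊔ lowPart I b a := fun a b =>
    MHS.mapσ_Ipq_le σ F W hσ hMHS a b
  have hbig : IsBigrading F W I :=
    ⟨MHS.Ipq_isInternal σ F W hσ hMHS, fun p => MHS.F_span σ F W hσ hMHS p,
      fun k => MHS.W_span σ F W hσ hMHS k⟩
  have hcongr : ∀ p q : ℤ, I p q ⊔ lowPart I p q = (I q p).map σ ⊔ lowPart I p q := by
    intro p q
    apply le_antisymm
    · refine sup_le ?_ le_sup_right
      have h1 : I p q = ((I p q).map σ).map σ := (MHS.map_map_σ σ hσ _).symm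
      rw [h1]
      refine le_trans (Submodule.map_mono (hC1 p q)) ?_
      rw [Submodule.map_sup]
      refine sup_le le_sup_left (le_sup_of_le_right ?_)
      show (⨆ (rs : ℤ × ℤ) (_ : rs.1 < q ∧ rs.2 < p), I rs.1 rs.2).map σ ≤ lowPart I p q
      rw [Submodule.map_iSup]
      refine iSup_le fun rs => ?_
      rw [Submodule.map_iSup]
      refine iSup_le fun hrs => ?_
      refine le_trans (hC1 rs.1 rs.2) (sup_le ?_ ?_)
      · exact le_iSup_of_le (rs.2, rs.1) (le_iSup_of_le ⟨hrs.2, hrs.1⟩ le_rfl)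
      · refine iSup_le fun rs' => iSup_le fun hrs' => ?_
        exact le_iSup_of_le rs' (le_iSup_of_le ⟨by omega, by omega⟩ le_rfl)
    · exact sup_le (hC1 q p) le_sup_right
  refine ⟨I, ⟨hbig, hcongr⟩, ?_⟩
  rintro J ⟨⟨hJint, hJF, hJW⟩, hJc⟩
  have hJF' : ∀ a b : ℤ, J a b ≤ F a := fun a b => by
    rw [hJF a]; exact le_iSup_of_le (a, b) (le_iSup_of_le le_rfl le_rfl)
  have hJW' : ∀ a b : ℤ, J a b ≤ W (a + b) := fun a b => by
    rw [hJW (a + b)]; exact le_iSup_of_le (a, b) (le_iSup_of_le le_rfl le_rfl)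
  have hJc' : ∀ a b : ℤ, J a b ≤ (J b a).map σ ⊔ lowPart J a b := fun a b =>
    le_trans le_sup_left (le_of_eq (hJc a b))
  -- J ≤ I
  have hJle : ∀ p q : ℤ, J p q ≤ I p q := by
    intro p q
    have sub : ∀ l : ℕ, ∀ r s : ℤ, r < p → s < q → r + s ≤ aW + l → J r s ≤
        ⨆ j : ℕ, (F (q - 1 - (j : ℤ)) ⊓ W (p + q - 2 - (j : ℤ))).map σ := by
      intro l
      induction l with
      | zero =>
          intro r s hr hs hrs
          refine le_trans (hJW' r s) (le_trans (hWmono (show r + s ≤ aW by omega)) ?_)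
          rw [haW]; exact bot_le
      | succ l ih =>
          intro r s hr hs hrs
          rcases le_or_gt (r + s) (aW + (l : ℤ)) with h | h
          · exact ih r s hr hs h
          · refine le_trans (hJc' r s) (sup_le ?_ ?_)
            · set j0 : ℕ := (p + q - 2 - (r + s)).toNat with hj0def
              have hj0 : (j0 : ℤ) = p + q - 2 - (r + s) := by omega
              refine le_trans (Submodule.map_mono (le_inf (hJF' s r) (hJW' s r))) ?_
              refine le_trans (Submodule.map_mono (inf_le_inf (hFanti ?_)
                (le_of_eq (congrArg W ?_)))) (le_iSup
                  (fun j : ℕ => (F (q - 1 - (j : ℤ)) ⊓ W (p + q - 2 - (j : ℤ))).map σ) j0)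
              · omega
              · omega
            · refine iSup_le fun rs => iSup_le fun hrs' => ?_
              exact ih rs.1 rs.2 (by omega) (by omega) (by omega)
    have hmain : J p q ≤ MHS.Lf σ F W q (p + q) := by
      refine le_trans (hJc' p q) (sup_le ?_ ?_)
      · refine le_trans (Submodule.map_mono (le_inf (hJF' q p) (hJW' q p))) ?_
        have h : (F q ⊓ W (q + p)).map σ = (F q ⊓ W (p + q)).map σ := by
          rw [show q + p = p + q by ring]
        rw [h]
        exact MHS.Lf_main σ F W q (p + q)
      · refine le_trans ?_ (le_sup_right :
          (⨆ j : ℕ, (F (q - 1 - (j : ℤ)) ⊓ W (p + q - 2 - (j : ℤ))).map σ) ≤ MHS.Lf σ F W q (p + q))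
        refine iSup_le fun rs => iSup_le fun hrs => ?_
        exact sub ((rs.1 + rs.2 - aW).toNat) rs.1 rs.2 hrs.1 hrs.2 (by omega)
    show J p q ≤ F p ⊓ W (p + q) ⊓ MHS.Lf σ F W q (p + q)
    exact le_inf (le_inf (hJF' p q) (hJW' p q)) hmain
  -- conclude J = I
  funext p q
  apply le_antisymm (hJle p q)
  intro v hv
  have hvtop : v ∈ ⨆ rs : ℤ × ℤ, J rs.1 rs.2 := by
    rw [hJint.submodule_iSup_eq_top]; exact Submodule.mem_top
  obtain ⟨f, hf, hsum⟩ :=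
    (Submodule.mem_iSup_iff_exists_finsupp (fun rs : ℤ × ℤ => J rs.1 rs.2) v).mp hvtop
  have hsum' : ∑ rs ∈ f.support, f rs = v := hsum
  have hdiff : v - f (p, q) = ∑ rs ∈ f.support.erase (p, q), f rs := by
    by_cases hmem : (p, q) ∈ f.support
    · rw [← hsum', ← Finset.add_sum_erase f.support f hmem]
      abel
    · rw [Finsupp.notMem_support_iff.mp hmem, sub_zero, Finset.erase_eq_of_notMem hmem]
      exact hsum'.symm
  have hd1 : v - f (p, q) ∈ I p q :=
    sub_mem hv (hJle p q (hf (p, q)))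
  have hd2 : v - f (p, q) ∈ ⨆ (rs : ℤ × ℤ) (_ : rs ≠ (p, q)), I rs.1 rs.2 := by
    rw [hdiff]
    refine Submodule.sum_mem _ fun rs hrs => ?_
    exact Submodule.mem_iSup_of_mem rs (Submodule.mem_iSup_of_mem
      (Finset.ne_of_mem_erase hrs) (hJle rs.1 rs.2 (hf rs)))
  have hdisj := iSupIndep_def.mp (MHS.Ipq_iSupIndep σ F W hσ hMHS) (p, q)
  have hz : v - f (p, q) = 0 := by
    have := hdisj.eq_bot ▸ Submodule.mem_inf.mpr ⟨hd1, hd2⟩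
    exact (Submodule.mem_bot ℂ).mp this
  have : v = f (p, q) := by
    have h := hz
    calc v = (v - f (p, q)) + f (p, q) := by abel
    _ = f (p, q) := by rw [h]; abel
  rw [this]
  exact hf (p, q)
end
end

section
/- Let V be a finite-dimensional complex vector space and W a finite increasing exhaustive filtration of V. Then the unipotent group exp(Lie_{-1}) acts simply transitively on the set of all gradings of W: for every grading Y of W and every g ∈ exp(Lie_{-1}), the conjugate g Y g^{-1} is again a grading of W, and for any two gradings Y, Y' of W there exists a unique g ∈ exp(Lie_{-1}) such that Y' = g Y g^{-1}. -/
open Submodule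

noncomputable section

variable {V : Type*} [AddCommGroup V] [Module ℂ V]

/-- The subspace of `End(V)` of endomorphisms mapping `P` into `Q`. -/
def mapsInto (P Q : Submodule ℂ V) : Submodule ℂ (Module.End ℂ V) where
  carrier := {α | ∀ v ∈ P, α v ∈ Q}
  add_mem' := by
    intro a b ha hb v hv
    have h : (a + b) v = a v + b v := rfl
    rw [h]
    exact Q.add_mem (ha v hv) (hb v hv)
  zero_mem' := by
    intro v hv
    show (0 : Module.End ℂ V) v ∈ Q
    simp
  smul_mem' := by
    intro c a ha v hv
    have h : (c • a) v = c • a v := rfl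
    rw [h]
    exact Q.smul_mem c (ha v hv)

/-- Conjugation on `End(V)` induced by the conjugation `σ` of `V`:
`α ↦ σ ∘ α ∘ σ`. -/
def conjEnd (σ : V →ₛₗ[starRingEnd ℂ] V) (α : Module.End ℂ V) : Module.End ℂ V where
  toFun v := σ (α (σ v))
  map_add' x y := by simp
  map_smul' c v := by simp [map_smulₛₗ]

/-- Conjugation on `End(V)` as an antilinear map. -/
def conjEndSL (σ : V →ₛₗ[starRingEnd ℂ] V) :
    Module.End ℂ V →ₛₗ[starRingEnd ℂ] Module.End ℂ V where
  toFun := conjEnd σ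
  map_add' α β := by
    ext v
    simp [conjEnd]
  map_smul' c α := by
    ext v
    simp [conjEnd]

/-- `gl(V)^{r,s}` relative to a bigrading `I` of `V`: endomorphisms with
`α(I^{p,q}) ⊆ I^{p+r,q+s}` for all `p, q`. -/
def endShiftI (I : ℤ → ℤ → Submodule ℂ V) (r s : ℤ) : Submodule ℂ (Module.End ℂ V) :=
  ⨅ pq : ℤ × ℤ, mapsInto (I pq.1 pq.2) (I (pq.1 + r) (pq.2 + s))

/-- The exponential of a (nilpotent) endomorphism of a finite-dimensional space,
as the truncated exponential series. -/
def expEnd [FiniteDimensional ℂ V] (α : Module.End ℂ V) : Module.End ℂ V :=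
  ∑ i ∈ Finset.range (Module.finrank ℂ V + 1), ((i.factorial : ℂ)⁻¹) • α ^ i

/-- The nilpotent ideal `Lie_{-1} = {α : α(W_k) ⊆ W_{k-1} for all k}`. -/
def LieNeg (W : ℤ → Submodule ℂ V) : Submodule ℂ (Module.End ℂ V) :=
  ⨅ k : ℤ, mapsInto (W k) (W (k - 1))

/-- `Y` is a grading of the increasing filtration `W`: it is semisimple with integer
eigenvalues and `W_k = W_{k-1} ⊕ E_k(Y)` for every `k`. -/
def IsGrading (W : ℤ → Submodule ℂ V) (Y : Module.End ℂ V) : Prop :=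
  (⨆ k : ℤ, Module.End.eigenspace Y (k : ℂ)) = ⊤ ∧
  ∀ k : ℤ, W k = W (k - 1) ⊔ Module.End.eigenspace Y (k : ℂ) ∧
    W (k - 1) ⊓ Module.End.eigenspace Y (k : ℂ) = ⊥

namespace StmtAux

open Polynomial Finset

variable {W : ℤ → Submodule ℂ V}

theorem mem_mapsInto {P Q : Submodule ℂ V} {α : Module.End ℂ V} :
    α ∈ mapsInto P Q ↔ ∀ v ∈ P, α v ∈ Q := Iff.rfl

/-- Generalized filtration degree on `End V`. -/
def F (W : ℤ → Submodule ℂ V) (m : ℕ) : Submodule ℂ (Module.End ℂ V) :=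
  ⨅ k : ℤ, mapsInto (W k) (W (k - m))

theorem mem_F {m : ℕ} {α : Module.End ℂ V} :
    α ∈ F W m ↔ ∀ k : ℤ, ∀ v ∈ W k, α v ∈ W (k - m) := by
  simp [F, Submodule.mem_iInf, mem_mapsInto]

theorem mem_LieNeg {α : Module.End ℂ V} :
    α ∈ LieNeg W ↔ ∀ k : ℤ, ∀ v ∈ W k, α v ∈ W (k - 1) := by
  simp [LieNeg, Submodule.mem_iInf, mem_mapsInto]

theorem LieNeg_eq_F1 : LieNeg W = F W 1 := by
  unfold LieNeg F
  norm_num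

theorem F_le (hW : IsIncFilt W) {m m' : ℕ} (h : m ≤ m') : F W m' ≤ F W m := by
  have hmono := monotone_int_of_le_succ hW.1
  intro α hα
  rw [mem_F] at *
  intro k v hv
  exact hmono (by omega) (hα k v hv)

theorem F_mul {m m' : ℕ} {α β : Module.End ℂ V}
    (hα : α ∈ F W m) (hβ : β ∈ F W m') : α * β ∈ F W (m + m') := by
  rw [mem_F] at *
  intro k v hv
  have h2 := hα _ _ (hβ k v hv)
  rw [Module.End.mul_apply]
  have he : k - ↑m' - ↑m = k - ↑(m + m') := by push_cast; ring
  rwa [he] at h2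

theorem F_bot (hW : IsIncFilt W) {a b : ℤ} (ha : W a = ⊥) (hb : W b = ⊤) {m : ℕ}
    (hm : b - a ≤ (m : ℤ)) : F W m = ⊥ := by
  have hmono := monotone_int_of_le_succ hW.1
  rw [eq_bot_iff]
  intro α hα
  rw [Submodule.mem_bot]
  ext v
  have hv : v ∈ W b := hb ▸ Submodule.mem_top
  have h2 : α v ∈ W a := hmono (by omega) (mem_F.mp hα b v hv)
  rw [ha, Submodule.mem_bot] at h2
  simpa using h2

theorem F_pow {α : Module.End ℂ V} (hα : α ∈ F W 1) : ∀ i : ℕ, α ^ (i + 1) ∈ F W (i + 1) := by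
  intro i
  induction i with
  | zero => simpa using hα
  | succ i ih =>
    rw [pow_succ]
    exact F_mul ih hα

theorem LieNeg_pow (hW : IsIncFilt W) {α : Module.End ℂ V} (hα : α ∈ LieNeg W) (i : ℕ) :
    α ^ (i + 1) ∈ LieNeg W := by
  rw [LieNeg_eq_F1] at *
  exact F_le hW (by omega) (F_pow hα i)

theorem LieNeg_mul (hW : IsIncFilt W) {α β : Module.End ℂ V}
    (hα : α ∈ LieNeg W) (hβ : β ∈ LieNeg W) : α * β ∈ LieNeg W := by
  rw [LieNeg_eq_F1] at *
  exact F_le hW (by omega) (F_mul hα hβ)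

theorem LieNeg_pow_eq_zero [FiniteDimensional ℂ V] (hW : IsIncFilt W) {α : Module.End ℂ V}
    (hα : α ∈ LieNeg W) : α ^ (Module.finrank ℂ V + 1) = 0 := by
  obtain ⟨_, ⟨a, ha⟩, ⟨b, hb⟩⟩ := hW
  have hW' : IsIncFilt W := ⟨‹_›, ⟨a, ha⟩, ⟨b, hb⟩⟩
  set m : ℕ := (b - a).toNat with hm
  have h1 : α ^ (m + 1) ∈ F W (m + 1) := F_pow (by rw [← LieNeg_eq_F1]; exact hα) m
  have h2 : F W (m + 1) = ⊥ := F_bot hW' ha hb (by omega)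
  rw [h2, Submodule.mem_bot] at h1
  have h3 : LinearMap.ker (α ^ (m + 1)) = ⊤ := by rw [h1]; exact LinearMap.ker_zero
  have h4 : LinearMap.ker (α ^ Module.finrank ℂ V) = ⊤ :=
    top_le_iff.mp (h3 ▸ Module.End.ker_pow_le_ker_pow_finrank α (m + 1))
  have h5 : α ^ Module.finrank ℂ V = 0 := LinearMap.ker_eq_top.mp h4
  rw [pow_succ, h5, zero_mul]

end StmtAux
namespace StmtAux
open Polynomial Finset

/-- Truncated exponential polynomial. -/
def ep (n : ℕ) : Polynomial ℂ :=
  ∑ i ∈ Finset.range (n + 1), Polynomial.monomial i ((i.factorial : ℂ)⁻¹)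

/-- Truncated exponential polynomial with sign. -/
def epn (n : ℕ) : Polynomial ℂ :=
  ∑ i ∈ Finset.range (n + 1), Polynomial.monomial i ((-1) ^ i * (i.factorial : ℂ)⁻¹)

theorem ep_coeff (n i : ℕ) :
    (ep n).coeff i = if i ≤ n then (i.factorial : ℂ)⁻¹ else 0 := by
  rw [ep, finset_sum_coeff]
  simp only [coeff_monomial]
  rw [Finset.sum_ite_eq' (Finset.range (n + 1)) i fun j => (j.factorial : ℂ)⁻¹]
  simp [Nat.lt_succ_iff]

theorem epn_coeff (n i : ℕ) :
    (epn n).coeff i = if i ≤ n then (-1) ^ i * (i.factorial : ℂ)⁻¹ else 0 := by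
  rw [epn, finset_sum_coeff]
  simp only [coeff_monomial]
  rw [Finset.sum_ite_eq' (Finset.range (n + 1)) i fun j => ((-1 : ℂ)) ^ j * (j.factorial : ℂ)⁻¹]
  simp [Nat.lt_succ_iff]

theorem aeval_ep [FiniteDimensional ℂ V] (α : Module.End ℂ V) :
    Polynomial.aeval α (ep (Module.finrank ℂ V)) = expEnd α := by
  rw [ep, map_sum, expEnd]
  refine Finset.sum_congr rfl fun i _ => ?_
  rw [aeval_monomial, ← Algebra.smul_def]

theorem aeval_epn [FiniteDimensional ℂ V] (α : Module.End ℂ V) :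
    Polynomial.aeval α (epn (Module.finrank ℂ V)) = expEnd (-α) := by
  rw [epn, map_sum, expEnd]
  refine Finset.sum_congr rfl fun i _ => ?_
  rw [aeval_monomial, ← Algebra.smul_def]
  have hneg : (-α) ^ i = ((-1 : ℂ) ^ i) • α ^ i := by
    rw [← _root_.smul_pow, neg_one_smul]
  rw [hneg, smul_smul, mul_comm]

theorem sum_alt (d : ℕ) (hd : d ≠ 0) :
    ∑ i ∈ Finset.range (d + 1),
      (i.factorial : ℂ)⁻¹ * ((-1) ^ (d - i) * ((d - i).factorial : ℂ)⁻¹) = 0 := by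
  have step1 : ∀ i ∈ Finset.range (d + 1),
      (i.factorial : ℂ)⁻¹ * ((-1) ^ (d - i) * ((d - i).factorial : ℂ)⁻¹) =
      ((-1) ^ d * (d.factorial : ℂ)⁻¹) * ((-1) ^ i * (d.choose i)) := by
    intro i hi
    have hi' : i ≤ d := by simpa [Nat.lt_succ_iff] using hi
    have hC : ((d.choose i : ℂ)) * (i.factorial : ℂ) * ((d - i).factorial : ℂ)
        = (d.factorial : ℂ) := by
      exact_mod_cast congrArg (Nat.cast : ℕ → ℂ)
        (Nat.choose_mul_factorial_mul_factorial hi')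
    have hsgn : ((-1 : ℂ)) ^ (d - i) * (-1) ^ i = (-1) ^ d := by
      rw [← pow_add]
      congr 1
      omega
    have hsq : ((-1 : ℂ)) ^ i * (-1) ^ i = 1 := by
      rw [← pow_add, ← two_mul, pow_mul]
      norm_num
    have hfi : (i.factorial : ℂ) ≠ 0 := Nat.cast_ne_zero.mpr i.factorial_ne_zero
    have hfd : (d.factorial : ℂ) ≠ 0 := Nat.cast_ne_zero.mpr d.factorial_ne_zero
    have hfdi : ((d - i).factorial : ℂ) ≠ 0 := Nat.cast_ne_zero.mpr (d - i).factorial_ne_zero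
    field_simp
    linear_combination (-(-1:ℂ)^(d-i)) * hC
      + ((-1:ℂ)^i * (d.choose i : ℂ) * (i.factorial : ℂ) * ((d-i).factorial : ℂ)) * hsgn
      + (-(-1:ℂ)^(d-i) * (d.choose i : ℂ) * (i.factorial : ℂ) * ((d-i).factorial : ℂ)) * hsq
  rw [Finset.sum_congr rfl step1, ← Finset.mul_sum]
  have halt : ∑ i ∈ Finset.range (d + 1), ((-1 : ℂ)) ^ i * (d.choose i) = 0 := by
    have := Int.alternating_sum_range_choose_of_ne hd
    exact_mod_cast congrArg (Int.cast : ℤ → ℂ) this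
  rw [halt, mul_zero]

theorem ep_mul_epn (n : ℕ) : ∃ R : Polynomial ℂ,
    ep n * epn n = 1 + Polynomial.X ^ (n + 1) * R := by
  have hdvd : Polynomial.X ^ (n + 1) ∣ (ep n * epn n - 1) := by
    rw [Polynomial.X_pow_dvd_iff]
    intro d hd
    rw [coeff_sub, coeff_mul, Finset.Nat.sum_antidiagonal_eq_sum_range_succ_mk]
    rcases Nat.eq_zero_or_pos d with h0 | hpos
    · subst h0
      simp [ep_coeff, epn_coeff]
    · have hdn : d ≤ n := by omega
      have hone : (1 : Polynomial ℂ).coeff d = 0 := by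
        rw [coeff_one]
        simp [Nat.pos_iff_ne_zero.mp hpos]
      rw [hone, sub_zero]
      have hterm : ∀ i ∈ Finset.range (d + 1),
          (ep n).coeff i * (epn n).coeff (d - i) =
          (i.factorial : ℂ)⁻¹ * ((-1) ^ (d - i) * ((d - i).factorial : ℂ)⁻¹) := by
        intro i hi
        have hi' : i ≤ d := by simpa [Nat.lt_succ_iff] using hi
        rw [ep_coeff, epn_coeff, if_pos (by omega), if_pos (by omega)]
      rw [Finset.sum_congr rfl hterm, sum_alt d (Nat.pos_iff_ne_zero.mp hpos)]
  obtain ⟨R, hR⟩ := hdvd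
  exact ⟨R, by linear_combination hR⟩

theorem expEnd_mul_expEnd_neg [FiniteDimensional ℂ V] {α : Module.End ℂ V}
    (h : α ^ (Module.finrank ℂ V + 1) = 0) : expEnd α * expEnd (-α) = 1 := by
  rw [← aeval_ep, ← aeval_epn, ← map_mul]
  obtain ⟨R, hR⟩ := ep_mul_epn (Module.finrank ℂ V)
  rw [hR, map_add, map_one, map_mul, map_pow, Polynomial.aeval_X, h, zero_mul, add_zero]

theorem expEnd_zero [FiniteDimensional ℂ V] : expEnd (0 : Module.End ℂ V) = 1 := by
  rw [expEnd]
  rw [Finset.sum_eq_single 0]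
  · simp
  · intro i _ hi
    rw [zero_pow hi, smul_zero]
  · simp

end StmtAux
namespace StmtAux
open Polynomial Finset

variable {W : ℤ → Submodule ℂ V}

theorem expEnd_one_add [FiniteDimensional ℂ V] (hW : IsIncFilt W) {α : Module.End ℂ V}
    (hα : α ∈ LieNeg W) : ∃ n ∈ LieNeg W, expEnd α = 1 + n := by
  refine ⟨∑ i ∈ Finset.range (Module.finrank ℂ V),
      (((i + 1).factorial : ℂ)⁻¹) • α ^ (i + 1), ?_, ?_⟩
  · exact Submodule.sum_mem _ fun i _ =>
      Submodule.smul_mem _ _ (LieNeg_pow hW hα i)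
  · rw [expEnd, Finset.sum_range_succ']
    simp [add_comm]

/-- Successive approximation: `expEnd` hits `1 + n` modulo arbitrarily deep filtration. -/
theorem exp_approx [FiniteDimensional ℂ V] (hW : IsIncFilt W) (hN : 1 ≤ Module.finrank ℂ V)
    (m : ℕ) : ∀ n ∈ LieNeg W, ∃ α ∈ LieNeg W, (1 + n) - expEnd α ∈ F W (m + 1) := by
  induction m with
  | zero =>
    intro n hn
    refine ⟨0, Submodule.zero_mem _, ?_⟩
    rw [expEnd_zero]
    simpa [← LieNeg_eq_F1] using hn
  | succ m ih =>
    intro n hn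
    obtain ⟨α, hα, he⟩ := ih n hn
    set e : Module.End ℂ V := (1 + n) - expEnd α with hedef
    have hα1 : α ∈ F W 1 := by rwa [← LieNeg_eq_F1]
    have he1 : e ∈ F W 1 := F_le hW (by omega) he
    have hαe : α + e ∈ F W 1 := Submodule.add_mem _ hα1 he1
    -- d0 : all power differences lie in F (m+1)
    have d0 : ∀ i : ℕ, (α + e) ^ i - α ^ i ∈ F W (m + 1) := by
      intro i
      induction i with
      | zero => simpa using Submodule.zero_mem _
      | succ i ih0 =>
        have key : (α + e) ^ (i + 1) - α ^ (i + 1) =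
            ((α + e) ^ i - α ^ i) * (α + e) + α ^ i * e := by
          rw [pow_succ, pow_succ]
          noncomm_ring
        rw [key]
        refine Submodule.add_mem _ ?_ ?_
        · exact F_le hW (by omega) (F_mul ih0 hαe)
        · rcases Nat.eq_zero_or_pos i with h0 | hpos
          · subst h0; simpa using he
          · obtain ⟨i', rfl⟩ : ∃ i', i = i' + 1 := ⟨i - 1, by omega⟩
            have h1 : α ^ (i' + 1) ∈ F W 1 := F_le hW (by omega) (F_pow hα1 i')
            have h2 : α ^ (i' + 1) * e ∈ F W (1 + (m + 1)) := F_mul h1 he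
            exact F_le hW (by omega) h2
    -- d2 : power differences for exponents ≥ 2 lie in F (m+2)
    have d2 : ∀ i : ℕ, (α + e) ^ (i + 2) - α ^ (i + 2) ∈ F W (m + 2) := by
      intro i
      have key : (α + e) ^ (i + 2) - α ^ (i + 2) =
          ((α + e) ^ (i + 1) - α ^ (i + 1)) * (α + e) + α ^ (i + 1) * e := by
        rw [pow_succ, pow_succ]
        noncomm_ring
      rw [key]
      refine Submodule.add_mem _ ?_ ?_
      · exact F_le hW (by omega) (F_mul (d0 (i + 1)) hαe)
      · have h1 : α ^ (i + 1) * e ∈ F W (1 + (m + 1)) :=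
          F_mul (F_le hW (by omega) (F_pow hα1 i)) he
        exact F_le hW (by omega) h1
    refine ⟨α + e, by rw [LieNeg_eq_F1]; exact hαe, ?_⟩
    obtain ⟨N', hN'⟩ : ∃ N', Module.finrank ℂ V = N' + 1 := ⟨Module.finrank ℂ V - 1, by omega⟩
    have hexp : expEnd (α + e) - expEnd α =
        ∑ i ∈ Finset.range (Module.finrank ℂ V + 1),
          ((i.factorial : ℂ)⁻¹) • ((α + e) ^ i - α ^ i) := by
      rw [expEnd, expEnd, ← Finset.sum_sub_distrib]
      exact Finset.sum_congr rfl fun i _ => (smul_sub _ _ _).symm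
    have hsplit : expEnd (α + e) - expEnd α =
        (∑ i ∈ Finset.range N', (((i + 2).factorial : ℂ)⁻¹) • ((α + e) ^ (i + 2) - α ^ (i + 2)))
          + e := by
      rw [hexp, hN']
      rw [Finset.sum_range_succ' (fun i => ((i.factorial : ℂ)⁻¹) • ((α + e) ^ i - α ^ i)) (N' + 1),
        Finset.sum_range_succ' (fun i => (((i + 1).factorial : ℂ)⁻¹) • ((α + e) ^ (i + 1) - α ^ (i + 1))) N']
      simp [add_sub_cancel_left]
    have hgoal : (1 + n) - expEnd (α + e) =
        -(∑ i ∈ Finset.range N', (((i + 2).factorial : ℂ)⁻¹) • ((α + e) ^ (i + 2) - α ^ (i + 2))) := by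
      have h2 : expEnd (α + e) = expEnd α +
          ((∑ i ∈ Finset.range N', (((i + 2).factorial : ℂ)⁻¹) • ((α + e) ^ (i + 2) - α ^ (i + 2))) + e) := by
        rw [← hsplit]; abel
      rw [h2, hedef]
      abel
    rw [hgoal]
    exact Submodule.neg_mem _ (Submodule.sum_mem _ fun i _ => Submodule.smul_mem _ _ (d2 i))

theorem exp_surj [FiniteDimensional ℂ V] (hW : IsIncFilt W) {n : Module.End ℂ V}
    (hn : n ∈ LieNeg W) : ∃ α ∈ LieNeg W, expEnd α = 1 + n := by
  rcases subsingleton_or_nontrivial V with hV | hV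
  · have : Subsingleton (Module.End ℂ V) := ⟨fun f g => LinearMap.ext fun v => Subsingleton.elim _ _⟩
    exact ⟨0, Submodule.zero_mem _, Subsingleton.elim _ _⟩
  · have hN : 1 ≤ Module.finrank ℂ V := Module.finrank_pos
    obtain ⟨_, ⟨a, ha⟩, ⟨b, hb⟩⟩ := hW
    have hW' : IsIncFilt W := ⟨‹_›, ⟨a, ha⟩, ⟨b, hb⟩⟩
    set m : ℕ := (b - a).toNat with hm
    obtain ⟨α, hα, herr⟩ := exp_approx hW' hN m n hn
    have hbot : F W (m + 1) = ⊥ := F_bot hW' ha hb (by omega)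
    rw [hbot, Submodule.mem_bot, sub_eq_zero] at herr
    exact ⟨α, hα, herr.symm⟩

end StmtAux
namespace StmtAux
open Polynomial Finset

variable {W : ℤ → Submodule ℂ V}

/-- Extend a pointwise membership property from a spanning family. -/
theorem forall_mem_of_iSup_eq_top {p : ℤ → Submodule ℂ V}
    (h : (⨆ j : ℤ, p j) = ⊤) {f : Module.End ℂ V} {q : Submodule ℂ V}
    (hf : ∀ j : ℤ, ∀ v ∈ p j, f v ∈ q) (v : V) : f v ∈ q := by
  have hle : (⊤ : Submodule ℂ V) ≤ q.comap f := by
    rw [← h]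
    exact iSup_le fun j w hw => Submodule.mem_comap.mpr (hf j w hw)
  exact Submodule.mem_comap.mp (hle Submodule.mem_top)

theorem end_eq_of_iSup {p : ℤ → Submodule ℂ V}
    (h : (⨆ j : ℤ, p j) = ⊤) {f g : Module.End ℂ V}
    (hf : ∀ j : ℤ, ∀ v ∈ p j, f v = g v) : f = g := by
  ext v
  have h0 : (f - g) v ∈ (⊥ : Submodule ℂ V) := by
    refine forall_mem_of_iSup_eq_top h (fun j w hw => ?_) v
    rw [LinearMap.sub_apply, hf j w hw, sub_self]
    exact Submodule.zero_mem _
  rw [Submodule.mem_bot] at h0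
  have := sub_eq_zero.mp (by simpa [LinearMap.sub_apply] using h0)
  exact this

section Grading

variable {Y : Module.End ℂ V}

theorem grading_E_le_W (hY : IsGrading W Y) (k : ℤ) :
    Module.End.eigenspace Y (k : ℂ) ≤ W k :=
  (hY.2 k).1 ▸ le_sup_right

theorem grading_W_le_iSup (hW : IsIncFilt W) {a : ℤ} (ha : W a = ⊥)
    (hY : IsGrading W Y) (k : ℤ) :
    W k ≤ ⨆ j : ℤ, ⨆ _ : j ≤ k, Module.End.eigenspace Y (j : ℂ) := by
  have hmono := monotone_int_of_le_succ hW.1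
  set S : ℤ → Submodule ℂ V :=
    fun k => ⨆ j : ℤ, ⨆ _ : j ≤ k, Module.End.eigenspace Y (j : ℂ) with hS
  have hSmono : ∀ {k l : ℤ}, k ≤ l → S k ≤ S l := by
    intro k l hkl
    exact iSup₂_le fun j hj => le_iSup₂_of_le j (hj.trans hkl) le_rfl
  rcases le_total k a with hka | hak
  · intro v hv
    have : v ∈ (⊥ : Submodule ℂ V) := ha ▸ hmono hka hv
    rw [Submodule.mem_bot] at this
    simp [this, Submodule.zero_mem]
  · refine Int.le_induction
      (motive := fun n _ => W n ≤ ⨆ j : ℤ, ⨆ _ : j ≤ n, Module.End.eigenspace Y (j : ℂ)) ?_ ?_ k hak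
    · show W a ≤ _
      rw [ha]; exact bot_le
    · intro n _ ih
      show W (n+1) ≤ _
      have hstep : W (n + 1) = W n ⊔ Module.End.eigenspace Y ((n + 1 : ℤ) : ℂ) := by
        have := (hY.2 (n + 1)).1
        simpa using this
      rw [hstep]
      refine sup_le (ih.trans (hSmono (by omega))) ?_
      exact le_iSup₂_of_le (n + 1) le_rfl le_rfl

theorem grading_E_eq_bot_of_not_mem (hW : IsIncFilt W) {a b : ℤ}
    (ha : W a = ⊥) (hb : W b = ⊤) (hY : IsGrading W Y) {j : ℤ}
    (hj : j ∉ Finset.Icc (a + 1) b) : Module.End.eigenspace Y (j : ℂ) = ⊥ := by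
  have hmono := monotone_int_of_le_succ hW.1
  rw [Finset.mem_Icc, not_and_or] at hj
  rcases hj with hj | hj
  · push_neg at hj
    have h1 : Module.End.eigenspace Y (j : ℂ) ≤ W a :=
      (grading_E_le_W hY j).trans (hmono (by omega))
    rw [ha] at h1
    exact le_bot_iff.mp h1
  · push_neg at hj
    have h2 := (hY.2 j).2
    have htop : W (j - 1) = ⊤ := by
      rw [eq_top_iff, ← hb]
      exact hmono (by omega)
    rwa [htop, top_inf_eq] at h2

end Grading

section Projectors

variable {a b : ℤ}

/-- The spectral projector of a grading onto the `k`-eigenspace, as a polynomial in `Y`. -/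
def proj (a b : ℤ) (Y : Module.End ℂ V) (k : ℤ) : Module.End ℂ V :=
  Polynomial.aeval Y (Lagrange.basis (Finset.Icc (a + 1) b) (fun j : ℤ => (j : ℂ)) k)

theorem castInjOn (s : Finset ℤ) : Set.InjOn (fun j : ℤ => (j : ℂ)) s :=
  fun x _ y _ h => Int.cast_injective h

theorem aeval_apply_eig {Y : Module.End ℂ V} {μ : ℂ} {v : V}
    (hv : v ∈ Module.End.eigenspace Y μ) (p : Polynomial ℂ) :
    Polynomial.aeval Y p v = p.eval μ • v := by
  by_cases h0 : v = 0
  · simp [h0]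
  · exact Module.End.aeval_apply_of_hasEigenvector ⟨hv, h0⟩

theorem proj_apply_self {Y : Module.End ℂ V} {k : ℤ} (hk : k ∈ Finset.Icc (a + 1) b)
    {v : V} (hv : v ∈ Module.End.eigenspace Y (k : ℂ)) : proj a b Y k v = v := by
  rw [proj, aeval_apply_eig hv, Lagrange.eval_basis_self (castInjOn _) hk, one_smul]

theorem proj_apply_ne {Y : Module.End ℂ V} {k j : ℤ} (hjk : k ≠ j)
    (hj : j ∈ Finset.Icc (a + 1) b)
    {v : V} (hv : v ∈ Module.End.eigenspace Y (j : ℂ)) : proj a b Y k v = 0 := by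
  rw [proj, aeval_apply_eig hv, Lagrange.eval_basis_of_ne hjk hj, zero_smul]

variable (hW : IsIncFilt W) (ha : W a = ⊥) (hb : W b = ⊤)

include hW ha hb in
theorem proj_apply_eig {Y : Module.End ℂ V} (hY : IsGrading W Y) {k j : ℤ}
    {v : V} (hv : v ∈ Module.End.eigenspace Y (j : ℂ)) :
    proj a b Y k v = if j = k ∧ j ∈ Finset.Icc (a + 1) b then v else 0 := by
  by_cases hj : j ∈ Finset.Icc (a + 1) b
  · by_cases hjk : j = k
    · subst hjk
      rw [if_pos ⟨rfl, hj⟩, proj_apply_self hj hv]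
    · rw [if_neg (by tauto), proj_apply_ne (Ne.symm hjk) hj hv]
  · have : v = 0 := by
      have := grading_E_eq_bot_of_not_mem hW ha hb hY hj ▸ hv
      simpa using this
    simp [this]

include hW ha hb in
theorem proj_mem_eigenspace {Y : Module.End ℂ V} (hY : IsGrading W Y) (k : ℤ) (w : V) :
    proj a b Y k w ∈ Module.End.eigenspace Y (k : ℂ) := by
  refine forall_mem_of_iSup_eq_top hY.1 (fun j v hv => ?_) w
  rw [proj_apply_eig hW ha hb hY hv]
  split_ifs with h
  · rcases h with ⟨rfl, _⟩; exact hv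
  · exact Submodule.zero_mem _

include hW ha hb in
theorem sum_proj {Y : Module.End ℂ V} (hY : IsGrading W Y) :
    ∑ k ∈ Finset.Icc (a + 1) b, proj a b Y k = 1 := by
  refine end_eq_of_iSup hY.1 (fun j v hv => ?_)
  rw [LinearMap.sum_apply, Module.End.one_apply]
  by_cases hj : j ∈ Finset.Icc (a + 1) b
  · rw [Finset.sum_eq_single j]
    · exact proj_apply_self hj hv
    · intro k hk hkj
      exact proj_apply_ne hkj hj hv
    · intro h; exact absurd hj h
  · have : v = 0 := by
      have := grading_E_eq_bot_of_not_mem hW ha hb hY hj ▸ hv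
      simpa using this
    simp [this]

include hW ha hb in
theorem proj_eq_zero_on_W {Y : Module.End ℂ V} (hY : IsGrading W Y) {k j : ℤ}
    (hjk : j < k) {v : V} (hv : v ∈ W j) : proj a b Y k v = 0 := by
  have h1 : W j ≤ LinearMap.ker (proj a b Y k) := by
    refine (grading_W_le_iSup hW ha hY j).trans ?_
    refine iSup₂_le fun l hl => ?_
    intro w hw
    rw [LinearMap.mem_ker]
    by_cases hls : l ∈ Finset.Icc (a + 1) b
    · exact proj_apply_ne (by omega) hls hw
    · have : w = 0 := by
        have := grading_E_eq_bot_of_not_mem hW ha hb hY hls ▸ hw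
        simpa using this
      simp [this]
  exact LinearMap.mem_ker.mp (h1 hv)

end Projectors

end StmtAux
namespace StmtAux
open Polynomial Finset

variable {W : ℤ → Submodule ℂ V} {a b : ℤ}

section Intertwiner

/-- The canonical intertwiner between two gradings. -/
def inter (a b : ℤ) (Y Y' : Module.End ℂ V) : Module.End ℂ V :=
  ∑ k ∈ Finset.Icc (a + 1) b, proj a b Y' k * proj a b Y k

variable (hW : IsIncFilt W) (ha : W a = ⊥) (hb : W b = ⊤)
variable {Y Y' : Module.End ℂ V}

theorem inter_apply_eig {j : ℤ} (hj : j ∈ Finset.Icc (a + 1) b)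
    {v : V} (hv : v ∈ Module.End.eigenspace Y (j : ℂ)) :
    inter a b Y Y' v = proj a b Y' j v := by
  rw [inter, LinearMap.sum_apply]
  rw [Finset.sum_eq_single j]
  · rw [Module.End.mul_apply, proj_apply_self hj hv]
  · intro k _ hkj
    rw [Module.End.mul_apply, proj_apply_ne hkj hj hv, map_zero]
  · intro h; exact absurd hj h

include hW ha hb in
theorem inter_comm (hY : IsGrading W Y) (hY' : IsGrading W Y') :
    inter a b Y Y' * Y = Y' * inter a b Y Y' := by
  refine end_eq_of_iSup hY.1 (fun j v hv => ?_)
  have hYv : Y v = (j : ℂ) • v := Module.End.mem_eigenspace_iff.mp hv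
  rw [Module.End.mul_apply, Module.End.mul_apply, hYv, map_smul]
  by_cases hj : j ∈ Finset.Icc (a + 1) b
  · have h1 : inter a b Y Y' v = proj a b Y' j v := inter_apply_eig hj hv
    have h2 : inter a b Y Y' v ∈ Module.End.eigenspace Y' (j : ℂ) :=
      h1 ▸ proj_mem_eigenspace hW ha hb hY' j v
    rw [Module.End.mem_eigenspace_iff.mp h2]
  · have h0 : v = 0 := by
      have := grading_E_eq_bot_of_not_mem hW ha hb hY hj ▸ hv
      simpa using this
    simp [h0]

include hW ha hb in
theorem inter_sub_one_mem (hY : IsGrading W Y) (hY' : IsGrading W Y') :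
    inter a b Y Y' - 1 ∈ LieNeg W := by
  have hmono := monotone_int_of_le_succ hW.1
  rw [mem_LieNeg]
  intro k v hv
  have hle : W k ≤ Submodule.comap (inter a b Y Y' - 1) (W (k - 1)) := by
    refine (grading_W_le_iSup hW ha hY k).trans (iSup₂_le fun j hj => ?_)
    intro w hw
    rw [Submodule.mem_comap, LinearMap.sub_apply, Module.End.one_apply]
    by_cases hjs : j ∈ Finset.Icc (a + 1) b
    · rw [inter_apply_eig hjs hw]
      have hsum : ∑ i ∈ Finset.Icc (a + 1) b, proj a b Y' i w = w := by
        have h1 : (∑ i ∈ Finset.Icc (a + 1) b, proj a b Y' i) w = (1 : Module.End ℂ V) w := by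
          rw [sum_proj hW ha hb hY']
        rwa [LinearMap.sum_apply, Module.End.one_apply] at h1
      have hkey : proj a b Y' j w - w =
          -∑ i ∈ (Finset.Icc (a + 1) b).erase j, proj a b Y' i w := by
        have h2 : proj a b Y' j w + ∑ i ∈ (Finset.Icc (a + 1) b).erase j, proj a b Y' i w
            = w := by
          exact (Finset.add_sum_erase _ (fun i => proj a b Y' i w) hjs).trans hsum
        have h3 := congrArg (fun x => proj a b Y' j w - x) h2
        rw [← h3]
        abel
      rw [hkey]
      refine Submodule.neg_mem _ (Submodule.sum_mem _ fun i hi => ?_)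
      rw [Finset.mem_erase] at hi
      rcases lt_or_gt_of_ne hi.1 with hij | hij
      · -- i < j : lands in W i ≤ W (k - 1)
        have h3 : proj a b Y' i w ∈ W i :=
          grading_E_le_W hY' i (proj_mem_eigenspace hW ha hb hY' i w)
        exact hmono (by omega) h3
      · -- i > j : vanishes on W j
        have hw' : w ∈ W j := grading_E_le_W hY j hw
        rw [proj_eq_zero_on_W hW ha hb hY' hij hw']
        exact Submodule.zero_mem _
    · have h0 : w = 0 := by
        have := grading_E_eq_bot_of_not_mem hW ha hb hY hjs ▸ hw
        simpa using this
      simp [h0, Submodule.zero_mem]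
  exact Submodule.mem_comap.mp (hle hv)

end Intertwiner

section Conj

variable {g g' : Module.End ℂ V} {Y : Module.End ℂ V}

theorem inj_of_inv (hg'g : g' * g = 1) : Function.Injective g := by
  intro x y h
  have h2 : g' (g x) = g' (g y) := congrArg g' h
  rw [← Module.End.mul_apply, ← Module.End.mul_apply, hg'g, Module.End.one_apply,
    Module.End.one_apply] at h2
  exact h2

theorem surj_of_inv (hgg' : g * g' = 1) : Function.Surjective g := by
  intro w
  exact ⟨g' w, by rw [← Module.End.mul_apply, hgg', Module.End.one_apply]⟩

theorem eig_conj (hgg' : g * g' = 1) (hg'g : g' * g = 1) (c : ℂ) :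
    Module.End.eigenspace (g * Y * g') c = Submodule.map g (Module.End.eigenspace Y c) := by
  ext w
  rw [Module.End.mem_eigenspace_iff, Submodule.mem_map]
  constructor
  · intro hw
    refine ⟨g' w, ?_, ?_⟩
    · rw [Module.End.mem_eigenspace_iff]
      have h1 : g' ((g * Y * g') w) = g' (c • w) := congrArg g' hw
      rw [map_smul] at h1
      calc Y (g' w) = ((g' * g) * Y * g') w := by
            rw [hg'g]; simp [Module.End.mul_apply]
        _ = g' ((g * Y * g') w) := by simp [Module.End.mul_apply, mul_assoc]
        _ = c • g' w := h1
    · rw [← Module.End.mul_apply, hgg', Module.End.one_apply]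
  · rintro ⟨v, hv, rfl⟩
    have hYv : Y v = c • v := Module.End.mem_eigenspace_iff.mp hv
    have hg'gv : g' (g v) = v := by
      rw [← Module.End.mul_apply, hg'g, Module.End.one_apply]
    rw [Module.End.mul_apply, Module.End.mul_apply, hg'gv, hYv, map_smul]

theorem map_W_eq (hW : IsIncFilt W) (hgg' : g * g' = 1)
    {n n' : Module.End ℂ V} (hn : n ∈ LieNeg W) (hg : g = 1 + n)
    (hn' : n' ∈ LieNeg W) (hg' : g' = 1 + n') (k : ℤ) :
    Submodule.map g (W k) = W k := by
  have hmono := monotone_int_of_le_succ hW.1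
  have happ : ∀ (h : Module.End ℂ V) (m : Module.End ℂ V), m ∈ LieNeg W → h = 1 + m →
      ∀ v ∈ W k, h v ∈ W k := by
    intro h m hm heq v hv
    rw [heq, LinearMap.add_apply, Module.End.one_apply]
    exact Submodule.add_mem _ hv (hmono (by omega) (mem_LieNeg.mp hm k v hv))
  apply le_antisymm
  · rintro w hw
    rw [Submodule.mem_map] at hw
    obtain ⟨v, hv, rfl⟩ := hw
    exact happ g n hn hg v hv
  · intro v hv
    rw [Submodule.mem_map]
    refine ⟨g' v, happ g' n' hn' hg' v hv, ?_⟩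
    rw [← Module.End.mul_apply, hgg', Module.End.one_apply]

theorem conj_grading [FiniteDimensional ℂ V] (hW : IsIncFilt W) (hY : IsGrading W Y)
    {α : Module.End ℂ V} (hα : α ∈ LieNeg W) :
    IsGrading W (expEnd α * Y * expEnd (-α)) := by
  set g := expEnd α with hgdef
  set g' := expEnd (-α) with hg'def
  have hgg' : g * g' = 1 := expEnd_mul_expEnd_neg (LieNeg_pow_eq_zero hW hα)
  have hg'g : g' * g = 1 := by
    have := expEnd_mul_expEnd_neg (LieNeg_pow_eq_zero hW (Submodule.neg_mem _ hα))
    rwa [neg_neg] at this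
  obtain ⟨n, hn, hg1⟩ := expEnd_one_add hW hα
  obtain ⟨n', hn', hg1'⟩ := expEnd_one_add hW (Submodule.neg_mem _ hα)
  have hWmap : ∀ k, Submodule.map g (W k) = W k :=
    map_W_eq hW hgg' hn hg1 hn' hg1'
  have heig : ∀ c : ℂ, Module.End.eigenspace (g * Y * g') c
      = Submodule.map g (Module.End.eigenspace Y c) := eig_conj hgg' hg'g
  constructor
  · simp_rw [heig]
    rw [← Submodule.map_iSup, hY.1, Submodule.map_top, LinearMap.range_eq_top]
    exact surj_of_inv hgg'
  · intro k
    constructor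
    · rw [heig, ← hWmap (k - 1), ← Submodule.map_sup, ← (hY.2 k).1, hWmap k]
    · rw [heig, ← hWmap (k - 1), ← Submodule.map_inf g (inj_of_inv hg'g), (hY.2 k).2,
        Submodule.map_bot]

end Conj

end StmtAux
namespace StmtAux
open Polynomial Finset

variable {W : ℤ → Submodule ℂ V} {Y Y' : Module.End ℂ V}

theorem unip_comm_eq_one (hW : IsIncFilt W) (hY : IsGrading W Y)
    {h n : Module.End ℂ V} (hn : n ∈ LieNeg W) (hh : h = 1 + n)
    (hcomm : h * Y = Y * h) : h = 1 := by
  refine end_eq_of_iSup hY.1 (fun j v hv => ?_)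
  rw [Module.End.one_apply]
  have hYv : Y v = (j : ℂ) • v := Module.End.mem_eigenspace_iff.mp hv
  have hhv : h v ∈ Module.End.eigenspace Y (j : ℂ) := by
    rw [Module.End.mem_eigenspace_iff]
    calc Y (h v) = (Y * h) v := rfl
      _ = (h * Y) v := by rw [hcomm]
      _ = h (Y v) := rfl
      _ = (j : ℂ) • h v := by rw [hYv, map_smul]
  have hnv1 : n v ∈ Module.End.eigenspace Y (j : ℂ) := by
    have : n v = h v - v := by rw [hh]; simp [LinearMap.add_apply]
    rw [this]
    exact Submodule.sub_mem _ hhv hv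
  have hnv2 : n v ∈ W (j - 1) :=
    mem_LieNeg.mp hn j v (grading_E_le_W hY j hv)
  have hbot : n v ∈ (⊥ : Submodule ℂ V) := (hY.2 j).2 ▸ Submodule.mem_inf.mpr ⟨hnv2, hnv1⟩
  rw [Submodule.mem_bot] at hbot
  rw [hh, LinearMap.add_apply, Module.End.one_apply, hbot, add_zero]

theorem conj_unique [FiniteDimensional ℂ V] (hW : IsIncFilt W)
    (hY : IsGrading W Y) {α1 α2 : Module.End ℂ V}
    (hα1 : α1 ∈ LieNeg W) (hc1 : expEnd α1 * Y = Y' * expEnd α1)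
    (hα2 : α2 ∈ LieNeg W) (hc2 : expEnd α2 * Y = Y' * expEnd α2) :
    expEnd α1 = expEnd α2 := by
  set g1 := expEnd α1 with hg1def
  set g2 := expEnd α2 with hg2def
  set g2' := expEnd (-α2) with hg2'def
  have hgg' : g2 * g2' = 1 := expEnd_mul_expEnd_neg (LieNeg_pow_eq_zero hW hα2)
  have hg'g : g2' * g2 = 1 := by
    have := expEnd_mul_expEnd_neg (LieNeg_pow_eq_zero hW (Submodule.neg_mem _ hα2))
    rwa [neg_neg] at this
  set h : Module.End ℂ V := g2' * g1 with hhdef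
  have key : g2' * Y' = Y * g2' := by
    calc g2' * Y' = g2' * Y' * (g2 * g2') := by rw [hgg', mul_one]
      _ = g2' * (Y' * g2) * g2' := by noncomm_ring
      _ = g2' * (g2 * Y) * g2' := by rw [← hc2]
      _ = (g2' * g2) * (Y * g2') := by noncomm_ring
      _ = Y * g2' := by rw [hg'g, one_mul]
  have hcomm : h * Y = Y * h := by
    calc h * Y = g2' * (g1 * Y) := by rw [hhdef, mul_assoc]
      _ = g2' * (Y' * g1) := by rw [hc1]
      _ = (g2' * Y') * g1 := by rw [mul_assoc]
      _ = (Y * g2') * g1 := by rw [key]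
      _ = Y * h := by rw [hhdef, mul_assoc]
  obtain ⟨n1, hn1, hg1e⟩ := expEnd_one_add hW hα1
  obtain ⟨n2, hn2, hg2e⟩ := expEnd_one_add hW (Submodule.neg_mem _ hα2)
  have hh : h = 1 + (n2 + n1 + n2 * n1) := by
    rw [hhdef, hg1def, hg2'def, hg1e, hg2e]
    noncomm_ring
  have hn : n2 + n1 + n2 * n1 ∈ LieNeg W :=
    Submodule.add_mem _ (Submodule.add_mem _ hn2 hn1) (LieNeg_mul hW hn2 hn1)
  have hone : h = 1 := unip_comm_eq_one hW hY hn hh hcomm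
  calc g1 = (g2 * g2') * g1 := by rw [hgg', one_mul]
    _ = g2 * h := by rw [hhdef, mul_assoc]
    _ = g2 := by rw [hone, mul_one]

end StmtAux

/-- The unipotent group `exp(Lie_{-1})` acts simply transitively on the
set of gradings of `W`: conjugating a grading by `exp(α)`, `α ∈ Lie_{-1}`, yields a
grading, and any two gradings are conjugate by a unique element of `exp(Lie_{-1})`. -/
theorem stmt_4 [FiniteDimensional ℂ V]
    (W : ℤ → Submodule ℂ V) (hW : IsIncFilt W) :
    (∀ Y : Module.End ℂ V, IsGrading W Y → ∀ α ∈ LieNeg W,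
        IsGrading W (expEnd α * Y * expEnd (-α))) ∧
    ∀ Y Y' : Module.End ℂ V, IsGrading W Y → IsGrading W Y' →
      ∃! g : Module.End ℂ V, (∃ α ∈ LieNeg W, g = expEnd α) ∧ g * Y = Y' * g := by
  constructor
  · intro Y hY α hα
    exact StmtAux.conj_grading hW hY hα
  · intro Y Y' hY hY'
    obtain ⟨hstep, ⟨a, ha⟩, ⟨b, hb⟩⟩ := hW
    have hW' : IsIncFilt W := ⟨hstep, ⟨a, ha⟩, ⟨b, hb⟩⟩
    have h1 : StmtAux.inter a b Y Y' - 1 ∈ LieNeg W :=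
      StmtAux.inter_sub_one_mem hW' ha hb hY hY'
    obtain ⟨α, hα, hexp⟩ := StmtAux.exp_surj hW' h1
    have hg : expEnd α = StmtAux.inter a b Y Y' := by rw [hexp]; abel
    refine ⟨expEnd α, ⟨⟨α, hα, rfl⟩, ?_⟩, ?_⟩
    · rw [hg]
      exact StmtAux.inter_comm hW' ha hb hY hY'
    · rintro g2 ⟨⟨α2, hα2, rfl⟩, hc2⟩
      refine StmtAux.conj_unique hW' hY hα2 hc2 hα ?_
      rw [hg]
      exact StmtAux.inter_comm hW' ha hb hY hY'
end
end

section
/- Let V be a finite-dimensional complex vector space and N_+, N_-, Y endomorphisms of V satisfying the sl_2(ℂ)-commutator relations [Y, N_+] = 2N_+, [Y, N_-] = -2N_-, and [N_+, N_-] = Y (i.e. V is a finite-dimensional representation of sl_2(ℂ) with N_± = ρ(n_±), Y = ρ(y) the images of the standard generators). Then Y is diagonalizable with integer eigenvalues, N_- is nilpotent, and the monodromy weight filtration of N_- is given by W(N_-)_k = ⊕_{j≤k} E_j(Y), where E_j(Y) is the j-eigenspace of Y. -/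
set_option linter.unusedSectionVars false
set_option linter.unusedTactic false
set_option maxHeartbeats 1000000

open Submodule Module Set

namespace Sl2Aux

variable {V : Type*} [AddCommGroup V] [Module ℂ V]

section Basic

variable (Np Nm Y : Module.End ℂ V)

/-- generic shift identity: if `Y * g = g * Y + c • g` then `(Y - (μ+c)•1) * g = g * (Y - μ•1)`. -/
lemma shift_op {g : Module.End ℂ V} {c : ℂ} (h : Y * g - g * Y = c • g) (μ : ℂ) :
    (Y - (μ + c) • 1) * g = g * (Y - μ • 1) := by
  have h' : Y * g = g * Y + c • g := by linear_combination (norm := module) h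
  rw [sub_mul, mul_sub, h']
  simp only [smul_mul_assoc, mul_smul_comm, one_mul, mul_one]
  module

lemma shift_op_pow {g : Module.End ℂ V} {c : ℂ} (h : Y * g - g * Y = c • g) (μ : ℂ) (n : ℕ) :
    (Y - (μ + c) • 1) ^ n * g = g * (Y - μ • 1) ^ n := by
  have : SemiconjBy g (Y - μ • 1) (Y - (μ + c) • 1) := (shift_op Y h μ).symm
  exact (this.pow_right n).symm

lemma mapsTo_maxGen {g : Module.End ℂ V} {c : ℂ} (h : Y * g - g * Y = c • g) (μ : ℂ) :
    MapsTo g (Y.maxGenEigenspace μ) (Y.maxGenEigenspace (μ + c)) := by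
  intro v hv
  rw [SetLike.mem_coe, Module.End.mem_maxGenEigenspace] at hv ⊢
  obtain ⟨k, hk⟩ := hv
  refine ⟨k, ?_⟩
  have := congrArg (fun (f : Module.End ℂ V) => f v) (shift_op_pow Y h μ k)
  simp only [Module.End.mul_apply] at this
  rw [this, hk, map_zero]

lemma mapsTo_eigenspace {g : Module.End ℂ V} {c : ℂ} (h : Y * g - g * Y = c • g) (μ : ℂ)
    {v : V} (hv : Y v = μ • v) : Y (g v) = (μ + c) • (g v) := by
  have h' : Y * g = g * Y + c • g := by linear_combination (norm := module) h
  have := congrArg (fun (f : Module.End ℂ V) => f v) h'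
  simp only [Module.End.mul_apply, LinearMap.add_apply, LinearMap.smul_apply] at this
  rw [hv, map_smul] at this
  rw [this]
  module

end Basic

section Triple

variable (Np Nm Y : Module.End ℂ V)
variable (h1 : Y * Np - Np * Y = (2 : ℂ) • Np)
variable (h2 : Y * Nm - Nm * Y = (-2 : ℂ) • Nm)
variable (h3 : Np * Nm - Nm * Np = Y)

include h1 h2 h3

/-- the key sl2 identity: `Np ∘ Nm^{k+1} = Nm^{k+1} ∘ Np + (k+1) Nm^k (Y - k)`, pointwise. -/
lemma NpNm_pow (k : ℕ) (v : V) :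
    Np ((Nm ^ (k+1)) v) = (Nm ^ (k+1)) (Np v)
      + ((k : ℂ) + 1) • ((Nm ^ k) (Y v)) - (((k : ℂ) + 1) * (k : ℂ)) • ((Nm ^ k) v) := by
  induction k generalizing v with
  | zero =>
      have := congrArg (fun (f : Module.End ℂ V) => f v) h3
      simp only [Module.End.mul_apply, LinearMap.sub_apply] at this
      have h3' : Np (Nm v) = Nm (Np v) + Y v := by linear_combination (norm := module) this
      simp only [zero_add, pow_one, pow_zero, Module.End.one_apply, Nat.cast_zero]
      rw [h3']
      module
  | succ k ih =>
      have hp : ∀ w : V, (Nm ^ (k+1+1)) w = (Nm ^ (k+1)) (Nm w) := by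
        intro w; rw [pow_succ, Module.End.mul_apply]
      have hp1 : ∀ w : V, (Nm ^ (k+1)) w = (Nm ^ k) (Nm w) := by
        intro w; rw [pow_succ, Module.End.mul_apply]
      rw [show ((Nm ^ (k+1+1)) v) = (Nm ^ (k+1)) (Nm v) from hp v, ih (Nm v)]
      -- now handle Np (Nm v), Y (Nm v)
      have e3 := congrArg (fun (f : Module.End ℂ V) => f v) h3
      simp only [Module.End.mul_apply, LinearMap.sub_apply] at e3
      have h3' : Np (Nm v) = Nm (Np v) + Y v := by linear_combination (norm := module) e3
      have e2 := congrArg (fun (f : Module.End ℂ V) => f v) h2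
      simp only [Module.End.mul_apply, LinearMap.sub_apply] at e2
      have h2' : Y (Nm v) = Nm (Y v) - (2 : ℂ) • Nm v := by
        rw [LinearMap.smul_apply] at e2
        linear_combination (norm := module) e2
      rw [h3', h2', map_add]
      have ha : (Nm ^ (k+1+1)) (Np v) = (Nm ^ (k+1)) (Nm (Np v)) := hp (Np v)
      have hb : (Nm ^ (k+1)) (Y v) = (Nm ^ k) (Nm (Y v)) := hp1 (Y v)
      have hc : (Nm ^ (k+1)) v = (Nm ^ k) (Nm v) := hp1 v
      rw [ha, hb, hc]
      simp only [map_sub, map_smul]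
      push_cast
      module

end Triple

section Chunk2




section Basic

variable (Np Nm Y : Module.End ℂ V)

lemma comm_mul {g g' : Module.End ℂ V} {c : ℂ}
    (hg : Y * g - g * Y = c • g) (hg' : Y * g' - g' * Y = (-c) • g') :
    Y * (g * g') = (g * g') * Y := by
  have e1 : Y * g = g * Y + c • g := by linear_combination (norm := module) hg
  have e2 : Y * g' = g' * Y + (-c) • g' := by linear_combination (norm := module) hg'
  calc Y * (g * g') = (Y * g) * g' := by rw [mul_assoc]
    _ = (g * Y + c • g) * g' := by rw [e1]
    _ = g * (Y * g') + c • (g * g') := by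
        rw [add_mul, smul_mul_assoc, mul_assoc]
    _ = g * (g' * Y + (-c) • g') + c • (g * g') := by rw [e2]
    _ = (g * g') * Y := by
        rw [mul_add, mul_smul_comm, ← mul_assoc]
        module

/-- extraction of a true eigenvector from an invariant subspace on which `f - c` is
pointwise nilpotent. -/
lemma exists_eigvec (W : Submodule ℂ V) (f : Module.End ℂ V) (c : ℂ)
    (hf : MapsTo f W W) :
    ∀ (m : ℕ) (w : V), w ∈ W → w ≠ 0 → ((f - c • 1) ^ m) w = 0 →
      ∃ u, u ∈ W ∧ u ≠ 0 ∧ f u = c • u := by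
  intro m
  induction m with
  | zero =>
      intro w hw hw0 h
      rw [pow_zero, Module.End.one_apply] at h
      exact absurd h hw0
  | succ m ih =>
      intro w hw hw0 h
      by_cases hw' : (f - c • 1) w = 0
      · refine ⟨w, hw, hw0, ?_⟩
        have : f w - c • w = 0 := by
          simpa [LinearMap.sub_apply, LinearMap.smul_apply] using hw'
        linear_combination (norm := module) this
      · have hw'W : (f - c • 1) w ∈ W := by
          have : (f - c • 1) w = f w - c • w := by
            simp [LinearMap.sub_apply, LinearMap.smul_apply]
          rw [this]
          exact sub_mem (hf hw) (smul_mem _ _ hw)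
        have hm : ((f - c • 1) ^ m) ((f - c • 1) w) = 0 := by
          rw [← Module.End.mul_apply, ← pow_succ]
          exact h
        exact ih _ hw'W hw' hm

end Basic

section FD

variable [FiniteDimensional ℂ V]
variable (Np Nm Y : Module.End ℂ V)

lemma exists_maxGen_bot (μ d : ℂ) (hd : d ≠ 0) :
    ∃ s : ℕ, Y.maxGenEigenspace (μ + d * (s : ℂ)) = ⊥ := by
  by_contra hcon
  push_neg at hcon
  have hinj : Function.Injective (fun s : ℕ => μ + d * (s : ℂ)) := by
    intro a b hab
    simp only at hab
    have hd' : d * (a : ℂ) = d * b := by linear_combination hab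
    have := mul_left_cancel₀ hd hd'
    exact_mod_cast this
  have hsub : Set.range (fun s : ℕ => μ + d * (s : ℂ)) ⊆ {μ' | Y.HasEigenvalue μ'} := by
    rintro - ⟨s, rfl⟩
    have hne := hcon s
    rw [Submodule.ne_bot_iff] at hne
    obtain ⟨v, hv, hv0⟩ := hne
    rw [Module.End.mem_maxGenEigenspace] at hv
    obtain ⟨k, hk⟩ := hv
    have := exists_eigvec (⊤ : Submodule ℂ V) Y (μ + d * s) (fun x _ => Submodule.mem_top) k v
      Submodule.mem_top hv0 hk
    obtain ⟨u, -, hu0, huY⟩ := this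
    exact Module.End.hasEigenvalue_of_hasEigenvector ⟨Module.End.mem_genEigenspace_one.mpr huY, hu0⟩
  have : Set.Finite (Set.range (fun s : ℕ => μ + d * (s : ℂ))) :=
    Y.finite_hasEigenvalue.subset hsub
  exact (Set.infinite_range_of_injective hinj) this

lemma mapsTo_maxGen_pow {g : Module.End ℂ V} {c : ℂ} (h : Y * g - g * Y = c • g) (μ : ℂ) :
    ∀ (k : ℕ) (v : V), v ∈ Y.maxGenEigenspace μ → (g ^ k) v ∈ Y.maxGenEigenspace (μ + c * k) := by
  intro k
  induction k with
  | zero => intro v hv; simpa using hv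
  | succ k ih =>
      intro v hv
      have h1 : (g ^ (k+1)) v = g ((g ^ k) v) := by rw [pow_succ', Module.End.mul_apply]
      rw [h1]
      have := mapsTo_maxGen Y h (μ + c * k) (ih v hv)
      have heq : μ + c * (k : ℂ) + c = μ + c * ((k : ℕ) + 1 : ℕ) := by push_cast; ring
      rwa [heq] at this

lemma exists_pow_zero {g : Module.End ℂ V} {c : ℂ} (h : Y * g - g * Y = c • g) (hc : c ≠ 0) :
    ∃ K : ℕ, ∀ v : V, (g ^ K) v = 0 := by
  classical
  have hfin : Set.Finite {μ : ℂ | Y.maxGenEigenspace μ ≠ ⊥} := by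
    apply Y.finite_hasEigenvalue.subset
    intro μ hμ
    rw [Set.mem_setOf_eq, Submodule.ne_bot_iff] at hμ
    obtain ⟨v, hv, hv0⟩ := hμ
    rw [Module.End.mem_maxGenEigenspace] at hv
    obtain ⟨k, hk⟩ := hv
    obtain ⟨u, -, hu0, huY⟩ := exists_eigvec (⊤ : Submodule ℂ V) Y μ
      (fun x _ => Submodule.mem_top) k v Submodule.mem_top hv0 hk
    exact Module.End.hasEigenvalue_of_hasEigenvector ⟨Module.End.mem_genEigenspace_one.mpr huY, hu0⟩
  have hch : ∀ μ : ℂ, ∃ s : ℕ, Y.maxGenEigenspace (μ + c * (s : ℂ)) = ⊥ := fun μ =>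
    exists_maxGen_bot Y μ c hc
  choose sfun hsfun using hch
  set T := hfin.toFinset with hT
  refine ⟨(T.sup sfun) , ?_⟩
  set K := T.sup sfun with hK
  have key : ∀ (μ : ℂ) (v : V), v ∈ Y.maxGenEigenspace μ → (g ^ K) v = 0 := by
    intro μ v hv
    by_cases hμ : Y.maxGenEigenspace μ = ⊥
    · rw [hμ] at hv; rw [Submodule.mem_bot] at hv; rw [hv, map_zero]
    · have hμT : μ ∈ T := by rw [hT, Set.Finite.mem_toFinset]; exact hμ
      have hle : sfun μ ≤ K := Finset.le_sup hμT
      have h0 : (g ^ (sfun μ)) v = 0 := by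
        have := mapsTo_maxGen_pow Y h μ (sfun μ) v hv
        rw [hsfun μ] at this
        simpa using this
      obtain ⟨t, ht⟩ := Nat.exists_eq_add_of_le hle
      rw [ht, add_comm, pow_add, Module.End.mul_apply, h0, map_zero]
  -- now use that the generalized eigenspaces span
  intro v
  have hv : v ∈ ⨆ μ : ℂ, Y.maxGenEigenspace μ := by
    rw [Module.End.iSup_maxGenEigenspace_eq_top]; trivial
  refine Submodule.iSup_induction _ (motive := fun v => (g ^ K) v = 0) hv (fun μ v hv => key μ v hv)
    (map_zero _) ?_
  intro x y hx hy
  rw [map_add, hx, hy, add_zero]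

end FD

end Chunk2

section Chunk3

section NegLemmas

variable (Y : Module.End ℂ V)

lemma neg_pow_apply_eq_zero (B : Module.End ℂ V) (k : ℕ) (v : V) :
    ((-B) ^ k) v = 0 ↔ (B ^ k) v = 0 := by
  rcases Nat.even_or_odd k with he | ho
  · rw [he.neg_pow]
  · rw [ho.neg_pow, LinearMap.neg_apply, neg_eq_zero]

lemma maxGen_neg (μ : ℂ) : (-Y).maxGenEigenspace (-μ) = Y.maxGenEigenspace μ := by
  ext v
  simp only [Module.End.mem_maxGenEigenspace]
  have hop : (-Y - (-μ) • (1 : Module.End ℂ V)) = -(Y - μ • 1) := by module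
  rw [hop]
  exact exists_congr fun k => neg_pow_apply_eq_zero _ _ _

lemma eigenspace_neg (μ : ℂ) : (-Y).eigenspace (-μ) = Y.eigenspace μ := by
  ext v
  simp only [Module.End.eigenspace, Module.End.mem_genEigenspace_one, LinearMap.neg_apply,
    neg_smul, neg_inj]

end NegLemmas

section Swap

variable (Np Nm Y : Module.End ℂ V)

lemma swap_h1 (h2 : Y * Nm - Nm * Y = (-2 : ℂ) • Nm) :
    (-Y) * Nm - Nm * (-Y) = (2 : ℂ) • Nm := by
  simp only [neg_mul, mul_neg]
  linear_combination (norm := module) -h2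

lemma swap_h2 (h1 : Y * Np - Np * Y = (2 : ℂ) • Np) :
    (-Y) * Np - Np * (-Y) = (-2 : ℂ) • Np := by
  simp only [neg_mul, mul_neg]
  linear_combination (norm := module) -h1

lemma swap_h3 (h3 : Np * Nm - Nm * Np = Y) :
    Nm * Np - Np * Nm = -Y := by
  linear_combination (norm := module) -h3

end Swap

section LemK

variable [FiniteDimensional ℂ V]
variable (Np Nm Y : Module.End ℂ V)
variable (h1 : Y * Np - Np * Y = (2 : ℂ) • Np)
variable (h2 : Y * Nm - Nm * Y = (-2 : ℂ) • Nm)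
variable (h3 : Np * Nm - Nm * Np = Y)

include h1 h2 h3

lemma lemK_aux : ∀ (s : ℕ) (μ : ℂ) (v : V) (κ : ℂ),
    Y.maxGenEigenspace (μ + 2 * (s : ℂ)) = ⊥ → v ∈ Y.maxGenEigenspace μ → v ≠ 0 →
    Nm (Np v) = κ • v → ∃ r : ℕ, κ = r * (μ + r + 1) := by
  intro s
  induction s with
  | zero =>
      intro μ v κ hbot hv hv0 _
      rw [Nat.cast_zero, mul_zero, add_zero] at hbot
      rw [hbot, Submodule.mem_bot] at hv
      exact absurd hv hv0
  | succ s ih =>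
      intro μ v κ hbot hv hv0 hκ
      by_cases hκ0 : κ = 0
      · exact ⟨0, by simp [hκ0]⟩
      · have hw0 : Np v ≠ 0 := by
          intro hNp
          apply hκ0
          have : κ • v = 0 := by rw [← hκ, hNp, map_zero]
          rcases smul_eq_zero.mp this with h | h
          · exact h
          · exact absurd h hv0
        have hwmem : Np v ∈ Y.maxGenEigenspace (μ + 2) := mapsTo_maxGen Y h1 μ hv
        -- the subspace W = ker (Np∘Nm - κ) ⊓ maxGen (μ+2)
        set W := LinearMap.ker (Np * Nm - κ • (1 : Module.End ℂ V)) ⊓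
          Y.maxGenEigenspace (μ + 2) with hW
        have hcomm : Y * (Np * Nm) = (Np * Nm) * Y := comm_mul Y h1 h2
        have hYW : Set.MapsTo Y W W := by
          intro u hu
          rw [SetLike.mem_coe, hW, Submodule.mem_inf] at hu ⊢
          obtain ⟨hu1, hu2⟩ := hu
          constructor
          · rw [LinearMap.mem_ker] at hu1 ⊢
            have : ((Np * Nm - κ • 1) * Y) u = (Y * (Np * Nm - κ • 1)) u := by
              congr 1
              rw [sub_mul, mul_sub, hcomm, smul_mul_assoc, mul_smul_comm, one_mul, mul_one]
            rw [Module.End.mul_apply] at this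
            rw [this, Module.End.mul_apply, hu1, map_zero]
          · exact Module.End.mapsTo_maxGenEigenspace_of_comm (Commute.refl Y) _ hu2
        have hwW : Np v ∈ W := by
          rw [hW, Submodule.mem_inf]
          refine ⟨?_, hwmem⟩
          rw [LinearMap.mem_ker, LinearMap.sub_apply, Module.End.mul_apply, LinearMap.smul_apply,
            Module.End.one_apply, hκ, map_smul, sub_self]
        have hnil : ((Y - (μ + 2) • 1) ^ (Module.finrank ℂ V)) (Np v) = 0 := by
          have := hwmem
          rw [Y.maxGenEigenspace_eq_genEigenspace_finrank, Module.End.mem_genEigenspace_nat,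
            LinearMap.mem_ker] at this
          exact this
        obtain ⟨u, huW, hu0, huY⟩ := exists_eigvec W Y (μ + 2) hYW (Module.finrank ℂ V)
          (Np v) hwW hw0 hnil
        rw [hW, Submodule.mem_inf] at huW
        obtain ⟨huker, humem⟩ := huW
        -- Nm (Np u) = (κ - (μ+2)) • u
        have e3 := congrArg (fun (f : Module.End ℂ V) => f u) h3
        simp only [Module.End.mul_apply, LinearMap.sub_apply] at e3
        rw [LinearMap.mem_ker, LinearMap.sub_apply, Module.End.mul_apply, LinearMap.smul_apply,
          Module.End.one_apply, sub_eq_zero] at huker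
        have hNmNp : Nm (Np u) = (κ - (μ + 2)) • u := by
          rw [huY, huker] at e3
          linear_combination (norm := module) -e3
        have hbot' : Y.maxGenEigenspace ((μ + 2) + 2 * (s : ℂ)) = ⊥ := by
          have : (μ + 2) + 2 * (s : ℂ) = μ + 2 * ((s + 1 : ℕ) : ℂ) := by push_cast; ring
          rw [this]
          exact hbot
        obtain ⟨r, hr⟩ := ih (μ + 2) u (κ - (μ + 2)) hbot' humem hu0 hNmNp
        refine ⟨r + 1, ?_⟩
        push_cast
        push_cast at hr
        linear_combination hr

lemma lemK (μ : ℂ) (v : V) (κ : ℂ) (hv : v ∈ Y.maxGenEigenspace μ) (hv0 : v ≠ 0)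
    (hκ : Nm (Np v) = κ • v) : ∃ r : ℕ, κ = r * (μ + r + 1) := by
  obtain ⟨s, hs⟩ := exists_maxGen_bot Y μ 2 two_ne_zero
  exact lemK_aux Np Nm Y h1 h2 h3 s μ v κ hs hv hv0 hκ

lemma lemK_sym (μ : ℂ) (v : V) (κ : ℂ) (hv : v ∈ Y.maxGenEigenspace μ) (hv0 : v ≠ 0)
    (hκ : Np (Nm v) = κ • v) : ∃ r : ℕ, κ = r * (-μ + r + 1) := by
  have hv' : v ∈ (-Y).maxGenEigenspace (-μ) := by rw [maxGen_neg]; exact hv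
  exact lemK Nm Np (-Y) (swap_h1 Nm Y h2) (swap_h2 Np Y h1) (swap_h3 Np Nm Y h3)
    (-μ) v κ hv' hv0 hκ

end LemK

end Chunk3


section Chunk4

section ProdHelpers

/-- iterated product `D 0 * D 1 * ⋯ * D (t-1)` (with `D 0` leftmost). -/
def prodUpTo (D : ℕ → Module.End ℂ V) : ℕ → Module.End ℂ V
  | 0 => 1
  | t + 1 => prodUpTo D t * D t

lemma prodUpTo_zero (D : ℕ → Module.End ℂ V) : prodUpTo D 0 = 1 := rfl

lemma prodUpTo_succ (D : ℕ → Module.End ℂ V) (t : ℕ) :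
    prodUpTo D (t + 1) = prodUpTo D t * D t := rfl

lemma prodUpTo_succ_apply (D : ℕ → Module.End ℂ V) (t : ℕ) (v : V) :
    prodUpTo D (t + 1) v = prodUpTo D t (D t v) := by
  rw [prodUpTo_succ, Module.End.mul_apply]

lemma prodUpTo_isolate (D : ℕ → Module.End ℂ V) (hD : ∀ s t, Commute (D s) (D t))
    (Pred : Module.End ℂ V → Prop) (k : ℕ) (hone : Pred 1)
    (hmul : ∀ E s, Pred E → s ≠ k → Pred (E * D s)) :
    ∀ t, k < t → ∃ E, prodUpTo D t = E * D k ∧ Pred E := by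
  have aux : ∀ m : ℕ, m ≤ k → Pred (prodUpTo D m) := by
    intro m
    induction m with
    | zero => intro _; exact hone
    | succ m ihm =>
        intro hm
        rw [prodUpTo_succ]
        exact hmul _ _ (ihm (by omega)) (by omega)
  intro t
  induction t with
  | zero => intro h; exact absurd h (by omega)
  | succ t ih =>
      intro hk
      rcases Nat.lt_succ_iff_lt_or_eq.mp hk with h | h
      · obtain ⟨E, hE, hPE⟩ := ih h
        refine ⟨E * D t, ?_, hmul E t hPE (by omega)⟩
        rw [prodUpTo_succ, hE, mul_assoc, (hD k t).eq, ← mul_assoc]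
      · subst h
        exact ⟨prodUpTo D k, rfl, aux k le_rfl⟩

lemma prod_inj (D : ℕ → Module.End ℂ V) (P : Submodule ℂ V) :
    ∀ t : ℕ, (∀ k, k < t → (Set.MapsTo (D k) P P ∧ ∀ w ∈ P, D k w = 0 → w = 0)) →
    ∀ w ∈ P, (prodUpTo D t) w = 0 → w = 0 := by
  intro t
  induction t with
  | zero =>
      intro _ w _ hw
      rw [prodUpTo_zero, Module.End.one_apply] at hw
      exact hw
  | succ t ih =>
      intro hk w hwP hw
      rw [prodUpTo_succ_apply] at hw
      have h1 := (hk t (by omega)).1 hwP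
      have h2 := ih (fun k hkt => hk k (by omega)) _ h1 hw
      exact (hk t (by omega)).2 w hwP h2

lemma mapsTo_pow_mem (g : Module.End ℂ V) (P : Submodule ℂ V) (hg : Set.MapsTo g P P) :
    ∀ (e : ℕ) (w : V), w ∈ P → (g ^ e) w ∈ P := by
  intro e
  induction e with
  | zero => intro w hw; simpa using hw
  | succ e ih =>
      intro w hw
      rw [pow_succ, Module.End.mul_apply]
      exact ih _ (hg hw)

lemma pow_apply_zero_of_le {g : Module.End ℂ V} {P : Submodule ℂ V} {N : ℕ}
    (hg : ∀ w ∈ P, (g ^ N) w = 0) {e : ℕ} (he : N ≤ e) :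
    ∀ w ∈ P, (g ^ e) w = 0 := by
  intro w hw
  obtain ⟨t, rfl⟩ := Nat.exists_eq_add_of_le he
  rw [add_comm, pow_add, Module.End.mul_apply, hg w hw, map_zero]

/-- sum of two commuting pointwise-nilpotent operators is pointwise nilpotent. -/
lemma ptwise_nilp_add {f g : Module.End ℂ V} (hfg : Commute f g) {P : Submodule ℂ V}
    (hfP : Set.MapsTo f P P) (hgP : Set.MapsTo g P P) {N : ℕ}
    (hf : ∀ w ∈ P, (f ^ N) w = 0) (hg : ∀ w ∈ P, (g ^ N) w = 0) :
    ∀ w ∈ P, ((f + g) ^ (N + N)) w = 0 := by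
  intro w hw
  rw [hfg.add_pow]
  rw [LinearMap.sum_apply]
  apply Finset.sum_eq_zero
  intro m hm
  rw [Finset.mem_range] at hm
  have hrw : (f ^ m * g ^ (N + N - m) * (((N+N).choose m : ℕ) : Module.End ℂ V)) w
      = ((N+N).choose m : ℕ) • ((f ^ m) ((g ^ (N + N - m)) w)) := by
    simp only [Module.End.mul_apply, Module.End.natCast_apply, map_nsmul]
  rw [hrw]
  rcases le_or_gt N m with hNm | hNm
  · -- use f^N = 0 on P ; (g ^ (N+N-m)) w ∈ P
    have hgw : (g ^ (N + N - m)) w ∈ P := mapsTo_pow_mem g P hgP _ w hw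
    rw [pow_apply_zero_of_le hf hNm _ hgw, smul_zero]
  · have hle : N ≤ N + N - m := by omega
    rw [pow_apply_zero_of_le hg hle _ hw, map_zero, smul_zero]

lemma smul_pow_apply_zero {g : Module.End ℂ V} {P : Submodule ℂ V} {N : ℕ}
    (hg : ∀ w ∈ P, (g ^ N) w = 0) (c : ℂ) :
    ∀ w ∈ P, ((c • g) ^ N) w = 0 := by
  intro w hw
  rw [smul_pow, LinearMap.smul_apply, hg w hw, smul_zero]

lemma eig_pow (f : Module.End ℂ V) (w : V) (a : ℂ) (h : f w = a • w) :
    ∀ m : ℕ, (f ^ m) w = a ^ m • w := by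
  intro m
  induction m with
  | zero => simp
  | succ m ih =>
      rw [pow_succ', Module.End.mul_apply, ih, map_smul, h, smul_smul, pow_succ']
      ring_nf

lemma inj_unit_add {c : ℂ} (hc : c ≠ 0) {ξ : Module.End ℂ V} {w : V} {m : ℕ}
    (hm : (ξ ^ m) w = 0) (h : c • w + ξ w = 0) : w = 0 := by
  have hξ : ξ w = (-c) • w := by linear_combination (norm := module) h
  have := eig_pow ξ w (-c) hξ m
  rw [hm] at this
  have := this.symm
  rw [smul_eq_zero] at this
  rcases this with h' | h'
  · exact absurd h' (pow_ne_zero m (neg_ne_zero.mpr hc))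
  · exact h'

end ProdHelpers

section Integrality

variable [FiniteDimensional ℂ V]
variable (Np Nm Y : Module.End ℂ V)
variable (h1 : Y * Np - Np * Y = (2 : ℂ) • Np)
variable (h2 : Y * Nm - Nm * Y = (-2 : ℂ) • Nm)
variable (h3 : Np * Nm - Nm * Np = Y)

include h1 h2 h3

lemma top_integral {μ : ℂ} (hbot : Y.maxGenEigenspace (μ + 2) = ⊥)
    (hne : Y.maxGenEigenspace μ ≠ ⊥) : ∃ r : ℕ, μ = r := by
  rw [Submodule.ne_bot_iff] at hne
  obtain ⟨w, hw, hw0⟩ := hne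
  have hnil : ((Y - μ • 1) ^ (Module.finrank ℂ V)) w = 0 := by
    have := hw
    rwa [Y.maxGenEigenspace_eq_genEigenspace_finrank, Module.End.mem_genEigenspace_nat,
      LinearMap.mem_ker] at this
  obtain ⟨u, huW, hu0, huY⟩ := exists_eigvec (Y.maxGenEigenspace μ) Y μ
    (Module.End.mapsTo_maxGenEigenspace_of_comm (Commute.refl Y) μ)
    (Module.finrank ℂ V) w hw hw0 hnil
  have hNp : Np u = 0 := by
    have := mapsTo_maxGen Y h1 μ huW
    rw [hbot] at this
    simpa using this
  have e3 := congrArg (fun (f : Module.End ℂ V) => f u) h3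
  simp only [Module.End.mul_apply, LinearMap.sub_apply] at e3
  rw [hNp, map_zero, huY] at e3
  have hκ : Np (Nm u) = μ • u := by linear_combination (norm := module) e3
  obtain ⟨r, hr⟩ := lemK_sym Np Nm Y h1 h2 h3 μ u μ huW hu0 hκ
  refine ⟨r, ?_⟩
  have hr1 : ((1 : ℂ) + r) * μ = ((1 : ℂ) + r) * r := by linear_combination hr
  have hne' : ((1 : ℂ) + r) ≠ 0 := by
    have he : ((1 : ℂ) + r) = ((r + 1 : ℕ) : ℂ) := by push_cast; ring
    rw [he]
    exact Nat.cast_ne_zero.mpr (Nat.succ_ne_zero r)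
  exact mul_left_cancel₀ hne' hr1

lemma integral_aux : ∀ (s : ℕ) (μ : ℂ), Y.maxGenEigenspace (μ + 2 * (s : ℂ)) = ⊥ →
    Y.maxGenEigenspace μ ≠ ⊥ → ∃ j : ℤ, μ = j := by
  intro s
  induction s with
  | zero =>
      intro μ hbot hne
      rw [Nat.cast_zero, mul_zero, add_zero] at hbot
      exact absurd hbot hne
  | succ s ih =>
      intro μ hbot hne
      by_cases hb : Y.maxGenEigenspace (μ + 2) = ⊥
      · obtain ⟨r, hr⟩ := top_integral Np Nm Y h1 h2 h3 hb hne
        exact ⟨r, by exact_mod_cast hr⟩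
      · have hbot' : Y.maxGenEigenspace ((μ + 2) + 2 * (s : ℂ)) = ⊥ := by
          have : (μ + 2) + 2 * (s : ℂ) = μ + 2 * ((s + 1 : ℕ) : ℂ) := by push_cast; ring
          rw [this]; exact hbot
        obtain ⟨j, hj⟩ := ih (μ + 2) hbot' hb
        refine ⟨j - 2, ?_⟩
        push_cast
        linear_combination hj

lemma integral {μ : ℂ} (hne : Y.maxGenEigenspace μ ≠ ⊥) : ∃ j : ℤ, μ = j := by
  obtain ⟨s, hs⟩ := exists_maxGen_bot Y μ 2 two_ne_zero
  exact integral_aux Np Nm Y h1 h2 h3 s μ hs hne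

end Integrality

end Chunk4


section Chunk5

/-- the factors in the first product identity. -/
def Dfac (Nm Np Y : Module.End ℂ V) (k : ℕ) : Module.End ℂ V :=
  Nm * Np + ((k : ℂ) + 1) • Y - (((k : ℂ) + 1) * (k : ℂ)) • 1

section ChainD

variable (Np Nm Y : Module.End ℂ V)
variable (h1 : Y * Np - Np * Y = (2 : ℂ) • Np)
variable (h2 : Y * Nm - Nm * Y = (-2 : ℂ) • Nm)
variable (h3 : Np * Nm - Nm * Np = Y)

include h1 h2 h3

lemma chainD : ∀ (t : ℕ) (v : V), (Nm ^ t) v = 0 → prodUpTo (Dfac Nm Np Y) t v = 0 := by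
  intro t
  induction t with
  | zero =>
      intro v hv
      rw [pow_zero, Module.End.one_apply] at hv
      rw [prodUpTo_zero, Module.End.one_apply]
      exact hv
  | succ t ih =>
      intro v hv
      rw [prodUpTo_succ_apply]
      apply ih
      -- key identity
      have hid := NpNm_pow Np Nm Y h1 h2 h3 t v
      have hplus : (Nm ^ (t+1)) (Np v) = (Nm ^ t) (Nm (Np v)) := by
        rw [pow_succ, Module.End.mul_apply]
      rw [hv, map_zero, hplus] at hid
      -- hid : 0 = (Nm^t) (Nm (Np v)) + (t+1) • (Nm^t (Y v)) - ((t+1)*t) • (Nm^t v)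
      have : (Nm ^ t) (Dfac Nm Np Y t v) =
          (Nm ^ t) (Nm (Np v)) + ((t : ℂ) + 1) • ((Nm ^ t) (Y v))
            - (((t : ℂ) + 1) * (t : ℂ)) • ((Nm ^ t) v) := by
        unfold Dfac
        simp only [LinearMap.sub_apply, LinearMap.add_apply, LinearMap.smul_apply,
          Module.End.mul_apply, Module.End.one_apply, map_add, map_sub, map_smul]
      rw [this, ← hid]

lemma Dfac_commute (hXY : Y * (Nm * Np) = (Nm * Np) * Y) (s t : ℕ) :
    Commute (Dfac Nm Np Y s) (Dfac Nm Np Y t) := by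
  unfold Dfac
  show _ * _ = _ * _
  simp only [mul_add, add_mul, mul_sub, sub_mul, smul_mul_assoc, mul_smul_comm, mul_one,
    one_mul, smul_smul]
  rw [← hXY]
  module

end ChainD

section Semisimple

variable [FiniteDimensional ℂ V]
variable (Np Nm Y : Module.End ℂ V)
variable (h1 : Y * Np - Np * Y = (2 : ℂ) • Np)
variable (h2 : Y * Nm - Nm * Y = (-2 : ℂ) • Nm)
variable (h3 : Np * Nm - Nm * Np = Y)

include h1 h2 h3

theorem maxGen_le_eigenspace (j : ℤ) :
    Y.maxGenEigenspace ((j : ℤ) : ℂ) ≤ Y.eigenspace ((j : ℤ) : ℂ) := by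
  classical
  set jc : ℂ := ((j : ℤ) : ℂ) with hjc
  -- global nilpotency exponents
  obtain ⟨Km, hKm⟩ := exists_pow_zero Y h2 (by norm_num : (-2 : ℂ) ≠ 0)
  obtain ⟨Kp, hKp⟩ := exists_pow_zero Y h1 (two_ne_zero)
  set M : ℕ := max Km Kp with hM
  have hmM : ∀ v : V, (Nm ^ M) v = 0 :=
    fun v => pow_apply_zero_of_le (P := ⊤) (fun w _ => hKm w) (le_max_left _ _) v trivial
  have hpM : ∀ v : V, (Np ^ M) v = 0 :=
    fun v => pow_apply_zero_of_le (P := ⊤) (fun w _ => hKp w) (le_max_right _ _) v trivial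
  -- commutation
  have h1' : Y * Np - Np * Y = (-(-2) : ℂ) • Np := by rw [neg_neg]; exact h1
  have hYX : Y * (Nm * Np) = (Nm * Np) * Y := comm_mul Y h2 h1'
  have h2' : (-Y) * Nm - Nm * (-Y) = (-(-2) : ℂ) • Nm := by rw [neg_neg]; exact swap_h1 Nm Y h2
  have hYX' : (-Y) * (Np * Nm) = (Np * Nm) * (-Y) := comm_mul (-Y) (swap_h2 Np Y h1) h2'
  set X : Module.End ℂ V := Nm * Np with hX
  have hcomYX : Commute Y X := hYX
  -- decomposition of the generalized eigenspace under X
  have hXinv : ∀ x ∈ Y.maxGenEigenspace jc, X x ∈ Y.maxGenEigenspace jc :=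
    fun x hx => Module.End.mapsTo_maxGenEigenspace_of_comm hcomYX jc hx
  have hdecomp : Y.maxGenEigenspace jc
      = ⨆ κ : ℂ, (Y.maxGenEigenspace jc ⊓ X.maxGenEigenspace κ) := by
    rw [← Submodule.inf_iSup_genEigenspace hXinv ⊤]
    rw [Module.End.iSup_maxGenEigenspace_eq_top X, inf_top_eq]
  rw [hdecomp]
  apply iSup_le
  intro κ
  set P : Submodule ℂ V := Y.maxGenEigenspace jc ⊓ X.maxGenEigenspace κ with hPdef
  by_cases hP : P = ⊥
  · rw [hP]; exact bot_le
  -- invariance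
  have hYP : Set.MapsTo Y P P := by
    intro x hx
    rw [SetLike.mem_coe, hPdef, Submodule.mem_inf] at hx ⊢
    exact ⟨Module.End.mapsTo_maxGenEigenspace_of_comm (Commute.refl Y) jc hx.1,
      Module.End.mapsTo_maxGenEigenspace_of_comm hcomYX.symm κ hx.2⟩
  have hXP : Set.MapsTo X P P := by
    intro x hx
    rw [SetLike.mem_coe, hPdef, Submodule.mem_inf] at hx ⊢
    exact ⟨Module.End.mapsTo_maxGenEigenspace_of_comm hcomYX jc hx.1,
      Module.End.mapsTo_maxGenEigenspace_of_comm (Commute.refl X) κ hx.2⟩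
  set N : ℕ := Module.finrank ℂ V with hN
  set ν : Module.End ℂ V := Y - jc • 1 with hν
  set η : Module.End ℂ V := X - κ • 1 with hη
  have hνP : Set.MapsTo ν P P := by
    intro x hx
    rw [SetLike.mem_coe] at hx ⊢
    have : ν x = Y x - jc • x := by
      rw [hν]; simp [LinearMap.sub_apply, LinearMap.smul_apply]
    rw [this]
    exact sub_mem (hYP hx) (Submodule.smul_mem _ _ hx)
  have hηP : Set.MapsTo η P P := by
    intro x hx
    rw [SetLike.mem_coe] at hx ⊢
    have : η x = X x - κ • x := by
      rw [hη]; simp [LinearMap.sub_apply, LinearMap.smul_apply]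
    rw [this]
    exact sub_mem (hXP hx) (Submodule.smul_mem _ _ hx)
  have hνN : ∀ w ∈ P, (ν ^ N) w = 0 := by
    intro w hw
    have := (Submodule.mem_inf.mp hw).1
    rwa [Y.maxGenEigenspace_eq_genEigenspace_finrank, Module.End.mem_genEigenspace_nat,
      LinearMap.mem_ker] at this
  have hηN : ∀ w ∈ P, (η ^ N) w = 0 := by
    intro w hw
    have := (Submodule.mem_inf.mp hw).2
    rwa [X.maxGenEigenspace_eq_genEigenspace_finrank, Module.End.mem_genEigenspace_nat,
      LinearMap.mem_ker] at this
  have hνη : Commute ν η := by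
    rw [hν, hη]
    exact (hcomYX.sub_right ((Commute.one_right Y).smul_right κ)).sub_left
      (((Commute.one_left X).smul_left jc).sub_right
        (((Commute.one_left (1 : Module.End ℂ V)).smul_left jc).smul_right κ))
  have hξcms : ∀ c : ℂ, Commute η (c • ν) := fun c => (hνη.symm).smul_right c
  have hξP : ∀ c : ℂ, Set.MapsTo (η + c • ν) P P := by
    intro c x hx
    rw [SetLike.mem_coe] at hx ⊢
    have : (η + c • ν) x = η x + c • (ν x) := by
      simp [LinearMap.add_apply, LinearMap.smul_apply]
    rw [this]
    exact add_mem (hηP hx) (Submodule.smul_mem _ _ (hνP hx))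
  have hξnil : ∀ (c : ℂ), ∀ w ∈ P, ((η + c • ν) ^ (N + N)) w = 0 := by
    intro c
    exact ptwise_nilp_add (hξcms c) hηP
      (fun x hx => by
        rw [SetLike.mem_coe] at hx ⊢
        have : (c • ν) x = c • (ν x) := rfl
        rw [this]; exact Submodule.smul_mem _ _ (hνP hx))
      hηN (smul_pow_apply_zero hνN c)
  -- eigenvector for X within P
  obtain ⟨w0, hw0P, hw00⟩ := Submodule.ne_bot_iff P |>.mp hP
  obtain ⟨u, huP, hu0, huX⟩ := exists_eigvec P X κ hXP N w0 hw0P hw00 (hηN w0 hw0P)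
  have huXapp : Nm (Np u) = κ • u := by
    rw [← Module.End.mul_apply, ← hX, huX]
  obtain ⟨r, hr⟩ := lemK Np Nm Y h1 h2 h3 jc u κ (Submodule.mem_inf.mp huP).1 hu0 huXapp
  -- the two product identities, operator forms of the factors
  set D : ℕ → Module.End ℂ V := Dfac Nm Np Y with hD
  set D' : ℕ → Module.End ℂ V := Dfac Np Nm (-Y) with hD'
  have hDprod : ∀ v : V, prodUpTo D M v = 0 := fun v =>
    chainD Np Nm Y h1 h2 h3 M v (hmM v)
  have hD'prod : ∀ v : V, prodUpTo D' M v = 0 := fun v =>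
    chainD Nm Np (-Y) (swap_h1 Nm Y h2) (swap_h2 Np Y h1) (swap_h3 Np Nm Y h3) M v (hpM v)
  have hDcomm : ∀ s t, Commute (D s) (D t) :=
    Dfac_commute Np Nm Y h1 h2 h3 hYX
  have hD'comm : ∀ s t, Commute (D' s) (D' t) :=
    Dfac_commute Nm Np (-Y) (swap_h1 Nm Y h2) (swap_h2 Np Y h1) (swap_h3 Np Nm Y h3) hYX'
  have hDform : ∀ k : ℕ,
      D k = (κ + ((k : ℂ) + 1) * (jc - k)) • 1 + (η + ((k : ℂ) + 1) • ν) := by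
    intro k
    rw [hD]
    unfold Dfac
    rw [hη, hν, hX]
    module
  have hBop : Np * Nm = Nm * Np + Y := by linear_combination (norm := module) h3
  have hD'form : ∀ k : ℕ,
      D' k = (κ - (k : ℂ) * (jc + k + 1)) • 1 + (η + (-(k : ℂ)) • ν) := by
    intro k
    rw [hD']
    unfold Dfac
    rw [hη, hν, hX, hBop]
    module
  -- injectivity of factors with nonvanishing scalar part
  have hinj_gen : ∀ (a c : ℂ), a ≠ 0 → ∀ w ∈ P,
      ((a • 1 + (η + c • ν)) : Module.End ℂ V) w = 0 → w = 0 := by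
    intro a c ha w hw hzero
    have h0 : a • w + (η + c • ν) w = 0 := by
      have : ((a • 1 + (η + c • ν)) : Module.End ℂ V) w = a • w + (η + c • ν) w := by
        simp [LinearMap.add_apply, LinearMap.smul_apply]
      rwa [this] at hzero
    exact inj_unit_add ha (hξnil c w hw) h0
  have hmapsD : ∀ k : ℕ, Set.MapsTo (D k) P P := by
    intro k x hx
    rw [hDform k]
    rw [SetLike.mem_coe] at hx ⊢
    have : ((κ + ((k : ℂ) + 1) * (jc - k)) • 1 + (η + ((k : ℂ) + 1) • ν)) x
        = (κ + ((k : ℂ) + 1) * (jc - k)) • x + (η + ((k : ℂ) + 1) • ν) x := by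
      simp [LinearMap.add_apply, LinearMap.smul_apply]
    rw [this]
    exact add_mem (Submodule.smul_mem _ _ hx) (hξP _ hx)
  have hmapsD' : ∀ k : ℕ, Set.MapsTo (D' k) P P := by
    intro k x hx
    rw [hD'form k]
    rw [SetLike.mem_coe] at hx ⊢
    have hrw : ((κ - (k : ℂ) * (jc + k + 1)) • 1 + (η + (-(k : ℂ)) • ν)) x
        = (κ - (k : ℂ) * (jc + k + 1)) • x + (η + (-(k : ℂ)) • ν) x := by
      simp [LinearMap.add_apply, LinearMap.smul_apply]
    rw [hrw]
    exact add_mem (Submodule.smul_mem _ _ hx) (hξP _ hx)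
  -- scalar analysis
  have hscalD : ∀ k : ℕ, (k : ℤ) ≠ j + r → (κ + ((k : ℂ) + 1) * (jc - k)) ≠ 0 := by
    intro k hk hcontra
    -- κ + (k+1)(j-k) = -((k+1+r))*((k:ℂ) - j - r)
    have hfact : ((k : ℂ) + 1 + r) * ((k : ℂ) - jc - r) = 0 := by
      rw [hjc] at hcontra ⊢
      push_cast at hr hcontra ⊢
      linear_combination -hcontra + hr
    rcases mul_eq_zero.mp hfact with h | h
    · have : ((k + 1 + r : ℕ) : ℂ) = 0 := by push_cast; linear_combination h
      have := Nat.cast_eq_zero.mp this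
      omega
    · apply hk
      have : (k : ℂ) = jc + r := by linear_combination h
      rw [hjc] at this
      exact_mod_cast this
  have hscalD' : ∀ k : ℕ, 0 ≤ j + (r : ℤ) → (k : ℕ) ≠ r →
      (κ - (k : ℂ) * (jc + k + 1)) ≠ 0 := by
    intro k hjr hk hcontra
    have hfact : ((k : ℂ) - r) * ((k : ℂ) + jc + r + 1) = 0 := by
      rw [hjc] at hcontra ⊢
      push_cast at hr hcontra ⊢
      linear_combination -hcontra + hr
    rcases mul_eq_zero.mp hfact with h | h
    · apply hk
      have : (k : ℂ) = (r : ℂ) := by linear_combination h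
      exact_mod_cast this
    · have : ((k : ℤ) : ℂ) + ((j + r + 1 : ℤ) : ℂ) = 0 := by
        rw [hjc] at h; push_cast at h ⊢; linear_combination h
      have : ((k + (j + r + 1) : ℤ) : ℂ) = 0 := by push_cast at this ⊢; linear_combination this
      have h0 : (k : ℤ) + (j + r + 1) = 0 := by exact_mod_cast this
      omega
  have hinjD : ∀ k : ℕ, (k : ℤ) ≠ j + r → ∀ w ∈ P, D k w = 0 → w = 0 := by
    intro k hk w hw hzero
    rw [hDform k] at hzero
    exact hinj_gen _ _ (hscalD k hk) w hw hzero
  have hinjD' : ∀ k : ℕ, 0 ≤ j + (r : ℤ) → (k : ℕ) ≠ r → ∀ w ∈ P, D' k w = 0 → w = 0 := by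
    intro k hjr hk w hw hzero
    rw [hD'form k] at hzero
    exact hinj_gen _ _ (hscalD' k hjr hk) w hw hzero
  -- final goal : P ≤ eigenspace
  intro w hw
  rw [Module.End.eigenspace, Module.End.mem_genEigenspace_one]
  -- goal : Y w = jc • w, equivalently ν w = 0
  suffices hsuff : ν w = 0 by
    have : Y w - jc • w = 0 := by
      rw [hν] at hsuff
      simpa [LinearMap.sub_apply, LinearMap.smul_apply] using hsuff
    linear_combination (norm := module) this
  by_cases hcase : 0 ≤ j + (r : ℤ) ∧ j + (r : ℤ) < (M : ℤ)
  · -- there is a vanishing factor in the first product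
    obtain ⟨hge, hlt⟩ := hcase
    set k0 : ℕ := (j + (r : ℤ)).toNat with hk0def
    have hk0 : (k0 : ℤ) = j + r := Int.toNat_of_nonneg hge
    have hk0M : k0 < M := by omega
    -- isolate the k0 factor
    have hPred1 : Set.MapsTo (1 : Module.End ℂ V) P P ∧
        (∀ w ∈ P, (1 : Module.End ℂ V) w = 0 → w = 0) := by
      constructor
      · intro x hx; simpa using hx
      · intro w _ hw; simpa using hw
    obtain ⟨E, hE, hEmaps, hEinj⟩ := prodUpTo_isolate D hDcomm
      (fun E => Set.MapsTo E P P ∧ (∀ w ∈ P, E w = 0 → w = 0)) k0 hPred1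
      (by
        rintro E s ⟨hEm, hEi⟩ hs
        constructor
        · intro x hx
          rw [Module.End.mul_apply]
          exact hEm (hmapsD s hx)
        · intro w hw hzero
          rw [Module.End.mul_apply] at hzero
          have hDs := hEi _ (hmapsD s hw) hzero
          exact hinjD s (by omega) w hw hDs)
      M hk0M
    have hDk0 : ∀ w ∈ P, D k0 w = 0 := by
      intro w hw
      apply hEinj _ (hmapsD k0 hw)
      rw [← Module.End.mul_apply, ← hE]
      exact hDprod w
    -- scalar of D k0 vanishes, so η = -(k0+1) ν on P
    have ha0 : (κ + ((k0 : ℂ) + 1) * (jc - k0)) = 0 := by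
      have hcast : ((k0 : ℕ) : ℂ) = jc + r := by
        rw [hjc]
        exact_mod_cast congrArg (fun z : ℤ => (z : ℂ)) hk0
      rw [hcast, hr]
      ring
    have hηevent : ∀ w ∈ P, η w + ((k0 : ℂ) + 1) • (ν w) = 0 := by
      intro w hw
      have := hDk0 w hw
      rw [hDform k0, ha0] at this
      simpa [LinearMap.add_apply, LinearMap.smul_apply] using this
    by_cases hrM : r < M
    · -- isolate the r factor in the second product
      obtain ⟨E', hE', hE'maps, hE'inj⟩ := prodUpTo_isolate D' hD'comm
        (fun E => Set.MapsTo E P P ∧ (∀ w ∈ P, E w = 0 → w = 0)) r hPred1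
        (by
          rintro E s ⟨hEm, hEi⟩ hs
          constructor
          · intro x hx
            rw [Module.End.mul_apply]
            exact hEm (hmapsD' s hx)
          · intro w hw hzero
            rw [Module.End.mul_apply] at hzero
            have hDs := hEi _ (hmapsD' s hw) hzero
            exact hinjD' s hge hs w hw hDs)
        M hrM
      have hD'r : ∀ w' ∈ P, D' r w' = 0 := by
        intro w' hw'
        apply hE'inj _ (hmapsD' r hw')
        rw [← Module.End.mul_apply, ← hE']
        exact hD'prod w'
      have hb0 : (κ - (r : ℂ) * (jc + r + 1)) = 0 := by
        rw [hr]; ring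
      have hres : η w + (-(r : ℂ)) • (ν w) = 0 := by
        have := hD'r w hw
        rw [hD'form r, hb0] at this
        simpa [LinearMap.add_apply, LinearMap.sub_apply, LinearMap.smul_apply] using this
      have hres2 := hηevent w hw
      -- combine : ((k0+1) + r) • ν w = 0
      have hcomb : (((k0 : ℂ) + 1) + r) • (ν w) = 0 := by
        linear_combination (norm := module) hres2 - hres
      have hcoef : (((k0 : ℂ) + 1) + r) ≠ 0 := by
        have : (((k0 : ℂ) + 1) + r) = ((k0 + 1 + r : ℕ) : ℂ) := by push_cast; ring
        rw [this]
        exact Nat.cast_ne_zero.mpr (by omega)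
      exact (smul_eq_zero.mp hcomb).resolve_left hcoef
    · -- r ≥ M : all factors of the second product are injective on P; P is trivial
      have hwz : w = 0 := by
        apply prod_inj D' P M ?_ w hw (hD'prod w)
        intro k hkM
        exact ⟨hmapsD' k, hinjD' k hge (by omega)⟩
      rw [hwz, map_zero]
  · -- no vanishing factor in the first product : P is trivial
    have hwz : w = 0 := by
      apply prod_inj D P M ?_ w hw (hDprod w)
      intro k hkM
      refine ⟨hmapsD k, hinjD k ?_⟩
      omega
    rw [hwz, map_zero]

end Semisimple

end Chunk5


section Chunk6

variable [FiniteDimensional ℂ V]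
variable (Np Nm Y : Module.End ℂ V)
variable (h1 : Y * Np - Np * Y = (2 : ℂ) • Np)
variable (h2 : Y * Nm - Nm * Y = (-2 : ℂ) • Nm)
variable (h3 : Np * Nm - Nm * Np = Y)

omit [FiniteDimensional ℂ V] in
lemma eig_shift_pow {g : Module.End ℂ V} {c : ℂ} (hg : Y * g - g * Y = c • g) (μ : ℂ) :
    ∀ (k : ℕ) (v : V), Y v = μ • v → Y ((g ^ k) v) = (μ + c * k) • ((g ^ k) v) := by
  intro k
  induction k with
  | zero => intro v hv; simpa using hv
  | succ k ih =>
      intro v hv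
      have hs : (g ^ (k + 1)) v = g ((g ^ k) v) := by rw [pow_succ', Module.End.mul_apply]
      rw [hs]
      have := mapsTo_eigenspace Y hg (μ + c * k) (ih v hv)
      have heq : μ + c * (k : ℂ) + c = μ + c * ((k : ℕ) + 1 : ℕ) := by push_cast; ring
      rwa [heq] at this

include h1 h2 h3

lemma INJ_aux : ∀ (k : ℕ) (j : ℤ), (k : ℤ) ≤ j → ∀ v : V, Y v = ((j : ℤ) : ℂ) • v →
    (Np ^ k) ((Nm ^ k) v) = 0 → v = 0 := by
  intro k
  induction k with
  | zero =>
      intro j _ v _ hz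
      simpa using hz
  | succ k ih =>
      intro j hkj v hv hz
      by_contra hv0
      -- rewrite hz
      have hz1 : (Np ^ k) (Np ((Nm ^ (k+1)) v)) = 0 := by
        rw [← Module.End.mul_apply, ← pow_succ]
        exact hz
      have hkey := NpNm_pow Np Nm Y h1 h2 h3 k v
      -- set w
      set jc : ℂ := ((j : ℤ) : ℂ) with hjc
      set w : V := Nm (Np v) + (((k : ℂ) + 1) * (jc - k)) • v with hwdef
      have hNp : Np ((Nm ^ (k+1)) v) = (Nm ^ k) w := by
        rw [hkey, hv]
        have hp1 : (Nm ^ (k+1)) (Np v) = (Nm ^ k) (Nm (Np v)) := by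
          rw [pow_succ, Module.End.mul_apply]
        rw [hp1, hwdef, map_add, map_smul, map_smul]
        module
      have hzw : (Np ^ k) ((Nm ^ k) w) = 0 := by rw [← hNp]; exact hz1
      -- Y w = jc • w
      have hYw : Y w = jc • w := by
        have hX : Y (Nm (Np v)) = jc • (Nm (Np v)) := by
          have hup := mapsTo_eigenspace Y h1 jc hv        -- Y (Np v) = (jc + 2) • Np v
          have hdn := mapsTo_eigenspace Y h2 (jc + 2) hup -- Y (Nm (Np v)) = (jc+2-2) • _
          have : jc + 2 + -2 = jc := by ring
          rwa [this] at hdn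
        rw [hwdef, map_add, map_smul, hX, hv]
        module
      have hw0 : w = 0 := ih j (by omega) w hYw hzw
      -- so Nm (Np v) = -((k+1)(jc-k)) • v ; apply lemK
      have hNmNp : Nm (Np v) = (-(((k : ℂ) + 1) * (jc - k))) • v := by
        rw [hwdef] at hw0
        linear_combination (norm := module) hw0
      have hvmem : v ∈ Y.maxGenEigenspace jc := by
        rw [Module.End.mem_maxGenEigenspace]
        refine ⟨1, ?_⟩
        rw [pow_one, LinearMap.sub_apply, LinearMap.smul_apply, Module.End.one_apply, hv, sub_self]
      obtain ⟨r, hr⟩ := lemK Np Nm Y h1 h2 h3 jc v _ hvmem hv0 hNmNp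
      -- contradiction by integer arithmetic
      have hint : (-(((k : ℤ) + 1) * (j - k)) : ℤ) = ((r : ℤ) * (j + r + 1) : ℤ) := by
        have : ((-(((k : ℤ) + 1) * (j - k)) : ℤ) : ℂ) = (((r : ℤ) * (j + r + 1) : ℤ) : ℂ) := by
          push_cast
          push_cast [hjc] at hr
          linear_combination hr
        exact_mod_cast this
      have hA : (0 : ℤ) < ((k : ℤ) + 1) * (j - k) :=
        mul_pos (by omega) (by omega)
      have hB : (0 : ℤ) ≤ (r : ℤ) * (j + r + 1) :=
        mul_nonneg (by omega) (by omega)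
      linarith

lemma injE (j : ℤ) (hj : 0 ≤ j) (v : V) (hv : Y v = ((j : ℤ) : ℂ) • v)
    (hz : (Nm ^ j.toNat) v = 0) : v = 0 := by
  exact INJ_aux Np Nm Y h1 h2 h3 j.toNat j (by omega) v hv (by rw [hz, map_zero])

lemma INJ_aux_swap : ∀ (k : ℕ) (j : ℤ), (k : ℤ) ≤ j → ∀ v : V, Y v = ((-j : ℤ) : ℂ) • v →
    (Nm ^ k) ((Np ^ k) v) = 0 → v = 0 := by
  intro k j hkj v hv hz
  refine INJ_aux Nm Np (-Y) (swap_h1 Nm Y h2) (swap_h2 Np Y h1) (swap_h3 Np Nm Y h3)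
    k j hkj v ?_ hz
  rw [LinearMap.neg_apply, hv]
  push_cast
  module

lemma surE (j : ℤ) (hj : 0 ≤ j) :
    Y.eigenspace ((-j : ℤ) : ℂ) ≤
      Submodule.map (Nm ^ j.toNat) (Y.eigenspace ((j : ℤ) : ℂ)) := by
  set t : ℕ := j.toNat with ht
  have htj : (t : ℤ) = j := Int.toNat_of_nonneg hj
  set Em : Submodule ℂ V := Y.eigenspace ((-j : ℤ) : ℂ) with hEm
  -- Np^t maps Em into E j, pointwise
  have hup : ∀ v : V, v ∈ Em → Y ((Np ^ t) v) = ((j : ℤ) : ℂ) • ((Np ^ t) v) := by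
    intro v hv
    rw [hEm, Module.End.eigenspace, Module.End.mem_genEigenspace_one] at hv
    have := eig_shift_pow Y h1 (((-j : ℤ) : ℂ)) t v hv
    have hc : ((-j : ℤ) : ℂ) + 2 * (t : ℂ) = ((j : ℤ) : ℂ) := by
      have : ((t : ℕ) : ℂ) = ((j : ℤ) : ℂ) := by exact_mod_cast congrArg (fun z : ℤ => (z : ℂ)) htj
      rw [this]
      push_cast
      ring
    rwa [hc] at this
  have hdn : ∀ v : V, Y v = ((j : ℤ) : ℂ) • v → Y ((Nm ^ t) v) = ((-j : ℤ) : ℂ) • ((Nm ^ t) v) := by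
    intro v hv
    have := eig_shift_pow Y h2 (((j : ℤ) : ℂ)) t v hv
    have hc : ((j : ℤ) : ℂ) + (-2) * (t : ℂ) = ((-j : ℤ) : ℂ) := by
      have : ((t : ℕ) : ℂ) = ((j : ℤ) : ℂ) := by exact_mod_cast congrArg (fun z : ℤ => (z : ℂ)) htj
      rw [this]
      push_cast
      ring
    rwa [hc] at this
  -- restriction of Nm^t ∘ Np^t to Em
  have hmapsC : Set.MapsTo ((Nm ^ t) * (Np ^ t) : Module.End ℂ V) Em Em := by
    intro v hv
    rw [SetLike.mem_coe] at hv ⊢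
    rw [Module.End.mul_apply]
    rw [hEm, Module.End.eigenspace, Module.End.mem_genEigenspace_one]
    exact hdn _ (hup v hv)
  set f := (((Nm ^ t) * (Np ^ t) : Module.End ℂ V)).restrict hmapsC with hf
  have hinj : Function.Injective f := by
    intro x y hxy
    have hsub : f (x - y) = 0 := by rw [map_sub, hxy, sub_self]
    have hval : ((Nm ^ t) * (Np ^ t) : Module.End ℂ V) ((x - y) : V) = 0 := by
      have := congrArg (Subtype.val) hsub
      exact this
    have hmem : ((x - y) : Em) = 0 → x = y := by
      intro h; exact sub_eq_zero.mp h
    apply hmem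
    have hvmem : ((x - y : Em) : V) ∈ Em := (x - y : Em).2
    have hveig : Y ((x - y : Em) : V) = ((-j : ℤ) : ℂ) • ((x - y : Em) : V) :=
      Module.End.mem_genEigenspace_one.mp hvmem
    have := INJ_aux_swap Np Nm Y h1 h2 h3 t j (by omega) ((x - y : Em) : V) hveig
      (by rw [← Module.End.mul_apply]; exact hval)
    exact Subtype.ext this
  have hsurj : Function.Surjective f := (LinearMap.injective_iff_surjective).mp hinj
  intro v hv
  obtain ⟨u, hu⟩ := hsurj ⟨v, hv⟩
  refine Submodule.mem_map.mpr ⟨(Np ^ t) (u : V), ?_, ?_⟩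
  · rw [Module.End.eigenspace, Module.End.mem_genEigenspace_one]
    exact hup (u : V) u.2
  · have := congrArg (Subtype.val) hu
    rw [← Module.End.mul_apply]
    exact this

end Chunk6


section Final

variable (Y : Module.End ℂ V)

/-- the candidate monodromy filtration. -/
def Mfil (k : ℤ) : Submodule ℂ V :=
  ⨆ (j : ℤ) (_ : j ≤ k), Y.eigenspace ((j : ℤ) : ℂ)

lemma Mfil_mono {k k' : ℤ} (h : k ≤ k') : Mfil Y k ≤ Mfil Y k' :=
  biSup_mono fun _ hj => le_trans hj h

lemma eig_le_Mfil {j k : ℤ} (h : j ≤ k) : Y.eigenspace ((j : ℤ) : ℂ) ≤ Mfil Y k :=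
  le_iSup₂ (f := fun (j : ℤ) (_ : j ≤ k) => Y.eigenspace ((j : ℤ) : ℂ)) j h

lemma Mfil_split (k : ℤ) : Mfil Y k = Mfil Y (k - 1) ⊔ Y.eigenspace ((k : ℤ) : ℂ) := by
  apply le_antisymm
  · apply iSup₂_le
    intro j hj
    rcases eq_or_lt_of_le hj with rfl | h
    · exact le_sup_right
    · exact le_sup_of_le_left (eig_le_Mfil Y (by omega))
  · exact sup_le (Mfil_mono Y (by omega)) (eig_le_Mfil Y le_rfl)

lemma Mfil_disjoint (i : ℤ) : Disjoint (Y.eigenspace ((i : ℤ) : ℂ)) (Mfil Y (i - 1)) := by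
  have hind := Module.End.eigenspaces_iSupIndep Y
  refine (hind ((i : ℤ) : ℂ)).mono_right ?_
  apply iSup₂_le
  intro j hj
  have hne : ((j : ℤ) : ℂ) ≠ ((i : ℤ) : ℂ) := by
    intro hh
    have : (j : ℤ) = i := by exact_mod_cast hh
    omega
  exact le_iSup₂ (f := fun (μ : ℂ) (_ : μ ≠ ((i : ℤ) : ℂ)) => Y.eigenspace μ) ((j : ℤ) : ℂ) hne

end Final

section Final2

variable [FiniteDimensional ℂ V]
variable (Np Nm Y : Module.End ℂ V)
variable (h1 : Y * Np - Np * Y = (2 : ℂ) • Np)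
variable (h2 : Y * Nm - Nm * Y = (-2 : ℂ) • Nm)
variable (h3 : Np * Nm - Nm * Np = Y)

include h1 h2 h3

lemma iSup_int_eig : (⨆ j : ℤ, Y.eigenspace ((j : ℤ) : ℂ)) = ⊤ := by
  rw [eq_top_iff, ← Module.End.iSup_maxGenEigenspace_eq_top Y]
  apply iSup_le
  intro μ
  by_cases hb : Y.maxGenEigenspace μ = ⊥
  · rw [hb]; exact bot_le
  · obtain ⟨j, rfl⟩ := integral Np Nm Y h1 h2 h3 hb
    exact le_trans (maxGen_le_eigenspace Np Nm Y h1 h2 h3 j)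
      (le_iSup (fun j : ℤ => Y.eigenspace ((j : ℤ) : ℂ)) j)

lemma nilpNm : IsNilpotent Nm := by
  obtain ⟨K, hK⟩ := exists_pow_zero Y h2 (by norm_num : (-2 : ℂ) ≠ 0)
  exact ⟨K, LinearMap.ext fun v => by rw [hK v]; rfl⟩

omit h1 h2 h3 in
lemma eig_set_finite : {j : ℤ | Y.eigenspace ((j : ℤ) : ℂ) ≠ ⊥}.Finite := by
  have hsub : {j : ℤ | Y.eigenspace ((j : ℤ) : ℂ) ≠ ⊥}
      ⊆ (fun j : ℤ => ((j : ℤ) : ℂ)) ⁻¹' {μ | Y.HasEigenvalue μ} := fun j hj => hj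
  exact (Y.finite_hasEigenvalue.preimage (Int.cast_injective.injOn)).subset hsub

omit h1 h2 h3 in
lemma exists_bounds : ∃ a b : ℤ, (∀ j : ℤ, j ≤ a → Y.eigenspace ((j : ℤ) : ℂ) = ⊥) ∧
    (∀ j : ℤ, b < j → Y.eigenspace ((j : ℤ) : ℂ) = ⊥) := by
  have hfin := eig_set_finite Y
  obtain ⟨a0, ha0⟩ := hfin.bddBelow
  obtain ⟨b0, hb0⟩ := hfin.bddAbove
  refine ⟨a0 - 1, b0, fun j hj => ?_, fun j hj => ?_⟩
  · by_contra hne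
    have := ha0 hne
    omega
  · by_contra hne
    have := hb0 hne
    omega

lemma map_eig_Nm (j : ℤ) :
    Submodule.map Nm (Y.eigenspace ((j : ℤ) : ℂ)) ≤ Y.eigenspace (((j - 2 : ℤ)) : ℂ) := by
  rintro - ⟨x, hx, rfl⟩
  rw [SetLike.mem_coe] at hx
  rw [Module.End.eigenspace, Module.End.mem_genEigenspace_one] at hx ⊢
  have := mapsTo_eigenspace Y h2 ((j : ℤ) : ℂ) hx
  have hc : ((j : ℤ) : ℂ) + (-2) = (((j - 2 : ℤ)) : ℂ) := by push_cast; ring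
  rwa [hc] at this

lemma map_Mfil (k : ℤ) : Submodule.map Nm (Mfil Y k) ≤ Mfil Y (k - 2) := by
  rw [Mfil, Submodule.map_iSup]
  apply iSup_le
  intro j
  rw [Submodule.map_iSup]
  apply iSup_le
  intro hj
  exact le_trans (map_eig_Nm Np Nm Y h1 h2 h3 j) (eig_le_Mfil Y (by omega))

lemma map_Mfil_pow : ∀ (t : ℕ) (k : ℤ),
    Submodule.map (Nm ^ t) (Mfil Y k) ≤ Mfil Y (k - 2 * t) := by
  intro t
  induction t with
  | zero =>
      intro k
      rw [pow_zero]
      refine le_trans (le_of_eq ?_) (Mfil_mono Y (by omega) : Mfil Y k ≤ Mfil Y (k - 2 * (0:ℕ)))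
      apply Submodule.map_id
  | succ t ih =>
      intro k
      have hcomp : Submodule.map (Nm ^ (t+1)) (Mfil Y k)
          = Submodule.map Nm (Submodule.map (Nm ^ t) (Mfil Y k)) := by
        rw [← Submodule.map_comp, ← Module.End.mul_eq_comp, ← pow_succ']
      rw [hcomp]
      refine le_trans (Submodule.map_mono (ih k)) ?_
      refine le_trans (map_Mfil Np Nm Y h1 h2 h3 (k - 2 * t)) (Mfil_mono Y (by push_cast; omega))

end Final2


end Sl2Aux


open Submodule

noncomputable section

variable {V : Type*} [AddCommGroup V] [Module ℂ V]

/-- `M` is the monodromy weight filtration of the nilpotent endomorphism `N`: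
it is increasing, finite, satisfies `N(M_j) ⊆ M_{j-2}`, and for each `j ≥ 0` the map
induced by `N^j` from `Gr^M_j` to `Gr^M_{-j}` is an isomorphism. -/
def IsMonodromyFilt (N : Module.End ℂ V) (M : ℤ → Submodule ℂ V) : Prop :=
  (∀ j : ℤ, M j ≤ M (j + 1)) ∧
  (∃ a : ℤ, M a = ⊥) ∧ (∃ b : ℤ, M b = ⊤) ∧
  (∀ j : ℤ, (M j).map N ≤ M (j - 2)) ∧
  ∀ j : ℤ, 0 ≤ j →
    ((∀ v ∈ M j, (N ^ j.toNat) v ∈ M (-j - 1) → v ∈ M (j - 1)) ∧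
     M (-j) ≤ (M j).map (N ^ j.toNat) ⊔ M (-j - 1))

/-- For a finite-dimensional representation of `sl₂(ℂ)` with standard
generators acting by `N₊, N₋, Y`, the operator `Y` is diagonalizable with integer
eigenvalues, `N₋` is nilpotent, and the monodromy weight filtration of `N₋` is
`W(N₋)_k = ⊕_{j ≤ k} E_j(Y)`. -/
theorem stmt_6 [FiniteDimensional ℂ V]
    (Np Nm Y : Module.End ℂ V)
    (h1 : Y * Np - Np * Y = (2 : ℂ) • Np)
    (h2 : Y * Nm - Nm * Y = (-2 : ℂ) • Nm)
    (h3 : Np * Nm - Nm * Np = Y) :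
    (⨆ j : ℤ, Module.End.eigenspace Y (j : ℂ)) = ⊤ ∧
    IsNilpotent Nm ∧
    IsMonodromyFilt Nm
      (fun k : ℤ => ⨆ (j : ℤ) (_ : j ≤ k), Module.End.eigenspace Y (j : ℂ)) := by
  refine ⟨Sl2Aux.iSup_int_eig Np Nm Y h1 h2 h3, Sl2Aux.nilpNm Np Nm Y h1 h2 h3, ?_⟩
  have hMeq : (fun k : ℤ => ⨆ (j : ℤ) (_ : j ≤ k), Module.End.eigenspace Y (j : ℂ))
      = Sl2Aux.Mfil Y := rfl
  rw [hMeq]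
  obtain ⟨a, b, hlow, hhigh⟩ := Sl2Aux.exists_bounds Y
  refine ⟨fun j => Sl2Aux.Mfil_mono Y (by omega), ⟨a, ?_⟩, ⟨b, ?_⟩,
    fun j => Sl2Aux.map_Mfil Np Nm Y h1 h2 h3 j, fun j hj => ⟨?_, ?_⟩⟩
  · rw [eq_bot_iff]
    apply iSup₂_le
    intro i hi
    exact (hlow i hi).le
  · rw [eq_top_iff, ← Sl2Aux.iSup_int_eig Np Nm Y h1 h2 h3]
    apply iSup_le
    intro i
    by_cases hib : i ≤ b
    · exact Sl2Aux.eig_le_Mfil Y hib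
    · rw [hhigh i (by omega)]
      exact bot_le
  · -- injectivity of the induced map
    intro v hv hNv
    have htj : (j.toNat : ℤ) = j := Int.toNat_of_nonneg hj
    rw [Sl2Aux.Mfil_split Y j] at hv
    obtain ⟨v', hv', w, hw, rfl⟩ := Submodule.mem_sup.mp hv
    have h1m : (Nm ^ j.toNat) v' ∈ Sl2Aux.Mfil Y (-j - 1) := by
      have hmem := Sl2Aux.map_Mfil_pow Np Nm Y h1 h2 h3 j.toNat (j - 1)
        (Submodule.mem_map_of_mem (f := (Nm ^ j.toNat : Module.End ℂ V)) hv')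
      have heq : j - 1 - 2 * (j.toNat : ℤ) = -j - 1 := by omega
      rwa [heq] at hmem
    have h2m : (Nm ^ j.toNat) w ∈ Sl2Aux.Mfil Y (-j - 1) := by
      have hadd : (Nm ^ j.toNat) w = (Nm ^ j.toNat) (v' + w) - (Nm ^ j.toNat) v' := by
        rw [map_add]; abel
      rw [hadd]
      exact Submodule.sub_mem _ hNv h1m
    have hwY : Y w = ((j : ℤ) : ℂ) • w := Module.End.mem_genEigenspace_one.mp hw
    have hNwE : (Nm ^ j.toNat) w ∈ Y.eigenspace (((-j : ℤ)) : ℂ) := by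
      rw [Module.End.eigenspace, Module.End.mem_genEigenspace_one]
      have hshift := Sl2Aux.eig_shift_pow Y h2 _ j.toNat w hwY
      have hc : ((j : ℤ) : ℂ) + (-2) * (j.toNat : ℂ) = ((-j : ℤ) : ℂ) := by
        have hcast : ((j.toNat : ℕ) : ℂ) = ((j : ℤ) : ℂ) := by
          exact_mod_cast congrArg (fun z : ℤ => (z : ℂ)) htj
        rw [hcast]
        push_cast
        ring
      rwa [hc] at hshift
    have hz : (Nm ^ j.toNat) w = 0 := by
      have hd := Sl2Aux.Mfil_disjoint Y (-j)
      exact (Submodule.disjoint_def.mp hd) _ hNwE h2m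
    have hw0 : w = 0 := Sl2Aux.injE Np Nm Y h1 h2 h3 j hj w hwY hz
    rw [hw0, add_zero]
    exact hv'
  · -- surjectivity of the induced map
    rw [Sl2Aux.Mfil_split Y (-j)]
    apply sup_le
    · exact le_sup_right
    · refine le_trans (Sl2Aux.surE Np Nm Y h1 h2 h3 j hj) (le_sup_of_le_left ?_)
      exact Submodule.map_mono (Sl2Aux.eig_le_Mfil Y le_rfl)
end
end
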